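/- arXiv:2405.11728 — 8 statements merged into one kernel-verified Lean document; each statement's English description precedes it below -/
import Mathlib

section
/- Fix p ∈ (0,1] and a positive integer k. Let G_1, …, G_k be independent geometric random variables with parameter p. Then for all t > 0, P(Σ_{i=1}^k G_i > k/p + t·√(k/p³)) ≤ exp(−t²/(2p + 2t√(p/k))). -/
/-!
Chernoff's bound `P(S ≥ a) ≤ e^{-sa} E[e^{sG}]^k`. The moment generating function of a geometric
variable is `p e^s / (1 - (1 - p) e^s) = p / (e^{-s} - (1 - p)) ≤ p / (p - s) = (1 - z)⁻¹` with
`z = s / p`, since `e^{-s} ≥ 1 - s`; and `(1 - z)⁻¹ ≤ exp (z + z² / (2 (1 - z)))`. For the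
threshold `a = k / p + x` the choice `z = p x / (k + p x)` turns the exponent into
`-p² x² / (2 (k + p x))`, which is the claimed one at `x = t √(k / p³)`.
-/

open MeasureTheory ProbabilityTheory Real
open scoped ENNReal

lemma inv_one_sub_le_exp {z : ℝ} (hz0 : 0 ≤ z) (hz1 : z < 1) :
    (1 - z)⁻¹ ≤ exp (z + z ^ 2 / (2 * (1 - z))) := by
  have h1z : 0 < 1 - z := by linarith
  set u := z + z ^ 2 / (2 * (1 - z)) with hu
  have hu_mul : u * (1 - z) = z - z ^ 2 / 2 := by rw [hu]; field_simp; ring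
  have hsq : z ^ 2 ≤ (1 - z) * u ^ 2 := by
    have : (1 - z) * u ^ 2 - z ^ 2 = z ^ 4 / (4 * (1 - z)) := by rw [hu]; field_simp; ring
    have : 0 ≤ z ^ 4 / (4 * (1 - z)) := by positivity
    linarith
  calc (1 - z)⁻¹ ≤ 1 + u + u ^ 2 / 2 := by
        rw [inv_le_iff_one_le_mul₀' h1z]; nlinarith [hu_mul, hsq]
    _ ≤ exp u := quadratic_le_exp_of_nonneg (by positivity)

lemma ENNReal.tsum_ofReal_pow_mul {c b : ℝ} (hc0 : 0 ≤ c) (hc1 : c < 1) (hb : 0 ≤ b) :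
    ∑' n : ℕ, ENNReal.ofReal (c ^ n * b) = ENNReal.ofReal (b / (1 - c)) := by
  rw [← ENNReal.ofReal_tsum_of_nonneg (fun n => by positivity)
      ((summable_geometric_of_lt_one hc0 hc1).mul_right b),
    tsum_mul_right, tsum_geometric_of_lt_one hc0 hc1, div_eq_inv_mul]

lemma one_sub_mul_exp_pos {p s : ℝ} (hs : s < p) : 0 < 1 - (1 - p) * exp s := by
  have := one_sub_le_exp_neg s
  have : (1 - p) * exp s < exp (-s) * exp s := by gcongr; linarith
  rwa [← exp_add, neg_add_cancel, exp_zero, ← sub_pos] at this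

lemma mul_exp_div_one_sub_le {p s : ℝ} (hp : 0 < p) (hs : s < p) :
    p * exp s / (1 - (1 - p) * exp s) ≤ p / (p - s) := by
  have h := one_sub_le_exp_neg s
  have hden : 1 - (1 - p) * exp s = exp s * (exp (-s) - (1 - p)) := by
    rw [mul_sub, ← exp_add, add_neg_cancel, exp_zero]; ring
  rw [hden, mul_comm, mul_div_mul_left _ _ (exp_pos s).ne']
  exact div_le_div_of_nonneg_left hp.le (by linarith) (by linarith)

section

variable {Ω : Type*} [MeasurableSpace Ω] {μ : Measure Ω}

lemma lintegral_comp_eq_tsum {α : Type*} [MeasurableSpace α] [Countable α]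
    [MeasurableSingletonClass α] {G : Ω → α} (hG : Measurable G) (f : α → ℝ≥0∞) :
    ∫⁻ ω, f (G ω) ∂μ = ∑' a, f a * μ (G ⁻¹' {a}) := by
  rw [← lintegral_map (measurable_of_countable f) hG, lintegral_countable']
  simp_rw [Measure.map_apply hG (measurableSet_singleton _)]

/-- Only the masses at `j ≥ 1` are prescribed; they sum to one, so `G ≠ 0` almost surely
(`HasGeometricLaw.measure_eq_zero`). -/
def HasGeometricLaw (G : Ω → ℕ) (p : ℝ) (μ : Measure Ω) : Prop :=
  ∀ j : ℕ, 1 ≤ j → μ {ω | G ω = j} = ENNReal.ofReal ((1 - p) ^ (j - 1) * p)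

namespace HasGeometricLaw

variable {p : ℝ} {G : Ω → ℕ}

lemma measure_eq_succ (hG : HasGeometricLaw G p μ) (j : ℕ) :
    μ (G ⁻¹' {j + 1}) = ENNReal.ofReal ((1 - p) ^ j * p) := by
  have h := hG (j + 1) le_add_self
  rwa [Nat.add_sub_cancel] at h

lemma measure_eq_zero [IsProbabilityMeasure μ] (hG : HasGeometricLaw G p μ)
    (hmeas : Measurable G) (hp0 : 0 < p) (hp1 : p ≤ 1) : μ (G ⁻¹' {0}) = 0 := by
  have htotal := lintegral_comp_eq_tsum (μ := μ) hmeas 1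
  simp only [Pi.one_apply, one_mul, lintegral_one, measure_univ] at htotal
  rw [tsum_eq_zero_add' ENNReal.summable] at htotal
  have hsum : ∑' n : ℕ, ENNReal.ofReal ((1 - p) ^ n * p) = 1 := by
    rw [ENNReal.tsum_ofReal_pow_mul (by linarith) (by linarith) hp0.le, sub_sub_cancel,
      div_self hp0.ne', ENNReal.ofReal_one]
  simp_rw [hG.measure_eq_succ, hsum] at htotal
  exact (ENNReal.add_left_inj ENNReal.one_ne_top).mp (htotal.symm.trans (zero_add 1).symm)

lemma lintegral_exp_mul [IsProbabilityMeasure μ] (hG : HasGeometricLaw G p μ)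
    (hmeas : Measurable G) (hp0 : 0 < p) (hp1 : p ≤ 1) {s : ℝ} (hs : s < p) :
    ∫⁻ ω, ENNReal.ofReal (exp (s * G ω)) ∂μ =
      ENNReal.ofReal (p * exp s / (1 - (1 - p) * exp s)) := by
  rw [lintegral_comp_eq_tsum (f := fun n : ℕ => ENNReal.ofReal (exp (s * n))) hmeas,
    tsum_eq_zero_add' ENNReal.summable, hG.measure_eq_zero hmeas hp0 hp1, mul_zero, zero_add]
  have hterm : ∀ n : ℕ, ENNReal.ofReal (exp (s * (n + 1 : ℕ))) * μ (G ⁻¹' {n + 1}) =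
      ENNReal.ofReal (((1 - p) * exp s) ^ n * (p * exp s)) := by
    intro n
    rw [hG.measure_eq_succ, ← ENNReal.ofReal_mul (exp_pos _).le]
    congr 1
    rw [mul_pow, ← exp_nat_mul]
    push_cast
    rw [mul_add, mul_one, exp_add, mul_comm (n : ℝ) s]
    ring
  simp_rw [hterm]
  rw [ENNReal.tsum_ofReal_pow_mul (mul_nonneg (by linarith) (exp_pos s).le)
    (by linarith [one_sub_mul_exp_pos hs]) (by positivity)]

lemma integrable_exp_mul [IsProbabilityMeasure μ] (hG : HasGeometricLaw G p μ)
    (hmeas : Measurable G) (hp0 : 0 < p) (hp1 : p ≤ 1) {s : ℝ} (hs : s < p) :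
    Integrable (fun ω => exp (s * G ω)) μ := by
  refine ⟨by fun_prop, ?_⟩
  rw [hasFiniteIntegral_iff_ofReal (Filter.Eventually.of_forall fun ω => (exp_pos _).le),
    hG.lintegral_exp_mul hmeas hp0 hp1 hs]
  exact ENNReal.ofReal_lt_top

lemma mgf_eq [IsProbabilityMeasure μ] (hG : HasGeometricLaw G p μ)
    (hmeas : Measurable G) (hp0 : 0 < p) (hp1 : p ≤ 1) {s : ℝ} (hs : s < p) :
    mgf (fun ω => (G ω : ℝ)) μ s = p * exp s / (1 - (1 - p) * exp s) := by
  rw [mgf, integral_eq_lintegral_of_nonneg_ae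
      (Filter.Eventually.of_forall fun ω => (exp_pos _).le) (by fun_prop),
    hG.lintegral_exp_mul hmeas hp0 hp1 hs, ENNReal.toReal_ofReal]
  exact div_nonneg (by positivity) (one_sub_mul_exp_pos hs).le

end HasGeometricLaw

lemma measure_sum_ge_le_of_mgf_le [IsFiniteMeasure μ] {ι : Type*} [Fintype ι]
    {X : ι → Ω → ℝ} (hindep : iIndepFun X μ) (hmeas : ∀ i, Measurable (X i)) {s M : ℝ}
    (hs : 0 ≤ s) (hint : ∀ i, Integrable (fun ω => exp (s * X i ω)) μ)
    (hM : ∀ i, mgf (X i) μ s ≤ M) (a : ℝ) :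
    μ {ω | a ≤ ∑ i, X i ω} ≤ ENNReal.ofReal (exp (-s * a) * M ^ Fintype.card ι) := by
  have hchernoff := measure_ge_le_exp_mul_mgf a hs
    (hindep.integrable_exp_mul_sum hmeas (s := Finset.univ) fun i _ => hint i)
  rw [hindep.mgf_sum hmeas] at hchernoff
  have hprod : ∏ i, mgf (X i) μ s ≤ M ^ Fintype.card ι := by
    calc ∏ i, mgf (X i) μ s ≤ ∏ _i : ι, M :=
          Finset.prod_le_prod (fun i _ => mgf_nonneg) fun i _ => hM i
      _ = M ^ Fintype.card ι := by simp
  simp only [Finset.sum_apply] at hchernoff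
  rw [← ofReal_measureReal]
  exact ENNReal.ofReal_le_ofReal (hchernoff.trans (by gcongr))

theorem measure_sum_ge_le_of_hasGeometricLaw [IsProbabilityMeasure μ] {ι : Type*} [Fintype ι]
    [Nonempty ι] {G : ι → Ω → ℕ} (hindep : iIndepFun G μ) (hmeas : ∀ i, Measurable (G i))
    {p : ℝ} (hp0 : 0 < p) (hp1 : p ≤ 1) (hG : ∀ i, HasGeometricLaw (G i) p μ) {x : ℝ}
    (hx : 0 < x) :
    μ {ω | Fintype.card ι / p + x ≤ ∑ i, (G i ω : ℝ)} ≤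
      ENNReal.ofReal (exp (-(p ^ 2 * x ^ 2) / (2 * (Fintype.card ι + p * x)))) := by
  set K : ℝ := (Fintype.card ι : ℝ)
  have hK : 0 < K := by simp [K, Fintype.card_pos]
  set z := p * x / (K + p * x)
  have hz0 : 0 ≤ z := by positivity
  have hz1 : z < 1 := by rw [div_lt_one (by positivity)]; linarith
  have hs : p * z < p := mul_lt_of_lt_one_right hp0 hz1
  have hM : p / (p - p * z) = (1 - z)⁻¹ := by field_simp
  have hchernoff := measure_sum_ge_le_of_mgf_le
    (hindep.comp (fun _ => Nat.cast) fun _ => by fun_prop) (fun i => by fun_prop)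
    (by positivity) (fun i => (hG i).integrable_exp_mul (hmeas i) hp0 hp1 hs)
    (fun i => ((hG i).mgf_eq (hmeas i) hp0 hp1 hs).trans_le (mul_exp_div_one_sub_le hp0 hs))
    (K / p + x)
  refine hchernoff.trans (ENNReal.ofReal_le_ofReal ?_)
  calc exp (-(p * z) * (K / p + x)) * (p / (p - p * z)) ^ Fintype.card ι
      ≤ exp (-(p * z) * (K / p + x)) * exp (z + z ^ 2 / (2 * (1 - z))) ^ Fintype.card ι := by
        rw [hM]; gcongr; exact inv_one_sub_le_exp hz0 hz1
    _ = exp (-(p * z) * (K / p + x) + K * (z + z ^ 2 / (2 * (1 - z)))) := by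
        rw [← exp_nat_mul, ← exp_add]
    _ = exp (-(p ^ 2 * x ^ 2) / (2 * (K + p * x))) := by
        have h1z : 1 - z = K / (K + p * x) := by simp only [z]; field_simp; ring
        rw [h1z]
        congr 1
        simp only [z]
        field_simp
        ring

end

/-- Chernoff-type upper tail bound for a sum of `k` independent geometric random variables
with parameter `p` (taking values in `{1, 2, 3, …}` with `P(G = j) = (1-p)^(j-1) p`). -/
theorem thm3 (p : ℝ) (hp0 : 0 < p) (hp1 : p ≤ 1) (k : ℕ) (hk : 1 ≤ k)
    {Ω : Type*} [MeasurableSpace Ω] (μ : Measure Ω) [IsProbabilityMeasure μ]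
    (G : Fin k → Ω → ℕ) (hmeas : ∀ i, Measurable (G i))
    (hindep : iIndepFun G μ)
    (hgeom : ∀ i : Fin k, ∀ j : ℕ, 1 ≤ j →
      μ {ω | G i ω = j} = ENNReal.ofReal ((1 - p) ^ (j - 1) * p))
    (t : ℝ) (ht : 0 < t) :
    μ {ω | (k : ℝ) / p + t * Real.sqrt (k / p ^ 3) < ∑ i, (G i ω : ℝ)} ≤
      ENNReal.ofReal (Real.exp (-(t ^ 2) / (2 * p + 2 * t * Real.sqrt (p / k)))) := by
  have : Nonempty (Fin k) := ⟨⟨0, hk⟩⟩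
  have hK : (0 : ℝ) < k := by exact_mod_cast hk
  set r := √(k / p ^ 3)
  have hr : 0 < r := by positivity
  have hr2 : r ^ 2 = k / p ^ 3 := sq_sqrt (by positivity)
  have hsqrt : √(p / k) = p ^ 2 * r / k := by
    rw [sqrt_eq_iff_mul_self_eq_of_pos (by positivity)]
    field_simp
    rw [hr2]
    field_simp
  have htail := measure_sum_ge_le_of_hasGeometricLaw hindep hmeas hp0 hp1 hgeom (mul_pos ht hr)
  rw [Fintype.card_fin] at htail
  calc μ {ω | (k : ℝ) / p + t * r < ∑ i, (G i ω : ℝ)}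
      ≤ μ {ω | (k : ℝ) / p + t * r ≤ ∑ i, (G i ω : ℝ)} :=
        measure_mono (Set.ofPred_subset_ofPred.2 fun _ => le_of_lt)
    _ ≤ _ := htail
    _ = ENNReal.ofReal (exp (-(t ^ 2) / (2 * p + 2 * t * √(p / k)))) := by
      rw [hsqrt, mul_pow, hr2]
      congr 2
      field_simp
end

section
/- Fix p ∈ (0,1] and a positive integer k. Let G_1, …, G_k be independent geometric random variables with parameter p. Then for all t > 0, P(Σ_{i=1}^k G_i < k/p − t·√(k/p³)) ≤ exp(−t²/(2p − t√(p/k))). -/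
/-!
Write `t = ε √(kp)`, so that the threshold is `(k / p) (1 - ε)`. If `ε ≥ 1` the event is empty,
since the `G_i` are nonnegative. Otherwise apply the Chernoff bound at `-λ` with
`λ = pε / (1 - ε)`: for this `λ` the moment generating function of each `G_i` is at most `1 - ε`,
so the probability is at most `(e^ε (1 - ε))^k`, and `e^ε (1 - ε) ≤ e^{-ε² / (2 - ε)}` by the
Padé-type bound `log (1 + u) ≥ 2u / (u + 2)`.
-/

open MeasureTheory ProbabilityTheory Real

lemma Real.exp_mul_one_sub_le {x : ℝ} (hx0 : 0 ≤ x) (hx1 : x < 1) :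
    exp x * (1 - x) ≤ exp (-(x ^ 2 / (2 - x))) := by
  have h1x : 0 < 1 - x := by linarith
  have h2x : 0 < 2 - x := by linarith
  have hlog : 2 * x / (2 - x) ≤ -log (1 - x) := by
    have h := le_log_one_add_of_nonneg (div_nonneg hx0 h1x.le)
    have hu : 1 + x / (1 - x) = (1 - x)⁻¹ := by field_simp; ring
    have hu' : 2 * (x / (1 - x)) / (x / (1 - x) + 2) = 2 * x / (2 - x) := by
      field_simp; ring
    rwa [hu, hu', log_inv] at h
  rw [← exp_log h1x, ← exp_add, exp_le_exp]
  have : x ^ 2 / (2 - x) = 2 * x / (2 - x) - x := by field_simp; ring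
  linarith

lemma Real.sqrt_mul_mul_sqrt_div_pow_three {k p : ℝ} (hk : 0 ≤ k) (hp : 0 ≤ p) :
    √(k * p) * √(k / p ^ 3) = k / p := by
  rw [← sqrt_mul (by positivity)]
  have : k * p * (k / p ^ 3) = (k / p) ^ 2 := by
    rcases hp.eq_or_lt with rfl | hp
    · simp
    · field_simp
  rw [this, sqrt_sq (by positivity)]

lemma Real.sqrt_mul_mul_sqrt_div {k p : ℝ} (hk : 0 < k) (hp : 0 ≤ p) :
    √(k * p) * √(p / k) = p := by
  rw [← sqrt_mul (by positivity)]
  have : k * p * (p / k) = p ^ 2 := by field_simp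
  rw [this, sqrt_sq hp]

lemma integrable_exp_neg_mul_of_nonneg {Ω : Type*} [MeasurableSpace Ω] {μ : Measure Ω}
    [IsFiniteMeasure μ] {Y : Ω → ℝ} (hY : AEStronglyMeasurable Y μ) (hY0 : ∀ ω, 0 ≤ Y ω)
    {s : ℝ} (hs : 0 ≤ s) : Integrable (fun ω => exp (-s * Y ω)) μ := by
  refine .of_bound (by fun_prop) 1 (ae_of_all _ fun ω => ?_)
  rw [norm_of_nonneg (exp_pos _).le, exp_le_one_iff]
  nlinarith [hY0 ω]

lemma measureReal_sum_le_le_exp_mul_pow {Ω ι : Type*} [MeasurableSpace Ω] {μ : Measure Ω}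
    [Fintype ι] {X : ι → Ω → ℝ} (hindep : iIndepFun X μ) (hmeas : ∀ i, Measurable (X i))
    (hnonneg : ∀ i ω, 0 ≤ X i ω) {s c : ℝ} (hs : 0 ≤ s) (hc : ∀ i, mgf (X i) μ (-s) ≤ c)
    (a : ℝ) : μ.real {ω | ∑ i, X i ω ≤ a} ≤ exp (s * a) * c ^ Fintype.card ι := by
  have := hindep.isProbabilityMeasure
  have hint := integrable_exp_neg_mul_of_nonneg (μ := μ) (Y := ∑ i, X i) (by fun_prop)
    (fun ω => by simpa using Finset.sum_nonneg fun i _ => hnonneg i ω) hs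
  have hchernoff := measure_le_le_exp_mul_mgf a (neg_nonpos.mpr hs) hint
  rw [hindep.mgf_sum hmeas, neg_neg] at hchernoff
  simp only [Finset.sum_apply] at hchernoff
  refine hchernoff.trans (mul_le_mul_of_nonneg_left ?_ (exp_pos _).le)
  exact (Finset.prod_le_prod (fun i _ => mgf_nonneg) fun i _ => hc i).trans_eq (by simp)

def IsGeometric {Ω : Type*} [MeasurableSpace Ω] (X : Ω → ℕ) (p : ℝ) (μ : Measure Ω) : Prop :=
  ∀ j : ℕ, 1 ≤ j → μ {ω | X ω = j} = ENNReal.ofReal ((1 - p) ^ (j - 1) * p)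

namespace IsGeometric

variable {Ω : Type*} [MeasurableSpace Ω] {μ : Measure Ω} {X : Ω → ℕ} {p : ℝ}

lemma measure_succ (hX : IsGeometric X p μ) (n : ℕ) :
    μ {ω | X ω = n + 1} = ENNReal.ofReal ((1 - p) ^ n * p) := by
  simpa using hX (n + 1) le_add_self

variable [IsProbabilityMeasure μ]

lemma measure_eq_zero (hX : IsGeometric X p μ) (hXm : Measurable X) (hp0 : 0 < p) (hp1 : p ≤ 1) :
    μ {ω | X ω = 0} = 0 := by
  have htotal : ∑' n, μ {ω | X ω = n} = 1 := by
    have h := tsum_measure_preimage_singleton (μ := μ) Set.countable_univ (f := X)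
      fun n _ => hXm (measurableSet_singleton n)
    rwa [tsum_univ (fun n => μ (X ⁻¹' {n})), Set.preimage_univ, measure_univ] at h
  have hgeom : ∑' n, μ {ω | X ω = n + 1} = 1 := by
    have h := hasSum_geometric_of_lt_one (sub_nonneg.mpr hp1) (sub_lt_self 1 hp0)
    rw [sub_sub_cancel] at h
    simp_rw [hX.measure_succ]
    rw [← ENNReal.ofReal_tsum_of_nonneg (fun n => by positivity) (h.mul_right p).summable,
      (h.mul_right p).tsum_eq, inv_mul_cancel₀ hp0.ne', ENNReal.ofReal_one]
  rw [tsum_eq_zero_add' ENNReal.summable, hgeom] at htotal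
  exact (ENNReal.add_left_inj ENNReal.one_ne_top).mp (htotal.trans (zero_add 1).symm)

lemma mgf_neg (hX : IsGeometric X p μ) (hXm : Measurable X) (hp0 : 0 < p) (hp1 : p ≤ 1)
    {s : ℝ} (hs : 0 ≤ s) :
    mgf (fun ω => (X ω : ℝ)) μ (-s) = p * exp (-s) / (1 - (1 - p) * exp (-s)) := by
  set x := exp (-s)
  have hx0 : 0 ≤ x := (exp_pos _).le
  have hq0 : 0 ≤ 1 - p := sub_nonneg.mpr hp1
  have hqx : (1 - p) * x < 1 := by
    have : x ≤ 1 := exp_le_one_iff.mpr (neg_nonpos.mpr hs)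
    nlinarith
  set f : ℕ → ℝ := fun n => (μ.map X).real {n} * exp (-s * n)
  have hf : ∀ n, f n = μ.real {ω | X ω = n} * x ^ n := fun n => by
    simp only [f, x, map_measureReal_apply hXm (measurableSet_singleton n), ← exp_nat_mul,
      mul_comm (n : ℝ)]
    rfl
  have hsum : HasSum f (p * x / (1 - (1 - p) * x)) := by
    refine (hasSum_nat_add_iff' 1).mp ?_
    have hshift : ∀ n, f (n + 1) = p * x * ((1 - p) * x) ^ n := fun n => by
      rw [hf, measureReal_def, hX.measure_succ, ENNReal.toReal_ofReal (by positivity), mul_pow]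
      ring
    have h0 : f 0 = 0 := by
      rw [hf, measureReal_def, hX.measure_eq_zero hXm hp0 hp1, ENNReal.toReal_zero, zero_mul]
    simp only [hshift, Finset.range_one, Finset.sum_singleton, h0, sub_zero, div_eq_mul_inv]
    exact (hasSum_geometric_of_lt_one (by positivity) hqx).mul_left (p * x)
  rw [mgf, ← integral_map (f := fun n : ℕ => exp (-s * n)) hXm.aemeasurable (by fun_prop),
    integral_countable (integrable_exp_neg_mul_of_nonneg (by fun_prop) (fun n => n.cast_nonneg) hs)]
  exact hsum.tsum_eq

lemma mgf_neg_le_one_sub (hX : IsGeometric X p μ) (hXm : Measurable X) (hp0 : 0 < p)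
    (hp1 : p ≤ 1) {ε : ℝ} (hε0 : 0 ≤ ε) (hε1 : ε < 1) :
    mgf (fun ω => (X ω : ℝ)) μ (-(p * ε / (1 - ε))) ≤ 1 - ε := by
  set l := p * ε / (1 - ε)
  have h1ε : 0 < 1 - ε := sub_pos.mpr hε1
  have hl0 : 0 ≤ l := by positivity
  -- the claim reduces to `exp (-l) * (1 + l) ≤ 1`, because
  -- `(1 - ε) * (1 + l) = p + (1 - ε) * (1 - p)`
  have hx : exp (-l) * (1 + l) ≤ 1 := by
    rw [exp_neg, inv_mul_le_iff₀ (exp_pos _), mul_one, add_comm]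
    exact add_one_le_exp l
  have hl : (1 - ε) * (1 + l) = p + (1 - ε) * (1 - p) := by simp only [l]; field_simp; ring
  have hden : 0 < 1 - (1 - p) * exp (-l) := by
    nlinarith [exp_pos (-l), mul_nonneg (sub_nonneg.mpr hp1) hl0]
  rw [hX.mgf_neg hXm hp0 hp1 hl0, div_le_iff₀ hden]
  nlinarith [mul_le_mul_of_nonneg_left hx h1ε.le, exp_pos (-l)]

end IsGeometric

lemma measureReal_sum_le_mul_one_sub_le_of_isGeometric {Ω ι : Type*} [MeasurableSpace Ω] {μ : Measure Ω}
    [IsProbabilityMeasure μ] [Fintype ι] {G : ι → Ω → ℕ} {p : ℝ} (hp0 : 0 < p) (hp1 : p ≤ 1)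
    (hmeas : ∀ i, Measurable (G i)) (hindep : iIndepFun G μ)
    (hgeom : ∀ i, IsGeometric (G i) p μ) {ε : ℝ} (hε0 : 0 ≤ ε) (hε1 : ε < 1) :
    μ.real {ω | ∑ i, (G i ω : ℝ) ≤ Fintype.card ι / p * (1 - ε)} ≤
      exp (-(Fintype.card ι * (ε ^ 2 / (2 - ε)))) := by
  set n := Fintype.card ι
  have h1ε : 0 < 1 - ε := sub_pos.mpr hε1
  have hchernoff := measureReal_sum_le_le_exp_mul_pow (X := fun i ω => (G i ω : ℝ))
    (hindep.comp _ fun _ => measurable_of_countable _)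
    (fun i => (measurable_of_countable _).comp (hmeas i)) (fun _ _ => Nat.cast_nonneg _)
    (by positivity) (fun i => (hgeom i).mgf_neg_le_one_sub (hmeas i) hp0 hp1 hε0 hε1)
    (n / p * (1 - ε))
  calc _ ≤ _ := hchernoff
    _ = (exp ε * (1 - ε)) ^ n := by
      have hexponent : p * ε / (1 - ε) * (n / p * (1 - ε)) = n * ε := by field_simp
      rw [mul_pow, ← exp_nat_mul, hexponent]
    _ ≤ exp (-(ε ^ 2 / (2 - ε))) ^ n :=
      pow_le_pow_left₀ (by positivity) (exp_mul_one_sub_le hε0 hε1) n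
    _ = _ := by rw [← exp_nat_mul, mul_neg]

/-- Chernoff-type lower tail bound for a sum of `k` independent geometric random variables
with parameter `p` (taking values in `{1, 2, 3, …}` with `P(G = j) = (1-p)^(j-1) p`). -/
theorem thm4 (p : ℝ) (hp0 : 0 < p) (hp1 : p ≤ 1) (k : ℕ) (hk : 1 ≤ k)
    {Ω : Type*} [MeasurableSpace Ω] (μ : Measure Ω) [IsProbabilityMeasure μ]
    (G : Fin k → Ω → ℕ) (hmeas : ∀ i, Measurable (G i))
    (hindep : iIndepFun G μ)
    (hgeom : ∀ i : Fin k, ∀ j : ℕ, 1 ≤ j →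
      μ {ω | G i ω = j} = ENNReal.ofReal ((1 - p) ^ (j - 1) * p))
    (t : ℝ) (ht : 0 < t) :
    μ {ω | ∑ i, (G i ω : ℝ) < (k : ℝ) / p - t * Real.sqrt (k / p ^ 3)} ≤
      ENNReal.ofReal (Real.exp (-(t ^ 2) / (2 * p - t * Real.sqrt (p / k)))) := by
  have hk0 : (0 : ℝ) < k := by exact_mod_cast hk
  have hs : 0 < √(k * p) := by positivity
  obtain ⟨ε, rfl⟩ : ∃ ε, t = ε * √(k * p) := ⟨t / √(k * p), by field_simp⟩
  have hε0 : 0 < ε := pos_of_mul_pos_left ht hs.le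
  have hthreshold : k / p - ε * √(k * p) * √(k / p ^ 3) = k / p * (1 - ε) := by
    rw [mul_assoc, sqrt_mul_mul_sqrt_div_pow_three hk0.le hp0.le]
    ring
  rw [hthreshold]
  rcases lt_or_ge ε 1 with hε1 | hε1
  · have hexp : -((ε * √(k * p)) ^ 2) / (2 * p - ε * √(k * p) * √(p / k)) =
        -(k * (ε ^ 2 / (2 - ε))) := by
      have : 2 - ε ≠ 0 := by linarith
      rw [mul_assoc, sqrt_mul_mul_sqrt_div hk0 hp0.le, mul_pow, sq_sqrt (by positivity)]
      field_simp
    have htail := measureReal_sum_le_mul_one_sub_le_of_isGeometric hp0 hp1 hmeas hindep hgeom hε0.le hε1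
    rw [Fintype.card_fin] at htail
    rw [hexp, ENNReal.le_ofReal_iff_toReal_le (measure_ne_top _ _) (exp_pos _).le]
    refine (measureReal_mono ?_ (measure_ne_top _ _)).trans htail
    exact Set.ofPred_subset_ofPred.mpr fun ω => le_of_lt
  · have hthreshold_nonpos : k / p * (1 - ε) ≤ 0 :=
      mul_nonpos_of_nonneg_of_nonpos (by positivity) (by linarith)
    have hempty : {ω | ∑ i, (G i ω : ℝ) < k / p * (1 - ε)} = ∅ :=
      Set.eq_empty_of_forall_notMem fun ω hω =>
        (Finset.sum_nonneg fun i _ => Nat.cast_nonneg (G i ω)).not_gt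
          (hω.trans_le hthreshold_nonpos)
    simp [hempty]
end

section
/- There exists an absolute constant c with 0 < c ≤ 1/2 such that for all positive integers m and n, the hitting time τ_m of the simple symmetric random walk on ℤ satisfies P(τ_m ≥ n²) ≥ 1 − e^{−c·m/n}. -/
/-!
Encode the first `T` steps of the walk as a path `f : Fin T → Bool`; every path has probability
`2⁻¹ ^ T`, so it suffices to show that at least `(1 - exp (-m / 8n)) 2 ^ T` paths of length
`T = n²` avoid `m`. Reflecting a path after its first visit to `m` shows that at least as many
paths avoid `m` as end in the window `[-m, m)`. If `m > 2n`, the Chernoff bound leaves outside the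
window at most a fraction `2 exp (-m² / 2T) ≤ exp (-m / 8n)` of the paths. If `m ≤ 2n`, it puts
half of the paths in `(-2n, 2n)`; as binomial coefficients decrease away from the middle, the
window, which contains `m` attainable endpoints, carries at least an `m / 4n` share of that half.
-/

open Finset MeasureTheory ProbabilityTheory

theorem Nat.choose_le_choose_of_le_of_le_half {n a b : ℕ} (hab : a ≤ b) (hb : b ≤ n / 2) :
    n.choose a ≤ n.choose b := by
  induction b, hab using Nat.le_induction with
  | base => rfl
  | succ b _ ih => exact (ih (by omega)).trans (Nat.choose_le_succ_of_lt_half_left (by omega))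

theorem Nat.choose_le_choose_of_abs_le {n j k : ℕ} (hj : j ≤ n)
    (h : |2 * (j : ℤ) - n| ≤ |2 * (k : ℤ) - n|) : n.choose k ≤ n.choose j := by
  rcases lt_or_ge n k with hk | hk
  · simp [Nat.choose_eq_zero_of_lt hk]
  have hmin (i : ℕ) (hi : i ≤ n) : n.choose i = n.choose (min i (n - i)) := by
    rcases le_total i (n - i) with h | h
    · rw [min_eq_left h]
    · rw [min_eq_right h, Nat.choose_symm hi]
  rw [hmin j hj, hmin k hk]
  apply Nat.choose_le_choose_of_le_of_le_half <;>
    rcases abs_cases (2 * (j : ℤ) - n) with hj' | hj' <;>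
    rcases abs_cases (2 * (k : ℤ) - n) with hk' | hk' <;> omega

theorem Finset.card_nsmul_sum_le_card_nsmul_sum {ι M : Type*} [AddCommMonoid M] [PartialOrder M]
    [IsOrderedAddMonoid M] {I J : Finset ι} {g : ι → M}
    (h : ∀ j ∈ I, ∀ k ∈ J, g k ≤ g j) :
    #I • ∑ k ∈ J, g k ≤ #J • ∑ j ∈ I, g j :=
  calc #I • ∑ k ∈ J, g k = ∑ j ∈ I, ∑ k ∈ J, g k := by rw [sum_const]
    _ ≤ ∑ j ∈ I, ∑ k ∈ J, g j := sum_le_sum fun j hj => sum_le_sum fun k hk => h j hj k hk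
    _ = #J • ∑ j ∈ I, g j := by simp_rw [sum_const, smul_sum]

theorem Finset.card_filter_le_card_filter_add_card_filter {α : Type*} [Fintype α]
    {p q r : α → Prop} [DecidablePred p] [DecidablePred q] [DecidablePred r]
    (h : ∀ x, p x → q x ∨ r x) : #{x | p x} ≤ #{x | q x} + #{x | r x} := by
  classical
  exact (card_le_card fun x hx => by simpa [filter_or] using h x (by simpa using hx)).trans
    (card_union_le _ _)

namespace SimpleRandomWalk

def step (b : Bool) : ℤ := if b then 1 else -1

lemma step_injective : Function.Injective step := by decide

lemma step_not (b : Bool) : step (!b) = -step b := by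
  cases b <;> rfl

variable {T : ℕ}

def stepAt (f : Fin T → Bool) (i : ℕ) : ℤ := if h : i < T then step (f ⟨i, h⟩) else 0

def partialSum (f : Fin T → Bool) (t : ℕ) : ℤ := ∑ i ∈ range t, stepAt f i

def endpoint (f : Fin T → Bool) : ℤ := partialSum f T

lemma card_filter_add_card_filter_not_eq_two_pow (p : (Fin T → Bool) → Prop) [DecidablePred p] :
    #{f | p f} + #{f | ¬p f} = 2 ^ T := by
  rw [card_filter_add_card_filter_not]
  simp

lemma endpoint_eq_sum (f : Fin T → Bool) : endpoint f = ∑ i, step (f i) := by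
  simp [endpoint, partialSum, ← Fin.sum_univ_eq_sum_range, stepAt]

lemma endpoint_eq_two_mul_card_sub (f : Fin T → Bool) : endpoint f = 2 * #{i | f i} - T := by
  have hstep (b : Bool) : step b = 2 * (if b then 1 else 0) - 1 := by cases b <;> rfl
  simp only [endpoint_eq_sum, hstep]
  rw [sum_sub_distrib, ← mul_sum, sum_boole]
  simp

lemma abs_endpoint_le (f : Fin T → Bool) : |endpoint f| ≤ T := by
  have := card_filter_le (univ : Finset (Fin T)) (f · = true)
  rw [card_univ, Fintype.card_fin] at this
  rw [endpoint_eq_two_mul_card_sub, abs_le]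
  omega

lemma endpoint_not (f : Fin T → Bool) : endpoint (fun i => !f i) = -endpoint f := by
  simp [endpoint_eq_sum, step_not]

lemma card_filter_endpoint_neg (p : ℤ → Prop) [DecidablePred p] :
    #{f : Fin T → Bool | p (endpoint f)} = #{f : Fin T → Bool | p (-endpoint f)} := by
  refine card_nbij' (fun f i => !f i) (fun f i => !f i) ?_ ?_ ?_ ?_ <;> intro f hf <;>
    simp_all [endpoint_not]

lemma card_filter_card_eq_choose (k : ℕ) :
    #{f : Fin T → Bool | #{i | f i} = k} = T.choose k := by
  rw [show T.choose k = #(powersetCard k (univ : Finset (Fin T))) by simp]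
  refine card_nbij' (fun f => ({i | f i} : Finset _)) (fun s i => i ∈ s) ?_ ?_ ?_ ?_ <;>
    intro x hx <;> simp_all [mem_powersetCard]

lemma card_filter_endpoint_eq_sum_choose (p : ℤ → Prop) [DecidablePred p] :
    #{f : Fin T → Bool | p (endpoint f)} =
      ∑ k ∈ range (T + 1) with p (2 * ((k : ℕ) : ℤ) - T), T.choose k := by
  rw [card_eq_sum_card_fiberwise (f := fun f => #{i | f i}) (t := range (T + 1)), sum_filter]
  · refine sum_congr rfl fun k _ => ?_
    split_ifs with hk
    · rw [← card_filter_card_eq_choose k, filter_filter]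
      congr! 2 with f
      rw [endpoint_eq_two_mul_card_sub]
      aesop
    · rw [card_eq_zero, filter_filter, filter_eq_empty_iff]
      rintro f - ⟨hp, rfl⟩
      exact hk (endpoint_eq_two_mul_card_sub f ▸ hp)
  · intro f _
    simpa [Nat.lt_succ_iff] using (card_filter_le _ _).trans_eq (by simp)

def Hits (m : ℤ) (f : Fin T → Bool) : Prop := ∃ t ∈ Icc 1 T, partialSum f t = m

instance (m : ℤ) : DecidablePred (Hits (T := T) m) := fun _ => by
  unfold Hits
  infer_instance

def firstHit (m : ℤ) (f : Fin T → Bool) : ℕ := if h : Hits m f then Nat.find h else 0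

def reflect (m : ℤ) (f : Fin T → Bool) : Fin T → Bool :=
  fun i => if (i : ℕ) < firstHit m f then f i else !f i

section Reflection

variable {m : ℤ} {f : Fin T → Bool}

lemma firstHit_spec (hf : Hits m f) :
    firstHit m f ∈ Icc 1 T ∧ partialSum f (firstHit m f) = m := by
  rw [firstHit, dif_pos hf]
  exact Nat.find_spec hf

lemma partialSum_ne_of_lt_firstHit (hf : Hits m f) {t : ℕ} (ht : 1 ≤ t)
    (htf : t < firstHit m f) : partialSum f t ≠ m := by
  have hT := (mem_Icc.1 (firstHit_spec hf).1).2
  rw [firstHit, dif_pos hf] at htf hT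
  exact fun h => Nat.find_min hf htf ⟨mem_Icc.2 ⟨ht, htf.le.trans hT⟩, h⟩

lemma partialSum_reflect_of_le {t : ℕ} (ht : t ≤ firstHit m f) :
    partialSum (reflect m f) t = partialSum f t := by
  refine sum_congr rfl fun i hi => ?_
  have hi : i < firstHit m f := (mem_range.1 hi).trans_le ht
  simp [stepAt, reflect, hi]

lemma partialSum_reflect_of_ge (hf : Hits m f) {t : ℕ} (ht : firstHit m f ≤ t) (htT : t ≤ T) :
    partialSum (reflect m f) t = 2 * m - partialSum f t := by
  have hsplit (g : Fin T → Bool) : partialSum g t =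
      partialSum g (firstHit m f) + ∑ i ∈ Ico (firstHit m f) t, stepAt g i := by
    rw [partialSum, partialSum, sum_range_add_sum_Ico _ ht]
  have hflip : ∑ i ∈ Ico (firstHit m f) t, stepAt (reflect m f) i =
      -∑ i ∈ Ico (firstHit m f) t, stepAt f i := by
    rw [← sum_neg_distrib]
    refine sum_congr rfl fun i hi => ?_
    obtain ⟨hfi, hit⟩ := mem_Ico.1 hi
    simp [stepAt, reflect, hit.trans_le htT, hfi.not_gt, step_not]
  rw [hsplit, hsplit f, partialSum_reflect_of_le le_rfl, (firstHit_spec hf).2, hflip]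
  ring

lemma hits_reflect (hf : Hits m f) : Hits m (reflect m f) :=
  ⟨firstHit m f, (firstHit_spec hf).1,
    by rw [partialSum_reflect_of_le le_rfl, (firstHit_spec hf).2]⟩

lemma firstHit_reflect (hf : Hits m f) : firstHit m (reflect m f) = firstHit m f := by
  have hr := hits_reflect hf
  obtain ⟨hfI, hfm⟩ := firstHit_spec hf
  obtain ⟨hrI, hrm⟩ := firstHit_spec hr
  refine le_antisymm ?_ ?_
  · by_contra! h
    exact partialSum_ne_of_lt_firstHit hr (mem_Icc.1 hfI).1 h
      (by rw [partialSum_reflect_of_le le_rfl, hfm])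
  · by_contra! h
    exact partialSum_ne_of_lt_firstHit hf (mem_Icc.1 hrI).1 h
      (by rw [← partialSum_reflect_of_le h.le, hrm])

lemma reflect_reflect (hf : Hits m f) : reflect m (reflect m f) = f := by
  funext i
  by_cases h : (i : ℕ) < firstHit m f <;> simp [reflect, firstHit_reflect hf, h]

lemma endpoint_reflect (hf : Hits m f) : endpoint (reflect m f) = 2 * m - endpoint f :=
  partialSum_reflect_of_ge hf (mem_Icc.1 (firstHit_spec hf).1).2 le_rfl

end Reflection

lemma card_hits_le (m : ℤ) : #{f : Fin T → Bool | Hits m f} ≤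
    #{f : Fin T → Bool | m ≤ endpoint f} + #{f : Fin T → Bool | m < endpoint f} :=
  calc #{f : Fin T → Bool | Hits m f}
      ≤ #{f : Fin T → Bool | m ≤ endpoint f} +
          #{f : Fin T → Bool | Hits m f ∧ endpoint f < m} :=
        card_filter_le_card_filter_add_card_filter fun f hf =>
          (le_or_gt m (endpoint f)).imp_right (⟨hf, ·⟩)
    _ ≤ _ := by
        refine Nat.add_le_add_left (card_le_card_of_injOn (reflect m) (fun f hf => ?_)
          (fun f hf g hg hfg => ?_)) _
        · simp only [coe_filter, Set.mem_ofPred_eq, mem_univ, true_and] at hf ⊢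
          rw [endpoint_reflect hf.1]
          omega
        · simp only [coe_filter, Set.mem_ofPred_eq, mem_univ, true_and] at hf hg
          rw [← reflect_reflect hf.1, ← reflect_reflect hg.1]
          exact congrArg (reflect m) hfg

lemma card_window_le_card_not_hits (m : ℕ) :
    #{f : Fin T → Bool | -(m : ℤ) ≤ endpoint f ∧ endpoint f < m} ≤
      #{f : Fin T → Bool | ¬Hits m f} := by
  have hhits := card_filter_add_card_filter_not_eq_two_pow (T := T) (Hits m)
  have hwindow := card_filter_add_card_filter_not_eq_two_pow (T := T)
    fun f => -(m : ℤ) ≤ endpoint f ∧ endpoint f < m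
  have hout : #{f : Fin T → Bool | (m : ℤ) ≤ endpoint f} +
      #{f : Fin T → Bool | (m : ℤ) < -endpoint f} ≤
        #{f : Fin T → Bool | ¬(-(m : ℤ) ≤ endpoint f ∧ endpoint f < m)} := by
    rw [← card_union_of_disjoint (disjoint_filter.2 fun f _ h1 h2 => by omega)]
    exact card_le_card fun f => by simp only [mem_union, mem_filter, mem_univ, true_and]; omega
  have hsymm := card_filter_endpoint_neg (T := T) ((m : ℤ) < ·)
  have := card_hits_le (T := T) m
  omega

lemma sum_exp_mul_endpoint (l : ℝ) :
    ∑ f : Fin T → Bool, Real.exp (l * endpoint f) = (2 * Real.cosh l) ^ T := by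
  have hstep : ∑ b : Bool, Real.exp (l * step b) = 2 * Real.cosh l := by
    simp [step, Real.cosh_eq]
    ring
  simp_rw [endpoint_eq_sum, Int.cast_sum, mul_sum, Real.exp_sum]
  rw [← Fintype.prod_sum (fun (_ : Fin T) b => Real.exp (l * step b)), hstep, prod_const,
    card_univ, Fintype.card_fin]

lemma card_le_endpoint_le (M : ℕ) :
    (#{f : Fin T → Bool | (M : ℤ) ≤ endpoint f} : ℝ) ≤
      2 ^ T * Real.exp (-M ^ 2 / (2 * T)) := by
  set l : ℝ := M / T
  have hl : 0 ≤ l := by positivity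
  have hmarkov : #{f : Fin T → Bool | (M : ℤ) ≤ endpoint f} * Real.exp (l * M) ≤
      ∑ f : Fin T → Bool, Real.exp (l * endpoint f) :=
    calc #{f : Fin T → Bool | (M : ℤ) ≤ endpoint f} * Real.exp (l * M)
        = ∑ f : Fin T → Bool with (M : ℤ) ≤ endpoint f, Real.exp (l * M) := by simp
      _ ≤ ∑ f : Fin T → Bool with (M : ℤ) ≤ endpoint f, Real.exp (l * endpoint f) :=
          sum_le_sum fun f hf => Real.exp_le_exp.2 <|
            mul_le_mul_of_nonneg_left (by exact_mod_cast (mem_filter.1 hf).2) hl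
      _ ≤ ∑ f : Fin T → Bool, Real.exp (l * endpoint f) :=
          sum_le_sum_of_subset_of_nonneg (filter_subset _ _) fun _ _ _ => (Real.exp_pos _).le
  have hcosh : (2 * Real.cosh l) ^ T ≤ 2 ^ T * Real.exp (T * (l ^ 2 / 2)) := by
    rw [Real.exp_nat_mul, ← mul_pow]
    gcongr
    exact Real.cosh_le_exp_half_sq l
  have hexponent : T * (l ^ 2 / 2) - l * M = -M ^ 2 / (2 * T) := by
    rcases eq_or_ne (T : ℝ) 0 with hT | hT
    · simp [l, hT]
    · simp only [l]
      field_simp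
      ring
  rw [← hexponent, Real.exp_sub, ← mul_div_assoc, le_div_iff₀ (Real.exp_pos _)]
  rw [sum_exp_mul_endpoint] at hmarkov
  linarith

lemma card_le_abs_endpoint_le (M : ℕ) :
    (#{f : Fin T → Bool | (M : ℤ) ≤ |endpoint f|} : ℝ) ≤
      2 * (2 ^ T * Real.exp (-M ^ 2 / (2 * T))) := by
  have hsplit : #{f : Fin T → Bool | (M : ℤ) ≤ |endpoint f|} ≤
      #{f : Fin T → Bool | (M : ℤ) ≤ endpoint f} +
        #{f : Fin T → Bool | (M : ℤ) ≤ -endpoint f} :=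
    card_filter_le_card_filter_add_card_filter fun f hf => le_abs.1 hf
  rw [← card_filter_endpoint_neg ((M : ℤ) ≤ ·), ← two_mul] at hsplit
  calc (#{f : Fin T → Bool | (M : ℤ) ≤ |endpoint f|} : ℝ)
      ≤ 2 * #{f : Fin T → Bool | (M : ℤ) ≤ endpoint f} := by exact_mod_cast hsplit
    _ ≤ _ := by gcongr; exact card_le_endpoint_le M

lemma card_window_eq_of_lt {m : ℕ} (h : T < m) :
    #{f : Fin T → Bool | -(m : ℤ) ≤ endpoint f ∧ endpoint f < m} = 2 ^ T := by
  rw [filter_true_of_mem fun f _ => ?_]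
  · simp
  · have := abs_le.1 (abs_endpoint_le f)
    omega

lemma card_window_ge_tail (m : ℕ) :
    2 ^ T * (1 - 2 * Real.exp (-m ^ 2 / (2 * T))) ≤
      (#{f : Fin T → Bool | -(m : ℤ) ≤ endpoint f ∧ endpoint f < m} : ℝ) := by
  have hsplit : (#{f : Fin T → Bool | -(m : ℤ) ≤ endpoint f ∧ endpoint f < m} : ℝ) +
      #{f : Fin T → Bool | ¬(-(m : ℤ) ≤ endpoint f ∧ endpoint f < m)} = 2 ^ T := by
    exact_mod_cast card_filter_add_card_filter_not_eq_two_pow _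
  have hout : (#{f : Fin T → Bool | ¬(-(m : ℤ) ≤ endpoint f ∧ endpoint f < m)} : ℝ) ≤
      #{f : Fin T → Bool | (m : ℤ) ≤ |endpoint f|} := by
    refine Nat.cast_le.2 (card_le_card <| monotone_filter_right _ fun f hf => ?_)
    rcases abs_cases (endpoint f) with h | h <;> omega
  linarith [card_le_abs_endpoint_le (T := T) m]

lemma mul_card_band_le_mul_card_window {m M L : ℕ} (hmT : m ≤ T) (hM : M ≤ m + 2 * L) :
    m * #{f : Fin T → Bool | (m : ℤ) ≤ endpoint f ∧ endpoint f < M} ≤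
      L * #{f : Fin T → Bool | -(m : ℤ) ≤ endpoint f ∧ endpoint f < m} := by
  rw [card_filter_endpoint_eq_sum_choose fun e => (m : ℤ) ≤ e ∧ e < M,
    card_filter_endpoint_eq_sum_choose fun e => -(m : ℤ) ≤ e ∧ e < m]
  set I := {k ∈ range (T + 1) |
    -(m : ℤ) ≤ 2 * ((k : ℕ) : ℤ) - T ∧ 2 * (k : ℤ) - T < m}
  set J := {k ∈ range (T + 1) | (m : ℤ) ≤ 2 * ((k : ℕ) : ℤ) - T ∧ 2 * (k : ℤ) - T < M}
  have hI : #I = m := by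
    have : I = Ico ((T - m + 1) / 2) ((T + m + 1) / 2) := by
      ext k
      simp only [I, mem_filter, mem_range, mem_Ico]
      omega
    rw [this, Nat.card_Ico]
    omega
  have hJ : #J ≤ L := by
    have : J ⊆ Ico ((T + m + 1) / 2) ((T + m + 1) / 2 + L) := by
      intro k
      simp only [J, mem_filter, mem_range, mem_Ico]
      omega
    simpa using card_le_card this
  have hunimodal : ∀ j ∈ I, ∀ k ∈ J, T.choose k ≤ T.choose j := by
    intro j hj k hk
    simp only [I, J, mem_filter, mem_range] at hj hk
    exact Nat.choose_le_choose_of_abs_le (by omega) (abs_le_abs (by omega) (by omega))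
  calc m * ∑ k ∈ J, T.choose k = #I • ∑ k ∈ J, T.choose k := by rw [hI, smul_eq_mul]
    _ ≤ #J • ∑ j ∈ I, T.choose j := card_nsmul_sum_le_card_nsmul_sum hunimodal
    _ ≤ L * ∑ j ∈ I, T.choose j := by rw [smul_eq_mul]; gcongr

lemma card_abs_endpoint_lt_le (m M : ℕ) :
    #{f : Fin T → Bool | |endpoint f| < M} ≤
      #{f : Fin T → Bool | -(m : ℤ) ≤ endpoint f ∧ endpoint f < m} +
        2 * #{f : Fin T → Bool | (m : ℤ) ≤ endpoint f ∧ endpoint f < M} := by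
  have hleft : #{f : Fin T → Bool | -(M : ℤ) < endpoint f ∧ endpoint f < -m} ≤
      #{f : Fin T → Bool | (m : ℤ) ≤ endpoint f ∧ endpoint f < M} := by
    rw [card_filter_endpoint_neg fun e => -(M : ℤ) < e ∧ e < -m]
    exact card_le_card <| monotone_filter_right _ fun f hf => by omega
  have hcover : #{f : Fin T → Bool | |endpoint f| < M} ≤
      #{f : Fin T → Bool | -(m : ℤ) ≤ endpoint f ∧ endpoint f < m} +
        #{f : Fin T → Bool | (m : ℤ) ≤ endpoint f ∧ endpoint f < M ∨
          -(M : ℤ) < endpoint f ∧ endpoint f < -m} :=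
    card_filter_le_card_filter_add_card_filter fun f hf => by
      rcases abs_cases (endpoint f) with h | h <;> omega
  have hsides := card_filter_le_card_filter_add_card_filter (α := Fin T → Bool)
    (p := fun f =>
      (m : ℤ) ≤ endpoint f ∧ endpoint f < M ∨ -(M : ℤ) < endpoint f ∧ endpoint f < -m)
    fun _ h => h
  omega

lemma two_pow_div_two_le_card_abs_endpoint_lt {n : ℕ} (hT : 0 < T) (hTn : T ≤ n ^ 2) :
    2 ^ T / 2 ≤ (#{f : Fin T → Bool | |endpoint f| < (2 * n : ℕ)} : ℝ) := by
  have hsplit : (#{f : Fin T → Bool | |endpoint f| < (2 * n : ℕ)} : ℝ) +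
      #{f : Fin T → Bool | ((2 * n : ℕ) : ℤ) ≤ |endpoint f|} = 2 ^ T := by
    simp_rw [← not_lt]
    exact_mod_cast card_filter_add_card_filter_not_eq_two_pow _
  have hexp : Real.exp (-((2 * n : ℕ) : ℝ) ^ 2 / (2 * T)) ≤ Real.exp (-2) := by
    gcongr
    rw [neg_div, neg_le_neg_iff, le_div_iff₀ (by positivity)]
    push_cast
    nlinarith [show (T : ℝ) ≤ n ^ 2 by exact_mod_cast hTn]
  have hexp_two : 4 * Real.exp (-2) ≤ 1 := by
    have he : 2 ≤ Real.exp 1 := by linarith [Real.add_one_le_exp 1]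
    calc 4 * Real.exp (-2) ≤ Real.exp 1 * Real.exp 1 * Real.exp (-2) := by gcongr; nlinarith
      _ = 1 := by rw [← Real.exp_add, ← Real.exp_add]; norm_num
  nlinarith [card_le_abs_endpoint_le (T := T) (2 * n), pow_pos (two_pos : (0 : ℝ) < 2) T]

lemma card_window_ge_of_le_two_mul {m n : ℕ} (hm : 0 < m) (hmT : m ≤ T) (hmn : m ≤ 2 * n)
    (hTn : T ≤ n ^ 2) :
    m / (8 * n) * 2 ^ T ≤
      (#{f : Fin T → Bool | -(m : ℤ) ≤ endpoint f ∧ endpoint f < m} : ℝ) := by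
  have hcenter := two_pow_div_two_le_card_abs_endpoint_lt (T := T) (by omega) hTn
  have hsplit := card_abs_endpoint_lt_le (T := T) m (2 * n)
  have hband := mul_card_band_le_mul_card_window (T := T) (M := 2 * n) (L := n) hmT (by omega)
  have hkey : m * #{f : Fin T → Bool | |endpoint f| < (2 * n : ℕ)} ≤
      4 * n * #{f : Fin T → Bool | -(m : ℤ) ≤ endpoint f ∧ endpoint f < m} := by
    push_cast at hsplit
    nlinarith
  have hn : (0 : ℝ) < n := by exact_mod_cast (show 0 < n by omega)
  rw [div_mul_eq_mul_div, div_le_iff₀ (by positivity)]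
  calc (m : ℝ) * 2 ^ T = 2 * (m * (2 ^ T / 2)) := by ring
    _ ≤ 2 * (m * #{f : Fin T → Bool | |endpoint f| < (2 * n : ℕ)}) := by gcongr
    _ ≤ 2 * (4 * n * #{f : Fin T → Bool | -(m : ℤ) ≤ endpoint f ∧ endpoint f < m}) :=
        mul_le_mul_of_nonneg_left (by exact_mod_cast hkey) two_pos.le
    _ = _ := by ring

lemma two_mul_exp_neg_sq_div_le {m n T : ℝ} (hn : 0 < n) (hT : 0 < T) (hTn : T ≤ n ^ 2)
    (hmn : 2 * n ≤ m) : 2 * Real.exp (-m ^ 2 / (2 * T)) ≤ Real.exp (-(m / (8 * n))) := by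
  have hratio : m / n ≤ m ^ 2 / (2 * T) := by
    rw [div_le_div_iff₀ hn (by positivity)]
    have hm : 0 ≤ m := by linarith
    nlinarith [mul_le_mul_of_nonneg_left hTn hm,
      mul_le_mul_of_nonneg_right hmn (mul_nonneg hm hn.le)]
  have htwo : 2 ≤ m / n := by rw [le_div_iff₀ hn]; linarith
  have hgap : 1 ≤ m ^ 2 / (2 * T) - m / (8 * n) := by
    rw [show m / (8 * n) = m / n / 8 by ring]
    linarith
  calc 2 * Real.exp (-m ^ 2 / (2 * T))
      ≤ Real.exp (m ^ 2 / (2 * T) - m / (8 * n)) * Real.exp (-m ^ 2 / (2 * T)) := by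
        gcongr
        linarith [Real.add_one_le_exp (m ^ 2 / (2 * T) - m / (8 * n))]
    _ = Real.exp (-(m / (8 * n))) := by rw [← Real.exp_add]; ring_nf

lemma one_sub_exp_le_card_window {m n : ℕ} (hm : 0 < m) (hn : 0 < n) (hTn : T ≤ n ^ 2) :
    (1 - Real.exp (-(m / (8 * n)))) * 2 ^ T ≤
      (#{f : Fin T → Bool | -(m : ℤ) ≤ endpoint f ∧ endpoint f < m} : ℝ) := by
  rcases lt_or_ge T m with hTm | hmT
  · rw [card_window_eq_of_lt hTm]
    push_cast
    nlinarith [Real.exp_pos (-(m / (8 * n))), pow_pos (two_pos : (0 : ℝ) < 2) T]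
  rcases le_or_gt m (2 * n) with hmn | hmn
  · refine le_trans ?_ (card_window_ge_of_le_two_mul hm hmT hmn hTn)
    gcongr
    linarith [Real.add_one_le_exp (-(m / (8 * n)))]
  · refine le_trans ?_ (card_window_ge_tail m)
    rw [mul_comm]
    gcongr
    linarith [two_mul_exp_neg_sq_div_le (m := m) (n := n) (T := T) (by positivity)
      (by exact_mod_cast (show 0 < T by omega)) (by exact_mod_cast hTn) (by exact_mod_cast hmn.le)]

section Measure

variable {Ω : Type*} {X : ℕ → Ω → ℤ}

def pathEvent (X : ℕ → Ω → ℤ) (f : Fin T → Bool) : Set Ω :=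
  ⋂ i ∈ range T, X i ⁻¹' {stepAt f i}

lemma mem_pathEvent {f : Fin T → Bool} {ω : Ω} :
    ω ∈ pathEvent X f ↔ ∀ i < T, X i ω = stepAt f i := by
  simp [pathEvent]

lemma sum_eq_partialSum_of_mem_pathEvent {f : Fin T → Bool} {ω : Ω} (hω : ω ∈ pathEvent X f)
    {t : ℕ} (ht : t ≤ T) : ∑ i ∈ range t, X i ω = partialSum f t :=
  sum_congr rfl fun i hi => mem_pathEvent.1 hω i ((mem_range.1 hi).trans_le ht)

open Function in
lemma pairwise_disjoint_pathEvent :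
    Pairwise (Disjoint on (pathEvent X : (Fin T → Bool) → Set Ω)) := by
  intro f g hfg
  obtain ⟨i, hi⟩ := Function.ne_iff.1 hfg
  refine Set.disjoint_left.2 fun ω hf hg => hi (step_injective ?_)
  have hfi := mem_pathEvent.1 hf i i.2
  have hgi := mem_pathEvent.1 hg i i.2
  simp only [stepAt, dif_pos i.2] at hfi hgi
  exact hfi.symm.trans hgi

variable [MeasurableSpace Ω] {μ : Measure Ω}

lemma measure_pathEvent (hind : iIndepFun X μ)
    (hfair : ∀ i, μ {ω | X i ω = 1} = ENNReal.ofReal (1 / 2) ∧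
      μ {ω | X i ω = -1} = ENNReal.ofReal (1 / 2)) (f : Fin T → Bool) :
    μ (pathEvent X f) = ENNReal.ofReal (1 / 2) ^ T := by
  rw [pathEvent, hind.measure_inter_preimage_eq_mul _ fun _ _ => measurableSet_singleton _,
    prod_congr rfl (g := fun _ => ENNReal.ofReal (1 / 2)) fun i hi => ?_, prod_const, card_range]
  simp only [stepAt, dif_pos (mem_range.1 hi), step]
  split
  · exact (hfair i).1
  · exact (hfair i).2

lemma measure_biUnion_pathEvent (hX : ∀ i, Measurable (X i)) (hind : iIndepFun X μ)
    (hfair : ∀ i, μ {ω | X i ω = 1} = ENNReal.ofReal (1 / 2) ∧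
      μ {ω | X i ω = -1} = ENNReal.ofReal (1 / 2)) (S : Finset (Fin T → Bool)) :
    μ (⋃ f ∈ S, pathEvent X f) = ENNReal.ofReal (#S / 2 ^ T) := by
  rw [measure_biUnion_finset (fun f _ g _ hfg => pairwise_disjoint_pathEvent hfg)
      fun f _ => .biInter (Set.to_countable _) fun i _ => hX i (measurableSet_singleton _),
    sum_congr rfl fun f _ => measure_pathEvent hind hfair f, sum_const, nsmul_eq_mul,
    ← ENNReal.ofReal_natCast, ← ENNReal.ofReal_pow (by norm_num),
    ← ENNReal.ofReal_mul (by positivity), one_div, inv_pow, div_eq_mul_inv]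

end Measure

end SimpleRandomWalk

open SimpleRandomWalk

/-- There is an absolute constant `0 < c ≤ 1/2` such that for all positive integers `m` and
`n`, the hitting time `τ_m` of `m` by the simple symmetric random walk on `ℤ` satisfies
`P(τ_m ≥ n²) ≥ 1 - exp(-c m / n)`.  The event `τ_m ≥ n²` is expressed as: the walk does not
hit `m` at any positive time `t < n²`. -/
theorem thm5 :
    ∃ c : ℝ, 0 < c ∧ c ≤ 1 / 2 ∧
      ∀ {Ω : Type} [MeasurableSpace Ω] (μ : Measure Ω), ∀ _ : IsProbabilityMeasure μ,
        ∀ X : ℕ → Ω → ℤ, (∀ i, Measurable (X i)) →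
          iIndepFun X μ →
          (∀ i, μ {ω | X i ω = 1} = ENNReal.ofReal (1 / 2) ∧
                μ {ω | X i ω = -1} = ENNReal.ofReal (1 / 2)) →
          ∀ m n : ℕ, 1 ≤ m → 1 ≤ n →
            ENNReal.ofReal (1 - Real.exp (-(c * m) / n)) ≤
              μ {ω | ∀ t : ℕ, 1 ≤ t → t < n ^ 2 →
                  (∑ i ∈ Finset.range t, X i ω) ≠ (m : ℤ)} := by
  refine ⟨1 / 8, by norm_num, by norm_num, fun μ _ X hX hind hfair m n hm hn => ?_⟩
  set good : Finset (Fin (n ^ 2) → Bool) := {f | ¬Hits m f}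
  have hcount : 1 - Real.exp (-(1 / 8 * m) / n) ≤ #good / 2 ^ (n ^ 2) := by
    rw [le_div_iff₀ (by positivity), show -(1 / 8 * (m : ℝ)) / n = -(m / (8 * n)) by ring]
    exact (one_sub_exp_le_card_window hm hn le_rfl).trans
      (by exact_mod_cast card_window_le_card_not_hits m)
  have hgood : ⋃ f ∈ good, pathEvent X f ⊆
      {ω | ∀ t : ℕ, 1 ≤ t → t < n ^ 2 → (∑ i ∈ range t, X i ω) ≠ (m : ℤ)} := by
    simp only [Set.subset_def, Set.mem_iUnion]
    rintro ω ⟨f, hf, hω⟩ t ht1 ht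
    rw [sum_eq_partialSum_of_mem_pathEvent hω ht.le]
    exact fun h => (mem_filter.1 hf).2 ⟨t, mem_Icc.2 ⟨ht1, ht.le⟩, h⟩
  calc ENNReal.ofReal (1 - Real.exp (-(1 / 8 * m) / n))
      ≤ ENNReal.ofReal (#good / 2 ^ (n ^ 2)) := ENNReal.ofReal_le_ofReal hcount
    _ = μ (⋃ f ∈ good, pathEvent X f) := (measure_biUnion_pathEvent hX hind hfair good).symm
    _ ≤ _ := measure_mono hgood
end

section
/- There exists an absolute constant c with 0 < c ≤ 1/2 such that for all q ∈ (0, 1/2), all positive integers m, and all integers n > 1, the hitting time τ'_m of the lazy simple random walk on ℤ with parameter q satisfies P(τ'_m ≥ n²) ≥ 1 − e^{−c·m/n}. -/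
/-!
By the reflection principle, the walk avoids `m` during its first `T` steps with probability
`P(-m ≤ S_T < m)`, while its hitting probability is at most `2 P(S_T ≥ m)`. Take `T = n² - 1`.

If `m ≥ 4n`, Chernoff's bound with `λ = 1/n` gives `P(S_T ≥ m) ≤ exp(1/2 - m/n)`, and
`2 exp(1/2 - m/n) ≤ exp(-m/(72n))`.

If `m < 4n`, write `T = 2N + r` with `r ≤ 1`. Chebyshev puts `S_N` in `[-2n, 2n]` with probability
at least `7/8`. Cut `ℤ` into windows of width `m`; about `4n/m` of them cover `[-2n, 2n]`, so by
Cauchy-Schwarz the probability that `S_N` and the negated increment `-(S_{2N} - S_N)` of the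
independent second half fall in the same window is `≳ m/n`, and then `|S_{2N}| < m`. One more
step keeps `S_T` in `[-m, m)` with probability at least `1/2`, and `1 - exp(-x) ≤ x`.
-/

open MeasureTheory ProbabilityTheory

namespace LazyWalk

open Finset

/- A path of `T` steps is a `v : Fin T → SignType`; `prob q T` and `expect q T` are taken
with respect to the law of `T` i.i.d. steps of law `stepWeight q`. -/
noncomputable def stepWeight (q : ℝ) : SignType → ℝ
  | 0 => 1 - 2 * q
  | _ => q

noncomputable def weight (q : ℝ) {T : ℕ} (v : Fin T → SignType) : ℝ :=
  ∏ i, stepWeight q (v i)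

def stepAt {T : ℕ} (v : Fin T → SignType) (i : ℕ) : ℤ :=
  if h : i < T then v ⟨i, h⟩ else 0

def partialSum {T : ℕ} (v : Fin T → SignType) (t : ℕ) : ℤ := ∑ i ∈ range t, stepAt v i

open Classical in
noncomputable def prob (q : ℝ) (T : ℕ) (P : (Fin T → SignType) → Prop) : ℝ :=
  ∑ v with P v, weight q v

noncomputable def expect (q : ℝ) (T : ℕ) (f : ℤ → ℝ) : ℝ :=
  ∑ v : Fin T → SignType, weight q v * f (partialSum v T)

variable {q : ℝ} {T : ℕ}

theorem sum_signType {M : Type*} [AddCommMonoid M] (f : SignType → M) :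
    ∑ s, f s = f (-1) + f 0 + f 1 := by
  rw [show (univ : Finset SignType) = {-1, 0, 1} by decide, sum_insert (by decide),
    sum_pair (by decide), add_assoc]

theorem sum_stepWeight_mul (f : SignType → ℝ) :
    ∑ s, stepWeight q s * f s = q * f (-1) + (1 - 2 * q) * f 0 + q * f 1 :=
  sum_signType _

theorem stepWeight_neg (s : SignType) : stepWeight q (-s) = stepWeight q s := by
  cases s <;> rfl

theorem stepWeight_nonneg (hq : q ∈ Set.Icc 0 (1 / 2)) (s : SignType) : 0 ≤ stepWeight q s := by
  cases s <;> simp only [stepWeight] <;> linarith [hq.1, hq.2]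

theorem weight_nonneg (hq : q ∈ Set.Icc 0 (1 / 2)) (v : Fin T → SignType) : 0 ≤ weight q v :=
  prod_nonneg fun i _ => stepWeight_nonneg hq (v i)

theorem sum_stepWeight : ∑ s, stepWeight q s = 1 := by
  rw [sum_signType]; simp only [stepWeight]; ring

theorem sum_weight : ∑ v : Fin T → SignType, weight q v = 1 := by
  classical
  simp [weight, ← Fintype.prod_sum, sum_stepWeight]

theorem stepAt_of_lt (v : Fin T → SignType) (i : Fin T) : stepAt v i = v i := by
  simp [stepAt]

theorem stepAt_le_one (v : Fin T → SignType) (i : ℕ) : stepAt v i ≤ 1 := by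
  unfold stepAt; split_ifs
  · generalize v _ = s; cases s <;> decide
  · norm_num

theorem partialSum_zero (v : Fin T → SignType) : partialSum v 0 = 0 := by simp [partialSum]

theorem partialSum_succ (v : Fin T → SignType) (t : ℕ) :
    partialSum v (t + 1) = partialSum v t + stepAt v t := sum_range_succ _ _

theorem partialSum_length (v : Fin T → SignType) : partialSum v T = ∑ i, (v i : ℤ) := by
  rw [partialSum, ← Fin.sum_univ_eq_sum_range]
  simp [stepAt_of_lt]

theorem _root_.exists_eq_of_step_le_one {f : ℕ → ℤ} (hf : ∀ t, f (t + 1) ≤ f t + 1)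
    {m : ℤ} (h0 : f 0 ≤ m) {T : ℕ} (hT : m ≤ f T) : ∃ t ≤ T, f t = m := by
  induction T with
  | zero => exact ⟨0, le_rfl, le_antisymm hT h0 |>.symm⟩
  | succ T ih =>
    by_cases h : m ≤ f T
    · obtain ⟨t, ht, hft⟩ := ih h
      exact ⟨t, ht.trans T.le_succ, hft⟩
    · exact ⟨T + 1, le_rfl, by have := hf T; omega⟩

section Append

variable {T₁ T₂ : ℕ} (a : Fin T₁ → SignType) (b : Fin T₂ → SignType)

theorem weight_append : weight q (Fin.append a b) = weight q a * weight q b := by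
  simp [weight, Fin.prod_univ_add]

theorem partialSum_append_left : partialSum (Fin.append a b) T₁ = partialSum a T₁ := by
  rw [partialSum, ← Fin.sum_univ_eq_sum_range, partialSum_length]
  refine sum_congr rfl fun i _ => ?_
  simpa using stepAt_of_lt (Fin.append a b) (Fin.castAdd T₂ i)

theorem partialSum_append :
    partialSum (Fin.append a b) (T₁ + T₂) = partialSum a T₁ + partialSum b T₂ := by
  simp [partialSum_length, Fin.sum_univ_add]

end Append

theorem sum_weight_mul_add {T₁ T₂ : ℕ} (F : ℤ → ℤ → ℝ) :
    ∑ v : Fin (T₁ + T₂) → SignType,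
        weight q v * F (partialSum v T₁) (partialSum v (T₁ + T₂)) =
      ∑ a : Fin T₁ → SignType, ∑ b : Fin T₂ → SignType,
        weight q a * weight q b *
          F (partialSum a T₁) (partialSum a T₁ + partialSum b T₂) := by
  rw [← Fintype.sum_prod_type']
  refine (Fintype.sum_equiv (Fin.appendEquiv T₁ T₂) _ _ fun p => ?_).symm
  simp only [Fin.appendEquiv, Equiv.coe_fn_mk, weight_append, partialSum_append_left,
    partialSum_append]

theorem expect_add {T₁ T₂ : ℕ} (f : ℤ → ℝ) :
    expect q (T₁ + T₂) f = expect q T₁ (fun k => expect q T₂ (fun l => f (k + l))) := by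
  simp only [expect, sum_weight_mul_add (fun _ s => f s), mul_sum, mul_assoc]

theorem expect_zero (f : ℤ → ℝ) : expect q 0 f = f 0 := by
  simp [expect, weight, partialSum_zero]

theorem expect_one (f : ℤ → ℝ) :
    expect q 1 f = q * f (-1) + (1 - 2 * q) * f 0 + q * f 1 := by
  rw [expect, Fintype.sum_equiv (Equiv.funUnique (Fin 1) SignType) _ (fun s => stepWeight q s * f s)
    fun v => by simp [weight, partialSum_length], sum_stepWeight_mul]
  norm_num

section Prob

variable {P Q : (Fin T → SignType) → Prop}

theorem prob_eq_sum_filter (P : (Fin T → SignType) → Prop) [DecidablePred P] :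
    prob q T P = ∑ v with P v, weight q v := by
  rw [prob]; congr!

theorem prob_eq_sum_ite (P : (Fin T → SignType) → Prop) [DecidablePred P] :
    prob q T P = ∑ v, if P v then weight q v else 0 := by
  rw [prob_eq_sum_filter, sum_filter]

theorem prob_nonneg (hq : q ∈ Set.Icc 0 (1 / 2)) : 0 ≤ prob q T P :=
  sum_nonneg fun v _ => weight_nonneg hq v

theorem prob_and_add_prob_and_not :
    prob q T (fun v => P v ∧ Q v) + prob q T (fun v => P v ∧ ¬ Q v) = prob q T P := by
  classical
  simp only [prob_eq_sum_filter, ← filter_filter, sum_filter_add_sum_filter_not]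

theorem prob_add_prob_not : prob q T P + prob q T (fun v => ¬ P v) = 1 := by
  classical
  simp only [prob_eq_sum_filter, sum_filter_add_sum_filter_not, sum_weight]

theorem prob_mono (hq : q ∈ Set.Icc 0 (1 / 2)) (h : ∀ v, P v → Q v) :
    prob q T P ≤ prob q T Q := by
  classical
  simp only [prob_eq_sum_ite]
  refine sum_le_sum fun v _ => ?_
  by_cases hP : P v
  · simp [hP, h v hP]
  · by_cases hQ : Q v <;> simp [hP, hQ, weight_nonneg hq v]

theorem prob_congr (h : ∀ v, P v ↔ Q v) : prob q T P = prob q T Q := by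
  rw [show P = Q from funext fun v => propext (h v)]

theorem prob_le_expect (hq : q ∈ Set.Icc 0 (1 / 2)) {P : ℤ → Prop} {f : ℤ → ℝ}
    (hf : ∀ k, 0 ≤ f k) (hPf : ∀ k, P k → 1 ≤ f k) :
    prob q T (fun v => P (partialSum v T)) ≤ expect q T f := by
  classical
  rw [prob_eq_sum_ite, expect]
  refine sum_le_sum fun v _ => ?_
  have hw := weight_nonneg hq v
  split_ifs with hP
  · nlinarith [hPf _ hP]
  · exact mul_nonneg hw (hf _)

theorem prob_neg_partialSum (P : ℤ → Prop) :
    prob q T (fun v => P (partialSum v T)) = prob q T (fun v => P (-partialSum v T)) := by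
  classical
  simp only [prob_eq_sum_ite]
  refine Fintype.sum_equiv (Equiv.neg _) _ _ fun v => ?_
  simp [weight, stepWeight_neg, partialSum_length]

theorem prob_mul_le_prob_add (hq : q ∈ Set.Icc 0 (1 / 2)) {T₁ T₂ : ℕ} {A B : ℤ → Prop}
    {C : ℤ → ℤ → Prop} (hABC : ∀ k l, A k → B l → C k (k + l)) :
    prob q T₁ (fun a => A (partialSum a T₁)) * prob q T₂ (fun b => B (partialSum b T₂)) ≤
      prob q (T₁ + T₂) (fun v => C (partialSum v T₁) (partialSum v (T₁ + T₂))) := by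
  classical
  have hind : ∀ {T : ℕ} (P : (Fin T → SignType) → Prop) [DecidablePred P],
      prob q T P = ∑ v, weight q v * if P v then 1 else 0 := fun P _ => by
    rw [prob_eq_sum_ite]; simp
  rw [hind, hind, hind, sum_weight_mul_add (fun k s => if C k s then (1 : ℝ) else 0), sum_mul_sum]
  refine sum_le_sum fun a _ => sum_le_sum fun b _ => ?_
  have hw := mul_nonneg (weight_nonneg hq a) (weight_nonneg hq b)
  by_cases hAB : A (partialSum a T₁) ∧ B (partialSum b T₂)
  · simp [hAB.1, hAB.2, hABC _ _ hAB.1 hAB.2]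
  · split_ifs <;> simp_all

theorem sum_prob_fiber (g : (Fin T → SignType) → ℤ) (I : Finset ℤ)
    (P : (Fin T → SignType) → Prop) :
    ∑ i ∈ I, prob q T (fun v => g v = i ∧ P v) = prob q T (fun v => g v ∈ I ∧ P v) := by
  classical
  rw [prob_eq_sum_filter,
    ← sum_fiberwise_of_maps_to (t := I) (g := g) (fun v hv => (mem_filter.1 hv).2.1)]
  refine sum_congr rfl fun i hi => ?_
  rw [prob_eq_sum_filter, filter_filter]
  congr 1
  ext v
  simp only [mem_filter, mem_univ, true_and]
  constructor
  · rintro ⟨rfl, hP⟩; exact ⟨⟨hi, hP⟩, rfl⟩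
  · rintro ⟨⟨_, hP⟩, rfl⟩; exact ⟨rfl, hP⟩

end Prob

section Reflection

def Hits (m : ℤ) (v : Fin T → SignType) : Prop := ∃ t ≤ T, partialSum v t = m

open Classical in
noncomputable def hitTime (m : ℤ) (v : Fin T → SignType) : ℕ :=
  if h : Hits m v then Nat.find h else T

def reflectFrom (τ : ℕ) (v : Fin T → SignType) : Fin T → SignType :=
  fun i => if (i : ℕ) < τ then v i else -v i

noncomputable def reflect (m : ℤ) (v : Fin T → SignType) : Fin T → SignType :=
  reflectFrom (hitTime m v) v

variable {m : ℤ} {v : Fin T → SignType}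

theorem hits_of_le_partialSum (hm : 0 ≤ m) (h : m ≤ partialSum v T) : Hits m v :=
  exists_eq_of_step_le_one (fun t => by rw [partialSum_succ]; linarith [stepAt_le_one v t])
    (by rwa [partialSum_zero]) h

theorem hitTime_le (h : Hits m v) : hitTime m v ≤ T := by
  classical
  rw [hitTime, dif_pos h]; exact (Nat.find_spec h).1

theorem partialSum_hitTime (h : Hits m v) : partialSum v (hitTime m v) = m := by
  classical
  rw [hitTime, dif_pos h]; exact (Nat.find_spec h).2

theorem hitTime_le_of_partialSum_eq {t : ℕ} (ht : t ≤ T) (hv : partialSum v t = m) :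
    hitTime m v ≤ t := by
  classical
  have h : Hits m v := ⟨t, ht, hv⟩
  rw [hitTime, dif_pos h]; exact Nat.find_min' h ⟨ht, hv⟩

theorem partialSum_ne_of_lt_hitTime (h : Hits m v) {t : ℕ} (ht : t < hitTime m v) :
    partialSum v t ≠ m := by
  classical
  have hT := hitTime_le h
  rw [hitTime, dif_pos h] at ht hT
  exact fun hm => Nat.find_min h ht ⟨by omega, hm⟩

theorem hitTime_eq_of_partialSum_eq (h : Hits m v) {w : Fin T → SignType}
    (hw : ∀ t ≤ hitTime m v, partialSum w t = partialSum v t) :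
    Hits m w ∧ hitTime m w = hitTime m v := by
  have hwm : partialSum w (hitTime m v) = m := (hw _ le_rfl).trans (partialSum_hitTime h)
  have hw' : Hits m w := ⟨_, hitTime_le h, hwm⟩
  refine ⟨hw', le_antisymm (hitTime_le_of_partialSum_eq (hitTime_le h) hwm) ?_⟩
  by_contra! hlt
  exact partialSum_ne_of_lt_hitTime h hlt
    ((hw _ hlt.le).symm.trans (partialSum_hitTime hw'))

theorem weight_reflectFrom (τ : ℕ) (v : Fin T → SignType) :
    weight q (reflectFrom τ v) = weight q v :=
  prod_congr rfl fun i _ => by unfold reflectFrom; split_ifs <;> simp [stepWeight_neg]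

theorem reflectFrom_reflectFrom (τ : ℕ) (v : Fin T → SignType) :
    reflectFrom τ (reflectFrom τ v) = v := by
  funext i; unfold reflectFrom; split_ifs <;> simp

theorem stepAt_reflectFrom (τ : ℕ) (v : Fin T → SignType) (i : ℕ) :
    stepAt (reflectFrom τ v) i = if i < τ then stepAt v i else -stepAt v i := by
  unfold stepAt reflectFrom; split_ifs <;> simp_all

theorem partialSum_reflectFrom_of_le {τ t : ℕ} (ht : t ≤ τ) (v : Fin T → SignType) :
    partialSum (reflectFrom τ v) t = partialSum v t :=
  sum_congr rfl fun i hi => by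
    rw [stepAt_reflectFrom, if_pos (by have := mem_range.1 hi; omega)]

theorem partialSum_reflectFrom_of_ge {τ t : ℕ} (ht : τ ≤ t) (v : Fin T → SignType) :
    partialSum (reflectFrom τ v) t = 2 * partialSum v τ - partialSum v t := by
  induction t, ht using Nat.le_induction with
  | base => rw [partialSum_reflectFrom_of_le le_rfl]; ring
  | succ t ht ih =>
    rw [partialSum_succ, partialSum_succ, ih, stepAt_reflectFrom, if_neg (by omega)]; ring

theorem hits_reflect (h : Hits m v) :
    Hits m (reflect m v) ∧ hitTime m (reflect m v) = hitTime m v :=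
  hitTime_eq_of_partialSum_eq h fun _ ht => partialSum_reflectFrom_of_le ht v

theorem reflect_reflect (h : Hits m v) : reflect m (reflect m v) = v := by
  rw [reflect, (hits_reflect h).2, reflect, reflectFrom_reflectFrom]

theorem partialSum_reflect (h : Hits m v) :
    partialSum (reflect m v) T = 2 * m - partialSum v T := by
  rw [reflect, partialSum_reflectFrom_of_ge (hitTime_le h), partialSum_hitTime h]

/-- The reflection principle. -/
theorem prob_hits_and_lt (hm : 0 ≤ m) :
    prob q T (fun v => Hits m v ∧ partialSum v T < m) =
      prob q T (fun v => m < partialSum v T) := by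
  classical
  rw [prob_eq_sum_filter, prob_eq_sum_filter]
  refine sum_nbij' (reflect m) (reflect m) (fun v hv => ?_) (fun v hv => ?_)
    (fun v hv => reflect_reflect (mem_filter.1 hv).2.1) (fun v hv => ?_)
    (fun v _ => (weight_reflectFrom _ v).symm)
  · obtain ⟨h, hlt⟩ := (mem_filter.1 hv).2
    simp only [mem_filter, mem_univ, true_and, partialSum_reflect h]
    omega
  · have hlt := (mem_filter.1 hv).2
    have h := hits_of_le_partialSum hm hlt.le
    simp only [mem_filter, mem_univ, true_and, partialSum_reflect h]
    exact ⟨(hits_reflect h).1, by omega⟩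
  · exact reflect_reflect (hits_of_le_partialSum hm (mem_filter.1 hv).2.le)

theorem prob_hits (hm : 0 ≤ m) :
    prob q T (Hits m) =
      prob q T (fun v => m ≤ partialSum v T) + prob q T (fun v => m < partialSum v T) := by
  rw [← prob_and_add_prob_and_not (Q := fun v => m ≤ partialSum v T), ← prob_hits_and_lt hm]
  congr 1
  · exact prob_congr fun v => ⟨And.right, fun h => ⟨hits_of_le_partialSum hm h, h⟩⟩
  · exact prob_congr fun v => by simp only [not_le]

theorem prob_not_hits (hm : 0 ≤ m) :
    prob q T (fun v => ¬ Hits m v) =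
      prob q T (fun v => -m ≤ partialSum v T ∧ partialSum v T < m) := by
  have h₁ := prob_add_prob_not (q := q) (P := Hits (T := T) m)
  have h₂ := prob_add_prob_not (q := q) (P := fun v : Fin T → SignType => m ≤ partialSum v T)
  have h₃ := prob_and_add_prob_and_not (q := q)
    (P := fun v : Fin T → SignType => ¬ m ≤ partialSum v T)
    (Q := fun v => -m ≤ partialSum v T)
  have h₄ : prob q T (fun v => ¬ m ≤ partialSum v T ∧ ¬ -m ≤ partialSum v T) =
      prob q T (fun v => m < partialSum v T) := by
    rw [prob_neg_partialSum (fun s => m < s)]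
    exact prob_congr fun v => by omega
  rw [prob_hits hm] at h₁
  rw [prob_congr fun v => (show (-m ≤ partialSum v T ∧ partialSum v T < m) ↔
    (¬ m ≤ partialSum v T ∧ -m ≤ partialSum v T) by omega)]
  linarith

end Reflection

section Moments

theorem expect_succ (f : ℤ → ℝ) :
    expect q (T + 1) f =
      expect q T (fun k => q * f (k - 1) + (1 - 2 * q) * f k + q * f (k + 1)) := by
  simp only [expect_add, expect_one, add_zero, ← sub_eq_add_neg]

theorem expect_const_mul (c : ℝ) (f : ℤ → ℝ) :
    expect q T (fun k => c * f k) = c * expect q T f := by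
  simp only [expect, mul_sum]
  exact sum_congr rfl fun _ _ => by ring

theorem expect_add_const (f : ℤ → ℝ) (c : ℝ) :
    expect q T (fun k => f k + c) = expect q T f + c := by
  simp only [expect, mul_add, sum_add_distrib, ← sum_mul, sum_weight, one_mul]

theorem prob_eq_expect (P : ℤ → Prop) [DecidablePred P] :
    prob q T (fun v => P (partialSum v T)) = expect q T (fun k => if P k then 1 else 0) := by
  simp [prob_eq_sum_ite, expect]

theorem expect_exp_mul (l : ℝ) :
    expect q T (fun k => Real.exp (l * k)) =
      (q * Real.exp (-l) + (1 - 2 * q) + q * Real.exp l) ^ T := by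
  induction T with
  | zero => simp [expect_zero]
  | succ T ih =>
    rw [expect_succ, pow_succ, ← ih, mul_comm _ (_ + _), ← expect_const_mul]
    congr 1; funext k
    push_cast
    rw [show l * ((k : ℝ) - 1) = -l + l * k by ring, show l * ((k : ℝ) + 1) = l + l * k by ring,
      Real.exp_add, Real.exp_add]
    ring

theorem expect_sq : expect q T (fun k => (k : ℝ) ^ 2) = 2 * q * T := by
  induction T with
  | zero => simp [expect_zero]
  | succ T ih =>
    rw [expect_succ]
    calc _ = expect q T (fun k => (k : ℝ) ^ 2 + 2 * q) := by congr 1; funext k; push_cast; ring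
      _ = _ := by rw [expect_add_const, ih]; push_cast; ring

theorem stepMGF_le_exp (hq : q ∈ Set.Icc 0 (1 / 2)) (l : ℝ) :
    q * Real.exp (-l) + (1 - 2 * q) + q * Real.exp l ≤ Real.exp (l ^ 2 / 2) := by
  have hcosh := Real.cosh_eq l
  nlinarith [Real.cosh_le_exp_half_sq l, Real.one_le_cosh l, hq.1, hq.2]

theorem prob_le_partialSum_le_exp (hq : q ∈ Set.Icc 0 (1 / 2)) {l : ℝ} (hl : 0 ≤ l)
    (m : ℤ) :
    prob q T (fun v => m ≤ partialSum v T) ≤ Real.exp (T * l ^ 2 / 2 - l * m) := by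
  calc prob q T (fun v => m ≤ partialSum v T)
      ≤ expect q T (fun k => Real.exp (-(l * m)) * Real.exp (l * k)) := by
        refine prob_le_expect hq (fun k => by positivity) fun k hk => ?_
        rw [← Real.exp_add, Real.one_le_exp_iff]
        have : (m : ℝ) ≤ k := by exact_mod_cast hk
        nlinarith
    _ = Real.exp (-(l * m)) * (q * Real.exp (-l) + (1 - 2 * q) + q * Real.exp l) ^ T := by
        rw [expect_const_mul, expect_exp_mul]
    _ ≤ Real.exp (-(l * m)) * Real.exp (l ^ 2 / 2) ^ T := by
        gcongr
        · nlinarith [hq.1, hq.2, Real.exp_pos l, Real.exp_pos (-l)]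
        · exact stepMGF_le_exp hq l
    _ = Real.exp (T * l ^ 2 / 2 - l * m) := by
        rw [← Real.exp_nat_mul, ← Real.exp_add]; ring_nf

theorem prob_le_abs_partialSum_le (hq : q ∈ Set.Icc 0 (1 / 2)) {a : ℝ} (ha : 0 < a) :
    prob q T (fun v => a ≤ |(partialSum v T : ℝ)|) ≤ 2 * q * T / a ^ 2 := by
  calc prob q T (fun v => a ≤ |(partialSum v T : ℝ)|)
      ≤ expect q T (fun k => (a ^ 2)⁻¹ * (k : ℝ) ^ 2) := by
        refine prob_le_expect (P := fun k : ℤ => a ≤ |(k : ℝ)|) hq (fun k => by positivity)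
          fun k hk => ?_
        rw [← div_eq_inv_mul, one_le_div (by positivity), ← sq_abs (k : ℝ)]
        gcongr
    _ = 2 * q * T / a ^ 2 := by rw [expect_const_mul, expect_sq]; ring

end Moments

theorem _root_.Int.abs_sub_lt_of_ediv_eq {m x y : ℤ} (hm : 0 < m) (h : x / m = y / m) :
    |x - y| < m := by
  have hx := Int.mul_ediv_add_emod x m
  have hy := Int.mul_ediv_add_emod y m
  have := Int.emod_nonneg x hm.ne'
  have := Int.emod_nonneg y hm.ne'
  have := Int.emod_lt_of_pos x hm
  have := Int.emod_lt_of_pos y hm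
  rw [h] at hx
  exact abs_sub_lt_iff.2 ⟨by linarith, by linarith⟩

theorem _root_.Int.ediv_mem_Icc_of_abs_le {m x L : ℤ} (hm : 0 < m) (h : |x| ≤ L) :
    x / m ∈ Icc (-(L / m + 1)) (L / m + 1) := by
  obtain ⟨hxl, hxu⟩ := abs_le.1 h
  have hL := Int.mul_ediv_add_emod L m
  have := Int.emod_lt_of_pos L hm
  refine mem_Icc.2 ⟨(Int.le_ediv_iff_mul_le hm).2 (by linarith), ?_⟩
  exact (Int.ediv_le_ediv hm hxu).trans (by omega)

section AntiConcentration

variable {m : ℤ}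

/-- By the symmetry `v ↦ -v`, the `i`-th square is the probability that the first half of the
walk and the negated second half both end in the window `[i * m, (i + 1) * m)`, which forces
`|S_{2N}| < m`. -/
theorem sum_sq_prob_ediv_le (hq : q ∈ Set.Icc 0 (1 / 2)) (hm : 0 < m) (N : ℕ) (I : Finset ℤ) :
    ∑ i ∈ I, prob q N (fun v => partialSum v N / m = i) ^ 2 ≤
      prob q (N + N) (fun v => |partialSum v (N + N)| < m) := by
  calc ∑ i ∈ I, prob q N (fun v => partialSum v N / m = i) ^ 2
      = ∑ i ∈ I, prob q N (fun v => partialSum v N / m = i) *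
          prob q N (fun v => -partialSum v N / m = i) := by
        refine sum_congr rfl fun i _ => ?_
        rw [sq]; congr 1; exact prob_neg_partialSum (fun s => s / m = i)
    _ ≤ ∑ i ∈ I, prob q (N + N)
          (fun v => partialSum v N / m = i ∧ |partialSum v (N + N)| < m) := by
        refine sum_le_sum fun i _ => prob_mul_le_prob_add (A := fun k => k / m = i)
          (B := fun l => -l / m = i) (C := fun k s => k / m = i ∧ |s| < m) hq
          fun k l hk hl => ⟨hk, ?_⟩
        simpa using Int.abs_sub_lt_of_ediv_eq hm (hk.trans hl.symm)
    _ = prob q (N + N) (fun v => partialSum v N / m ∈ I ∧ |partialSum v (N + N)| < m) :=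
        sum_prob_fiber _ I _
    _ ≤ prob q (N + N) (fun v => |partialSum v (N + N)| < m) := prob_mono hq fun v => And.right

theorem le_prob_abs_partialSum_lt (hq : q ∈ Set.Icc 0 (1 / 2)) (hm : 0 < m) (N L : ℕ) :
    prob q N (fun v => |partialSum v N| ≤ L) ^ 2 / (2 * ((L / m + 1 : ℤ) : ℝ) + 1) ≤
      prob q (N + N) (fun v => |partialSum v (N + N)| < m) := by
  set K : ℤ := L / m + 1
  have hK : 0 < K := by have := Int.ediv_nonneg (Int.natCast_nonneg L) hm.le; omega
  have hcard : ((Icc (-K) K).card : ℝ) = 2 * K + 1 := by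
    rw [Int.card_Icc, show K + 1 - -K = 2 * K + 1 by ring]
    exact_mod_cast Int.toNat_of_nonneg (by omega)
  have hmass : prob q N (fun v => |partialSum v N| ≤ L) ≤
      ∑ i ∈ Icc (-K) K, prob q N (fun v => partialSum v N / m = i) := by
    have hfiber := sum_prob_fiber (q := q) (T := N) (fun v => partialSum v N / m) (Icc (-K) K)
      (fun _ => True)
    simp only [and_true] at hfiber
    rw [hfiber]
    exact prob_mono hq fun v hv => Int.ediv_mem_Icc_of_abs_le hm hv
  rw [div_le_iff₀ (by positivity), ← hcard]
  calc prob q N (fun v => |partialSum v N| ≤ L) ^ 2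
      ≤ (∑ i ∈ Icc (-K) K, prob q N (fun v => partialSum v N / m = i)) ^ 2 := by
        gcongr; exact prob_nonneg hq
    _ ≤ _ := sq_sum_le_card_mul_sum_sq
    _ ≤ _ := by rw [mul_comm]; gcongr; exact sum_sq_prob_ediv_le hq hm N _

theorem half_le_prob_step (hq : q ∈ Set.Icc 0 (1 / 2)) {r : ℕ} (hr : r ≤ 1) :
    1 / 2 ≤ prob q r (fun v => -1 ≤ partialSum v r ∧ partialSum v r ≤ 0) := by
  rw [prob_eq_expect (fun s => -1 ≤ s ∧ s ≤ 0)]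
  interval_cases r
  · norm_num [expect_zero]
  · simp [expect_one]; linarith [hq.2]

/-- One extra step, needed to reach odd times, costs at most a factor `2`. -/
theorem prob_abs_lt_div_two_le_prob_add (hq : q ∈ Set.Icc 0 (1 / 2)) (N : ℕ) {r : ℕ}
    (hr : r ≤ 1) :
    prob q N (fun v => |partialSum v N| < m) / 2 ≤
      prob q (N + r) (fun v => -m ≤ partialSum v (N + r) ∧ partialSum v (N + r) < m) := by
  calc prob q N (fun v => |partialSum v N| < m) / 2
      ≤ prob q N (fun v => |partialSum v N| < m) *
          prob q r (fun v => -1 ≤ partialSum v r ∧ partialSum v r ≤ 0) := by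
        rw [div_eq_mul_one_div]; gcongr
        exacts [prob_nonneg hq, half_le_prob_step hq hr]
    _ ≤ _ := prob_mul_le_prob_add (A := fun k => |k| < m) (B := fun l => -1 ≤ l ∧ l ≤ 0)
        (C := fun _ s => -m ≤ s ∧ s < m) hq fun k l hk hl => by
        obtain ⟨hk₁, hk₂⟩ := abs_lt.1 hk; omega

end AntiConcentration

section HittingBounds

variable {n m : ℕ}

theorem prob_hits_le_exp (hq : q ∈ Set.Icc 0 (1 / 2)) (hT : T ≤ n ^ 2) (hn : 0 < n)
    (hm : 4 * n ≤ m) : prob q T (Hits (m : ℤ)) ≤ Real.exp (-(m / (72 * n))) := by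
  have hn' : (0 : ℝ) < n := by exact_mod_cast hn
  set x : ℝ := m / n
  have hx : 4 ≤ x := by rw [le_div_iff₀ hn']; exact_mod_cast hm
  have hchernoff : prob q T (fun v => (m : ℤ) ≤ partialSum v T) ≤ Real.exp (1 / 2 - x) := by
    refine (prob_le_partialSum_le_exp hq (l := 1 / n) (by positivity) m).trans
      (Real.exp_le_exp.2 ?_)
    have : (T : ℝ) ≤ n ^ 2 := by exact_mod_cast hT
    have : (T : ℝ) * (1 / n) ^ 2 ≤ 1 := by
      rw [div_pow, one_pow, mul_one_div, div_le_one (by positivity)]; assumption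
    simp only [x]; push_cast; linarith [show 1 / (n : ℝ) * m = m / n by ring]
  have htwo : 2 ≤ Real.exp (71 / 72 * x - 1 / 2) := by
    linarith [Real.add_one_le_exp (71 / 72 * x - 1 / 2)]
  calc prob q T (Hits (m : ℤ))
      ≤ 2 * prob q T (fun v => (m : ℤ) ≤ partialSum v T) := by
        rw [prob_hits (by positivity), two_mul]
        gcongr; exact prob_mono hq fun v => le_of_lt
    _ ≤ Real.exp (71 / 72 * x - 1 / 2) * Real.exp (1 / 2 - x) := by
        gcongr; exact prob_nonneg hq
    _ = Real.exp (-(m / (72 * n))) := by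
        rw [← Real.exp_add]; congr 1; simp only [x]; ring

theorem seven_eighths_le_prob_abs_le (hq : q ∈ Set.Icc 0 (1 / 2)) {N : ℕ}
    (hN : 2 * N ≤ n ^ 2) (hn : 0 < n) :
    7 / 8 ≤ prob q N (fun v => |partialSum v N| ≤ (2 * n : ℕ)) := by
  have htail : prob q N (fun v => ¬ |partialSum v N| ≤ (2 * n : ℕ)) ≤ 1 / 8 := by
    have hN' : 2 * (N : ℝ) ≤ n ^ 2 := by exact_mod_cast hN
    have hn' : (1 : ℝ) ≤ n := by exact_mod_cast hn
    calc prob q N (fun v => ¬ |partialSum v N| ≤ (2 * n : ℕ))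
        ≤ prob q N (fun v => (2 * n + 1 : ℝ) ≤ |(partialSum v N : ℝ)|) := by
          refine prob_mono hq fun v hv => ?_
          rw [← Int.cast_abs]; exact_mod_cast (by omega : (2 * n : ℕ) + 1 ≤ |partialSum v N|)
      _ ≤ 2 * q * N / (2 * n + 1) ^ 2 := prob_le_abs_partialSum_le hq (by positivity)
      _ ≤ 1 / 8 := by
          rw [div_le_iff₀ (by positivity)]; nlinarith [hq.1, hq.2]
  linarith [prob_add_prob_not (q := q) (P := fun v : Fin N → SignType =>
    |partialSum v N| ≤ (2 * n : ℕ))]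

theorem le_prob_not_hits (hq : q ∈ Set.Icc 0 (1 / 2)) (hT : T ≤ n ^ 2) (hn : 0 < n)
    (hm : 0 < m) (hmn : m < 4 * n) : m / (72 * n) ≤ prob q T (fun v => ¬ Hits (m : ℤ) v) := by
  obtain ⟨N, r, hr, rfl⟩ : ∃ N r, r ≤ 1 ∧ T = N + N + r :=
    ⟨T / 2, T % 2, by omega, by omega⟩
  have hm' : (0 : ℤ) < m := by exact_mod_cast hm
  set d : ℤ := ((2 * n : ℕ) : ℤ) / m
  have hd : 0 ≤ d := Int.ediv_nonneg (by positivity) hm'.le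
  have hdm : (d : ℝ) * m ≤ 2 * n := by
    exact_mod_cast (Int.ediv_mul_le ((2 * n : ℕ) : ℤ) hm'.ne').trans (by push_cast; rfl)
  have hcheb := seven_eighths_le_prob_abs_le hq (N := N) (by omega) hn
  rw [prob_not_hits hm'.le]
  calc (m : ℝ) / (72 * n)
      ≤ (7 / 8) ^ 2 / (2 * ((d + 1 : ℤ) : ℝ) + 1) / 2 := by
        have : (m : ℝ) < 4 * n := by exact_mod_cast hmn
        have : (0 : ℝ) ≤ d := by exact_mod_cast hd
        rw [div_div, div_le_div_iff₀ (by positivity) (by positivity)]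
        push_cast; nlinarith
    _ ≤ prob q N (fun v => |partialSum v N| ≤ (2 * n : ℕ)) ^ 2 /
          (2 * ((((2 * n : ℕ) : ℤ) / m + 1 : ℤ) : ℝ) + 1) / 2 := by
        gcongr
    _ ≤ prob q (N + N) (fun v => |partialSum v (N + N)| < m) / 2 := by
        gcongr; exact le_prob_abs_partialSum_lt hq hm' N (2 * n)
    _ ≤ _ := prob_abs_lt_div_two_le_prob_add hq (N + N) hr

theorem one_sub_exp_le_prob_not_hits (hq : q ∈ Set.Icc 0 (1 / 2)) (hT : T ≤ n ^ 2)
    (hn : 0 < n) (hm : 0 < m) :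
    1 - Real.exp (-(m / (72 * n))) ≤ prob q T (fun v => ¬ Hits (m : ℤ) v) := by
  have htotal := prob_add_prob_not (q := q) (P := Hits (T := T) (m : ℤ))
  by_cases hmn : 4 * n ≤ m
  · linarith [prob_hits_le_exp hq hT hn hmn]
  · linarith [le_prob_not_hits hq hT hn hm (by omega), Real.add_one_le_exp (-(m / (72 * n) : ℝ))]

end HittingBounds

theorem _root_.SignType.intCast_injective : Function.Injective ((↑) : SignType → ℤ) := by
  intro a b; cases a <;> cases b <;> simp

section Measure

variable {Ω : Type*} [MeasurableSpace Ω] {μ : Measure Ω} {Y : ℕ → Ω → ℤ}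

theorem measure_eq_weight (hindep : iIndepFun Y μ)
    (hlaw : ∀ i (s : SignType), μ {ω | Y i ω = s} = ENNReal.ofReal (stepWeight q s))
    (hq : q ∈ Set.Icc 0 (1 / 2)) (v : Fin T → SignType) :
    μ {ω | ∀ i : Fin T, Y i ω = v i} = ENNReal.ofReal (weight q v) := by
  have h := (hindep.precomp Fin.val_injective).measure_inter_preimage_eq_mul univ
    (sets := fun i => {(v i : ℤ)}) fun _ _ => measurableSet_singleton _
  simp only [mem_univ, Set.iInter_true] at h
  rw [weight, ENNReal.ofReal_prod_of_nonneg fun i _ => stepWeight_nonneg hq _]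
  convert h using 1
  · congr 1; ext ω; simp
  · exact prod_congr rfl fun i _ => (hlaw i (v i)).symm

theorem ofReal_prob_le_measure (hY : ∀ i, Measurable (Y i)) (hindep : iIndepFun Y μ)
    (hlaw : ∀ i (s : SignType), μ {ω | Y i ω = s} = ENNReal.ofReal (stepWeight q s))
    (hq : q ∈ Set.Icc 0 (1 / 2)) (P : (Fin T → SignType) → Prop) :
    ENNReal.ofReal (prob q T P) ≤ μ {ω | ∃ v, P v ∧ ∀ i : Fin T, Y i ω = v i} := by
  classical
  have hdisj : (↑(univ.filter P) : Set (Fin T → SignType)).PairwiseDisjoint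
      fun v => {ω | ∀ i : Fin T, Y i ω = v i} := by
    intro v _ w _ hvw
    refine Set.disjoint_left.2 fun ω hv hw => hvw (funext fun i => ?_)
    exact SignType.intCast_injective ((hv i).symm.trans (hw i))
  have hmeas (v : Fin T → SignType) : MeasurableSet {ω | ∀ i : Fin T, Y i ω = v i} := by
    simp only [Set.ofPred_forall]
    exact MeasurableSet.iInter fun i => hY i (measurableSet_singleton _)
  rw [prob_eq_sum_filter, ENNReal.ofReal_sum_of_nonneg fun v _ => weight_nonneg hq v]
  simp only [← measure_eq_weight hindep hlaw hq]
  rw [← measure_biUnion_finset hdisj fun v _ => hmeas v]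
  exact measure_mono fun ω hω => by
    obtain ⟨v, hv, hω⟩ := Set.mem_iUnion₂.1 hω
    exact ⟨v, (mem_filter.1 hv).2, hω⟩

theorem partialSum_eq_sum_range {v : Fin T → SignType} {y : ℕ → ℤ}
    (hy : ∀ i : Fin T, y i = v i) {t : ℕ} (ht : t ≤ T) :
    partialSum v t = ∑ i ∈ range t, y i :=
  sum_congr rfl fun i hi => by
    have hiT : i < T := (mem_range.1 hi).trans_le ht
    simpa [stepAt, hiT] using (hy ⟨i, hiT⟩).symm

end Measure

end LazyWalk

open LazyWalk in
/-- There is an absolute constant `0 < c ≤ 1/2` such that for every `q ∈ (0, 1/2)`, every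
positive integer `m` and every integer `n > 1`, the hitting time `τ'_m` of `m` by the lazy
simple random walk on `ℤ` with parameter `q` satisfies `P(τ'_m ≥ n²) ≥ 1 - exp(-c m / n)`.
The event `τ'_m ≥ n²` is expressed as: the walk does not hit `m` at any positive time
`t < n²`. -/
theorem thm6 :
    ∃ c : ℝ, 0 < c ∧ c ≤ 1 / 2 ∧
      ∀ q : ℝ, 0 < q → q < 1 / 2 →
        ∀ {Ω : Type} [MeasurableSpace Ω] (μ : Measure Ω), ∀ _ : IsProbabilityMeasure μ,
          ∀ Y : ℕ → Ω → ℤ, (∀ i, Measurable (Y i)) →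
            iIndepFun Y μ →
            (∀ i, μ {ω | Y i ω = 1} = ENNReal.ofReal q ∧
                  μ {ω | Y i ω = -1} = ENNReal.ofReal q ∧
                  μ {ω | Y i ω = 0} = ENNReal.ofReal (1 - 2 * q)) →
            ∀ m : ℕ, 1 ≤ m → ∀ n : ℕ, 1 < n →
              ENNReal.ofReal (1 - Real.exp (-(c * m) / n)) ≤
                μ {ω | ∀ t : ℕ, 1 ≤ t → t < n ^ 2 →
                    (∑ i ∈ Finset.range t, Y i ω) ≠ (m : ℤ)} := by
  refine ⟨1 / 72, by norm_num, by norm_num, ?_⟩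
  intro q hq₀ hq₁ Ω _ μ _ Y hY hindep hlaw m hm n hn
  have hq : q ∈ Set.Icc (0 : ℝ) (1 / 2) := ⟨hq₀.le, hq₁.le⟩
  have hlaw' : ∀ i (s : SignType), μ {ω | Y i ω = s} = ENNReal.ofReal (stepWeight q s) := by
    intro i s
    obtain ⟨hpos, hneg, hzero⟩ := hlaw i
    cases s <;> simp [stepWeight, hpos, hneg, hzero]
  calc ENNReal.ofReal (1 - Real.exp (-(1 / 72 * m) / n))
      ≤ ENNReal.ofReal (prob q (n ^ 2 - 1) (fun v => ¬ Hits (m : ℤ) v)) := by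
        refine ENNReal.ofReal_le_ofReal (le_of_eq_of_le ?_
          (one_sub_exp_le_prob_not_hits hq (Nat.sub_le _ _) (by omega) hm))
        ring_nf
    _ ≤ μ {ω | ∃ v, ¬ Hits (m : ℤ) v ∧ ∀ i : Fin (n ^ 2 - 1), Y i ω = v i} :=
        ofReal_prob_le_measure hY hindep hlaw' hq _
    _ ≤ _ := by
        refine measure_mono fun ω ⟨v, hv, hω⟩ t _ ht hsum => hv ⟨t, by omega, ?_⟩
        exact (partialSum_eq_sum_range hω (by omega)).trans hsum
end

section
/- Let P be a finite poset and p ∈ (0,1]. Run the Ungarian Markov chain with parameter p on the lattice J(P) of order ideals of P, started at the maximum element P, and let T(J(P)) be the number of steps until the chain reaches the empty ideal ∅. Then T(J(P)) is equal in distribution to max_{C ∈ MC(P)} Σ_{x ∈ C} G_x, where MC(P) is the set of maximal chains of P and (G_x)_{x ∈ P} are i.i.d. geometric random variables with parameter p. -/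
open scoped Classical ENNReal

noncomputable section

namespace Ungarian

variable {L : Type*} [Fintype L]

/-- `y` is covered by `x` with respect to the order relation `le`. -/
def CovRel (le : L → L → Prop) (x y : L) : Prop :=
  le y x ∧ y ≠ x ∧ ∀ z, le y z → le z x → z = y ∨ z = x

/-- The finset of elements covered by `x`. -/
def covFinset (le : L → L → Prop) (x : L) : Finset L :=
  Finset.univ.filter fun y => CovRel le x y

/-- `m` is a greatest lower bound of `S` with respect to `le`. -/
def IsMeetOf (le : L → L → Prop) (S : Set L) (m : L) : Prop :=
  (∀ s ∈ S, le m s) ∧ ∀ z, (∀ s ∈ S, le z s) → le z m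

/-- The meet of `{x} ∪ T`. -/
def meetOf (le : L → L → Prop) (x : L) (T : Finset L) : L :=
  if h : ∃ m, IsMeetOf le (insert x (T : Set L)) m then h.choose else x

/-- One-step transition probabilities of the Ungarian Markov chain with parameter `p`:
from `x`, a random subset `T` of the set of elements covered by `x` is chosen, each element
independently with probability `p`, and the chain moves to the meet of `{x} ∪ T`. -/
def stepProb (p : ℝ) (le : L → L → Prop) (x y : L) : ℝ≥0∞ :=
  ∑ T ∈ (covFinset le x).powerset,
    if meetOf le x T = y then
      ENNReal.ofReal (p ^ T.card * (1 - p) ^ ((covFinset le x).card - T.card))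
    else 0

/-- Distribution after `t` steps started from `x`. -/
def walk (p : ℝ) (le : L → L → Prop) (x : L) : ℕ → L → ℝ≥0∞
  | 0 => fun y => if y = x then 1 else 0
  | t + 1 => fun y => ∑ z : L, walk p le x t z * stepProb p le z y

/-- Probability that the chain started at `x` lies in `S` after `t` steps. -/
def probIn (p : ℝ) (le : L → L → Prop) (x : L) (t : ℕ) (S : Set L) : ℝ≥0∞ :=
  ∑ y ∈ Finset.univ.filter (· ∈ S), walk p le x t y

/-- Expected number of steps until absorption at `bot`, computed as `∑_t P(X_t ≠ bot)`. -/
def expAbsorb (p : ℝ) (le : L → L → Prop) (x bot : L) : ℝ≥0∞ :=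
  ∑' t : ℕ, probIn p le x t {y | y ≠ bot}

end Ungarian

/-- The order ideals (downward closed subsets) of a finite poset `P`. -/
def OrderIdeals (P : Type*) [Fintype P] [PartialOrder P] : Type _ :=
  {S : Finset P // ∀ x ∈ S, ∀ y, y ≤ x → y ∈ S}

noncomputable instance (P : Type*) [Fintype P] [PartialOrder P] : Fintype (OrderIdeals P) :=
  @Subtype.fintype _ _ (Classical.decPred _) _

/-- The maximal order ideal: all of `P`. -/
def topIdeal (P : Type*) [Fintype P] [PartialOrder P] : OrderIdeals P :=
  ⟨Finset.univ, fun _ _ y _ => Finset.mem_univ y⟩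

/-- The minimal order ideal: the empty ideal. -/
def botIdeal (P : Type*) [Fintype P] [PartialOrder P] : OrderIdeals P :=
  ⟨∅, fun x hx => absurd hx (Finset.notMem_empty x)⟩

/-- The mass of a geometric random variable with parameter `p` at `j ∈ {1, 2, 3, …}`. -/
def geomMass (p : ℝ) (j : ℕ) : ℝ≥0∞ :=
  if 1 ≤ j then ENNReal.ofReal ((1 - p) ^ (j - 1) * p) else 0

/-- The finset of maximal chains of a finite poset `P`. -/
def maxChains (P : Type*) [Fintype P] [PartialOrder P] : Finset (Finset P) :=
  Finset.univ.filter fun C : Finset P => IsMaxChain (· ≤ ·) (C : Set P)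

/-!
Both sides satisfy the same first-step recursion in the ideal `I` the chain is started from.
One step of the chain deletes each maximal element of `I` independently with probability `p`.
By memorylessness, each maximal element `x` has `G x = 1` with probability `p` and otherwise
`G x = 1 + G' x` with `G' x` again geometric. Every maximal chain of `I` passes through exactly
one maximal element, so `max_C ∑_{x ∈ C} G x` drops by exactly one when the maximal elements with
`G x = 1` are deleted and the others are decremented. Induction on `t` then gives equal tail
probabilities.
-/

namespace Ungarian

open Finset

section Chains

variable {P : Type*} [PartialOrder P]

def maxElems (s : Finset P) : Finset P := {x ∈ s | Maximal (· ∈ s) x}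

theorem isAntichain_maxElems (s : Finset P) : IsAntichain (· ≤ ·) (maxElems s : Set P) :=
  (setOfPred_maximal_antichain (· ∈ s)).subset fun _ hx => (mem_filter.1 hx).2

theorem card_filter_mem_maxElems_le_one {s C : Finset P} (hC : IsChain (· ≤ ·) (C : Set P)) :
    #{x ∈ C | x ∈ maxElems s} ≤ 1 := by
  have := inter_subsingleton_of_isChain_of_isAntichain hC (isAntichain_maxElems s)
  exact card_le_one.2 fun a ha b hb => this (by simpa using ha) (by simpa using hb)

theorem exists_mem_maxElems_isChain_insert {s C : Finset P} (hs : s.Nonempty) (hCs : C ⊆ s)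
    (hC : IsChain (· ≤ ·) (C : Set P)) :
    ∃ m ∈ maxElems s, IsChain (· ≤ ·) (insert m (C : Set P)) := by
  obtain ⟨c, hcs, hCc⟩ : ∃ c ∈ s, ∀ x ∈ C, x ≤ c := by
    rcases C.eq_empty_or_nonempty with rfl | hCne
    · obtain ⟨c, hc⟩ := hs
      exact ⟨c, hc, by simp⟩
    · obtain ⟨c, hc⟩ := C.exists_maximal hCne
      exact ⟨c, hCs hc.1, fun x hx => (hC.total hx hc.1).elim id (hc.2 hx)⟩
  obtain ⟨m, hcm, hm⟩ := s.exists_le_maximal hcs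
  exact ⟨m, mem_filter.2 ⟨hm.1, hm⟩, hC.insert fun x hx _ => Or.inr ((hCc x hx).trans hcm)⟩

def chainSup (s : Finset P) (g : P → ℕ) : ℕ :=
  (s.powerset.filter fun C : Finset P => IsChain (· ≤ ·) (C : Set P)).sup
    fun C => ∑ x ∈ C, g x

theorem le_chainSup {s C : Finset P} (g : P → ℕ) (hCs : C ⊆ s) (hC : IsChain (· ≤ ·) (C : Set P)) :
    ∑ x ∈ C, g x ≤ chainSup s g :=
  le_sup (f := fun C => ∑ x ∈ C, g x) (mem_filter.2 ⟨mem_powerset.2 hCs, hC⟩)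

theorem chainSup_le_iff {s : Finset P} {g : P → ℕ} {n : ℕ} :
    chainSup s g ≤ n ↔ ∀ C ⊆ s, IsChain (· ≤ ·) (C : Set P) → ∑ x ∈ C, g x ≤ n := by
  simp [chainSup, Finset.sup_le_iff]

@[simp]
theorem chainSup_empty (g : P → ℕ) : chainSup (∅ : Finset P) g = 0 := by
  simp [chainSup]

theorem chainSup_congr {s : Finset P} {g g' : P → ℕ} (h : ∀ x ∈ s, g x = g' x) :
    chainSup s g = chainSup s g' :=
  sup_congr rfl fun _ hC => sum_congr rfl fun x hx =>
    h x (mem_powerset.1 (mem_filter.1 hC).1 hx)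

theorem chainSup_pos {s : Finset P} {g : P → ℕ} (hs : s.Nonempty) (hg : ∀ x ∈ s, g x ≠ 0) :
    0 < chainSup s g := by
  obtain ⟨x, hx⟩ := hs
  calc 0 < ∑ y ∈ {x}, g y := by simpa using Nat.pos_of_ne_zero (hg x hx)
    _ ≤ chainSup s g := le_chainSup g (by simpa using hx) (by simp)

theorem chainSup_univ [Fintype P] (g : P → ℕ) :
    chainSup univ g = (maxChains P).sup fun C => ∑ x ∈ C, g x := by
  refine le_antisymm (chainSup_le_iff.2 fun C _ hC => ?_) (Finset.sup_le fun C hC => ?_)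
  · obtain ⟨D, hD, hCD⟩ := hC.exists_maxChain
    calc ∑ x ∈ C, g x ≤ ∑ x ∈ D.toFinset, g x := sum_le_sum_of_subset (by simpa using hCD)
      _ ≤ _ := le_sup (f := fun C => ∑ x ∈ C, g x) (by simpa [maxChains] using hD)
  · exact le_chainSup g (subset_univ C) (mem_filter.1 hC).2.1

/-- Every chain meets the antichain `maxElems s` at most once, and every chain of `s` can be
extended to meet it. -/
theorem chainSup_add_indicator_maxElems {s : Finset P} (hs : s.Nonempty) (h : P → ℕ) :
    chainSup s (fun x => h x + if x ∈ maxElems s then 1 else 0) =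
      chainSup (s \ {x ∈ maxElems s | h x = 0}) h + 1 := by
  set S := {x ∈ maxElems s | h x = 0}
  have sum_eq (C : Finset P) :
      ∑ x ∈ C, (h x + if x ∈ maxElems s then 1 else 0) =
        ∑ x ∈ C \ S, h x + #{x ∈ C | x ∈ maxElems s} := by
    rw [sum_add_distrib, card_filter, sum_subset sdiff_subset fun x hxC hxS => ?_]
    exact (mem_filter.1 (not_not.1 fun h' => hxS (mem_sdiff.2 ⟨hxC, h'⟩))).2
  have lt_chainSup (C : Finset P) (hCs : C ⊆ s \ S) (hC : IsChain (· ≤ ·) (C : Set P)) :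
      ∑ x ∈ C, h x + 1 ≤ chainSup s (fun x => h x + if x ∈ maxElems s then 1 else 0) := by
    have hCs' : C ⊆ s := hCs.trans sdiff_subset
    obtain ⟨m, hmM, hmC⟩ := exists_mem_maxElems_isChain_insert hs hCs' hC
    have hCS : C ⊆ insert m C \ S := fun x hx =>
      mem_sdiff.2 ⟨mem_insert_of_mem hx, (mem_sdiff.1 (hCs hx)).2⟩
    have hm : 1 ≤ #{x ∈ insert m C | x ∈ maxElems s} := card_pos.2 ⟨m, by simp [hmM]⟩
    calc ∑ x ∈ C, h x + 1 ≤ ∑ x ∈ insert m C \ S, h x + #{x ∈ insert m C | x ∈ maxElems s} :=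
          add_le_add (sum_le_sum_of_subset hCS) hm
      _ ≤ _ := (sum_eq _).symm.le.trans <|
          le_chainSup _ (insert_subset (mem_filter.1 hmM).1 hCs') (by simpa using hmC)
  refine le_antisymm (chainSup_le_iff.2 fun C hCs hC => ?_) ?_
  · rw [sum_eq]
    have := le_chainSup h (s := s \ S) (sdiff_subset_sdiff hCs le_rfl) (hC.mono (by simp))
    have := card_filter_mem_maxElems_le_one (s := s) hC
    omega
  · have := lt_chainSup ∅ (empty_subset _) (by simp)
    have := chainSup_le_iff.2 fun C hCs hC => Nat.le_sub_of_add_le (lt_chainSup C hCs hC)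
    omega

end Chains

section Geometric

variable {p : ℝ}

@[simp]
theorem geomMass_zero : geomMass p 0 = 0 := by simp [geomMass]

theorem geomMass_succ_eq_pow_mul (hp1 : p ≤ 1) (k : ℕ) :
    geomMass p (k + 1) = ENNReal.ofReal (1 - p) ^ k * ENNReal.ofReal p := by
  rw [geomMass, if_pos (Nat.le_add_left 1 k), Nat.add_sub_cancel,
    ENNReal.ofReal_mul (pow_nonneg (sub_nonneg.2 hp1) k), ENNReal.ofReal_pow (sub_nonneg.2 hp1)]

/-- Memorylessness of the geometric distribution. -/
theorem geomMass_succ (hp1 : p ≤ 1) (k : ℕ) :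
    geomMass p (k + 1) =
      ENNReal.ofReal p * (if k = 0 then 1 else 0) + ENNReal.ofReal (1 - p) * geomMass p k := by
  rcases k with _ | k
  · simp [geomMass]
  · rw [geomMass_succ_eq_pow_mul hp1, geomMass_succ_eq_pow_mul hp1, pow_succ]
    simp only [add_eq_zero, one_ne_zero, and_false, if_false, mul_zero, zero_add]
    ring

theorem tsum_geomMass (hp0 : 0 < p) (hp1 : p ≤ 1) : ∑' k, geomMass p k = 1 := by
  have one_sub : 1 - ENNReal.ofReal (1 - p) = ENNReal.ofReal p := by
    rw [← ENNReal.ofReal_one, ← ENNReal.ofReal_sub _ (sub_nonneg.2 hp1), sub_sub_cancel]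
  rw [tsum_eq_zero_add' ENNReal.summable, geomMass_zero, zero_add,
    tsum_congr (geomMass_succ_eq_pow_mul hp1), ENNReal.tsum_mul_right, ENNReal.tsum_geometric,
    one_sub,
    ENNReal.inv_mul_cancel (by simpa using hp0) ENNReal.ofReal_ne_top]

end Geometric

section MarginalSwap

variable {ι α : Type*} [DecidableEq ι]

theorem tsum_mul_apply_congr {F : (ι → α) → ℝ≥0∞} {a : ι}
    (hF : ∀ g k, F (Function.update g a k) = F g) {u v : α → ℝ≥0∞}
    (huv : ∑' k, u k = ∑' k, v k) :
    ∑' g, F g * u (g a) = ∑' g, F g * v (g a) := by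
  rcases isEmpty_or_nonempty (ι → α) with _ | ⟨⟨g₀⟩⟩
  · simp only [tsum_empty]
  set e := (Equiv.funSplitAt a α).symm
  have he_apply (k : α) (r) : e (k, r) a = k := by simp [e]
  have he_update (k : α) (r) : e (k, r) = Function.update (e (g₀ a, r)) a k := by
    funext j
    by_cases hj : j = a
    · subst hj; simp [e]
    · simp [e, hj]
  have factor (w : α → ℝ≥0∞) :
      ∑' g, F g * w (g a) = (∑' k, w k) * ∑' r, F (e (g₀ a, r)) := by
    rw [← e.tsum_eq, ENNReal.tsum_prod', ← ENNReal.tsum_mul_right]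
    refine tsum_congr fun k => ?_
    rw [← ENNReal.tsum_mul_left]
    refine tsum_congr fun r => ?_
    rw [he_apply, he_update k r, hF, mul_comm]
  rw [factor, factor, huv]

theorem tsum_mul_prod_congr (S : Finset ι) {F : (ι → α) → ℝ≥0∞}
    (hF : ∀ g, ∀ x ∈ S, ∀ k, F (Function.update g x k) = F g) {u v : ι → α → ℝ≥0∞}
    (huv : ∀ x ∈ S, ∑' k, u x k = ∑' k, v x k) :
    ∑' g, F g * ∏ x ∈ S, u x (g x) = ∑' g, F g * ∏ x ∈ S, v x (g x) := by
  induction S using Finset.induction_on generalizing F with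
  | empty => rfl
  | @insert a S ha ih =>
    have prod_update (w : ι → α → ℝ≥0∞) (g k) :
        ∏ x ∈ S, w x (Function.update g a k x) = ∏ x ∈ S, w x (g x) :=
      prod_congr rfl fun x hx => by rw [Function.update_of_ne (ne_of_mem_of_not_mem hx ha)]
    calc ∑' g, F g * ∏ x ∈ insert a S, u x (g x)
        = ∑' g, (F g * ∏ x ∈ S, u x (g x)) * u a (g a) :=
          tsum_congr fun g => by rw [prod_insert ha]; ring
      _ = ∑' g, (F g * ∏ x ∈ S, u x (g x)) * v a (g a) :=
          tsum_mul_apply_congr (fun g k => by rw [prod_update, hF g a (mem_insert_self a S)])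
            (huv a (mem_insert_self a S))
      _ = ∑' g, (F g * v a (g a)) * ∏ x ∈ S, u x (g x) := tsum_congr fun g => by ring
      _ = ∑' g, (F g * v a (g a)) * ∏ x ∈ S, v x (g x) :=
          ih (fun g x hx k => by
            rw [hF g x (mem_insert_of_mem hx),
              Function.update_of_ne (ne_of_mem_of_not_mem hx ha).symm])
            fun x hx => huv x (mem_insert_of_mem hx)
      _ = ∑' g, F g * ∏ x ∈ insert a S, v x (g x) :=
          tsum_congr fun g => by rw [prod_insert ha]; ring

end MarginalSwap

theorem tsum_prod_geomMass {P : Type*} [Fintype P] {p : ℝ} (hp0 : 0 < p) (hp1 : p ≤ 1) :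
    ∑' g : P → ℕ, ∏ x, geomMass p (g x) = 1 := by
  have := tsum_mul_prod_congr Finset.univ (F := fun _ : P → ℕ => 1) (fun _ _ _ _ => rfl)
    (u := fun _ => geomMass p) (v := fun _ k => if k = 0 then 1 else 0)
    fun _ _ => by rw [tsum_geomMass hp0 hp1, tsum_ite_eq]
  simp only [one_mul, Fintype.prod_boole] at this
  simp only [this, ← funext_iff]
  exact tsum_ite_eq (fun _ : P => (0 : ℕ)) (fun _ => (1 : ℝ≥0∞))

section Weights

variable {P : Type*} {p : ℝ}

def subsetWeight (p : ℝ) (M S : Finset P) : ℝ≥0∞ :=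
  ENNReal.ofReal (p ^ S.card * (1 - p) ^ (M.card - S.card))

theorem subsetWeight_eq (hp0 : 0 ≤ p) (hp1 : p ≤ 1) {M S : Finset P} (hS : S ⊆ M) :
    subsetWeight p M S = ENNReal.ofReal p ^ #S * ENNReal.ofReal (1 - p) ^ #(M \ S) := by
  rw [subsetWeight, ENNReal.ofReal_mul (pow_nonneg hp0 _), ENNReal.ofReal_pow hp0,
    ENNReal.ofReal_pow (sub_nonneg.2 hp1), card_sdiff_of_subset hS]

variable [Fintype P]

theorem ne_zero_of_prod_geomMass_ne_zero {g : P → ℕ} (hg : ∏ x, geomMass p (g x) ≠ 0) (x : P) :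
    g x ≠ 0 := by
  intro hx
  exact hg (prod_eq_zero (mem_univ x) (by rw [hx, geomMass_zero]))

/-- `S` is the set of coordinates in `M` where the geometric variable `h x + 1` equals `1`. -/
theorem prod_geomMass_add_indicator (hp0 : 0 ≤ p) (hp1 : p ≤ 1) (M : Finset P) (h : P → ℕ) :
    ∏ x, geomMass p (h x + if x ∈ M then 1 else 0) =
      ∑ S ∈ M.powerset, subsetWeight p M S *
        ((∏ x ∈ S, if h x = 0 then 1 else 0) * ∏ x ∈ Sᶜ, geomMass p (h x)) := by
  rw [← prod_mul_prod_compl M]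
  have on_compl : ∏ x ∈ Mᶜ, geomMass p (h x + if x ∈ M then 1 else 0) =
      ∏ x ∈ Mᶜ, geomMass p (h x) :=
    prod_congr rfl fun x hx => by rw [if_neg (mem_compl.1 hx), add_zero]
  rw [on_compl, prod_congr rfl fun x hx => by rw [if_pos hx, geomMass_succ hp1], prod_add,
    sum_mul]
  refine sum_congr rfl fun S hS => ?_
  have hSM := mem_powerset.1 hS
  have compl_eq : Sᶜ = (M \ S) ∪ Mᶜ := by
    ext x; simp only [mem_compl, mem_union, mem_sdiff]; have := @hSM x; tauto
  rw [subsetWeight_eq hp0 hp1 hSM, compl_eq,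
    prod_union (disjoint_compl_right.mono_left sdiff_subset)]
  simp only [prod_mul_distrib, prod_const]
  ring

theorem tsum_ite_prod_geomMass_shift (M : Finset P) (c : (P → ℕ) → Prop) [DecidablePred c] :
    ∑' g : P → ℕ, (if c g then ∏ x, geomMass p (g x) else 0) =
      ∑' h : P → ℕ, if c (fun x => h x + if x ∈ M then 1 else 0) then
        ∏ x, geomMass p (h x + if x ∈ M then 1 else 0) else 0 := by
  have shift_inj : Function.Injective fun (h : P → ℕ) x => h x + if x ∈ M then 1 else 0 :=
    fun h h' e => funext fun x => by simpa using congrFun e x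
  refine (shift_inj.tsum_eq (f := fun g => if c g then ∏ x, geomMass p (g x) else 0)
    fun g hg => ?_).symm
  have hg0 := ne_zero_of_prod_geomMass_ne_zero (ite_ne_right_iff.1 hg).2
  refine ⟨fun x => g x - if x ∈ M then 1 else 0, funext fun x => ?_⟩
  have := hg0 x
  dsimp only
  split_ifs <;> omega

theorem filter_eq_of_prod_ne_zero {M S : Finset P} (hS : S ⊆ M) {h : P → ℕ}
    (hρ : (∏ x ∈ S, if h x = 0 then (1 : ℝ≥0∞) else 0) * ∏ x ∈ Sᶜ, geomMass p (h x) ≠ 0) :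
    {x ∈ M | h x = 0} = S := by
  obtain ⟨hzero, hpos⟩ := mul_ne_zero_iff.1 hρ
  ext x
  by_cases hx : x ∈ S
  · simpa [hx, hS hx] using prod_ne_zero_iff.1 hzero x hx
  · have := prod_ne_zero_iff.1 hpos x (mem_compl.2 hx)
    simp only [mem_filter, hx, iff_false, not_and]
    rintro - h0
    exact this (by rw [h0, geomMass_zero])

end Weights

section ChainTail

variable {P : Type*} [Fintype P] [PartialOrder P] {p : ℝ}

def chainTail (p : ℝ) (s : Finset P) (t : ℕ) : ℝ≥0∞ :=
  ∑' g : P → ℕ, if t < chainSup s g then ∏ x, geomMass p (g x) else 0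

@[simp]
theorem chainTail_empty (t : ℕ) : chainTail p (∅ : Finset P) t = 0 := by
  simp [chainTail]

theorem chainTail_zero (hp0 : 0 < p) (hp1 : p ≤ 1) {s : Finset P} (hs : s.Nonempty) :
    chainTail p s 0 = 1 := by
  rw [chainTail, ← tsum_prod_geomMass (P := P) hp0 hp1]
  refine tsum_congr fun g => ite_eq_left_iff.2 fun hg => ?_
  by_contra hne
  exact hg (chainSup_pos hs fun x _ => ne_zero_of_prod_geomMass_ne_zero (Ne.symm hne) x)

/-- Forcing the coordinates in `S` to vanish does not change the distribution of the chain sums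
of `s \ S`, which ignore those coordinates. -/
theorem tsum_ite_chainSup_sdiff (hp0 : 0 < p) (hp1 : p ≤ 1) (s S : Finset P) (t : ℕ) :
    ∑' h : P → ℕ, (if t < chainSup (s \ S) h then
        (∏ x ∈ S, if h x = 0 then 1 else 0) * ∏ x ∈ Sᶜ, geomMass p (h x) else 0) =
      chainTail p (s \ S) t := by
  have swap := tsum_mul_prod_congr S
    (F := fun h => (if t < chainSup (s \ S) h then 1 else 0) * ∏ x ∈ Sᶜ, geomMass p (h x))
    (fun h x hx k => by
      have off_S {y} (hy : y ∉ S) : Function.update h x k y = h y :=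
        Function.update_of_ne (ne_of_mem_of_not_mem hx hy).symm k h
      rw [chainSup_congr fun y hy => off_S (mem_sdiff.1 hy).2,
        prod_congr rfl fun y hy => by rw [off_S (mem_compl.1 hy)]])
    (u := fun _ k => if k = 0 then 1 else 0) (v := fun _ => geomMass p)
    fun _ _ => by rw [tsum_ite_eq, tsum_geomMass hp0 hp1]
  rw [chainTail]
  convert swap using 1 <;> refine tsum_congr fun h => ?_ <;> split_ifs
  all_goals simp [mul_comm, prod_mul_prod_compl]

theorem ite_chainSup_add_indicator_eq_sum (hp0 : 0 < p) (hp1 : p ≤ 1) {s : Finset P}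
    (hs : s.Nonempty) (t : ℕ) (h : P → ℕ) :
    (if t + 1 < chainSup s (fun x => h x + if x ∈ maxElems s then 1 else 0) then
        ∏ x, geomMass p (h x + if x ∈ maxElems s then 1 else 0) else 0) =
      ∑ S ∈ (maxElems s).powerset, subsetWeight p (maxElems s) S *
        (if t < chainSup (s \ S) h then
          (∏ x ∈ S, if h x = 0 then 1 else 0) * ∏ x ∈ Sᶜ, geomMass p (h x) else 0) := by
  rw [prod_geomMass_add_indicator hp0.le hp1, chainSup_add_indicator_maxElems hs]
  simp only [Nat.add_lt_add_iff_right]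
  calc _ = ∑ S ∈ (maxElems s).powerset, subsetWeight p (maxElems s) S *
        (if t < chainSup (s \ {x ∈ maxElems s | h x = 0}) h then
          (∏ x ∈ S, if h x = 0 then 1 else 0) * ∏ x ∈ Sᶜ, geomMass p (h x) else 0) := by
        split_ifs <;> simp
    _ = _ := sum_congr rfl fun S hS => by
        by_cases hρ : (∏ x ∈ S, if h x = 0 then (1 : ℝ≥0∞) else 0) *
            ∏ x ∈ Sᶜ, geomMass p (h x) = 0
        · simp [hρ]
        · rw [filter_eq_of_prod_ne_zero (mem_powerset.1 hS) hρ]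

theorem chainTail_succ (hp0 : 0 < p) (hp1 : p ≤ 1) (s : Finset P) (t : ℕ) :
    chainTail p s (t + 1) =
      ∑ S ∈ (maxElems s).powerset, subsetWeight p (maxElems s) S * chainTail p (s \ S) t := by
  rcases s.eq_empty_or_nonempty with rfl | hs
  · simp [maxElems, subsetWeight]
  rw [chainTail, tsum_ite_prod_geomMass_shift (maxElems s) (t + 1 < chainSup s ·),
    tsum_congr (ite_chainSup_add_indicator_eq_sum hp0 hp1 hs t),
    Summable.tsum_finsetSum fun _ _ => ENNReal.summable]
  simp only [ENNReal.tsum_mul_left, tsum_ite_chainSup_sdiff hp0 hp1]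

end ChainTail

section Walk

variable {L : Type*} [Fintype L] (p : ℝ) (le : L → L → Prop)

theorem walk_succ_left (x : L) (t : ℕ) (y : L) :
    walk p le x (t + 1) y = ∑ z, stepProb p le x z * walk p le z t y := by
  induction t generalizing y with
  | zero => simp [walk]
  | succ t ih =>
    rw [walk]
    simp_rw [ih, sum_mul, walk, mul_sum, mul_assoc]
    exact sum_comm

theorem probIn_zero (x : L) (S : Set L) : probIn p le x 0 S = if x ∈ S then 1 else 0 := by
  simp [probIn, walk]

theorem probIn_succ (x : L) (t : ℕ) (S : Set L) :
    probIn p le x (t + 1) S = ∑ z, stepProb p le x z * probIn p le z t S := by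
  simp_rw [probIn, walk_succ_left, mul_sum]
  exact sum_comm

variable {p le}

theorem meetOf_eq_of_isMeetOf (antisymm : ∀ a b, le a b → le b a → a = b) {x m : L}
    {T : Finset L} (hm : IsMeetOf le (insert x (T : Set L)) m) : meetOf le x T = m := by
  have hex : ∃ m, IsMeetOf le (insert x (T : Set L)) m := ⟨m, hm⟩
  rw [meetOf, dif_pos hex]
  exact antisymm _ _ (hm.2 _ hex.choose_spec.1) (hex.choose_spec.2 _ hm.1)

end Walk

section Ideals

variable {P : Type*} [Fintype P] [PartialOrder P] {p : ℝ}

abbrev idealLE (P : Type*) [Fintype P] [PartialOrder P] (A B : OrderIdeals P) : Prop :=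
  A.1 ⊆ B.1

theorem idealLE_antisymm (A B : OrderIdeals P) (h₁ : idealLE P A B) (h₂ : idealLE P B A) :
    A = B :=
  Subtype.ext (h₁.antisymm h₂)

theorem ne_botIdeal_iff {I : OrderIdeals P} : I ≠ botIdeal P ↔ I.1.Nonempty := by
  rw [nonempty_iff_ne_empty, not_iff_not]
  exact ⟨fun h => h ▸ rfl, fun h => Subtype.ext h⟩

/-- Elements of `S` that are not maximal in `I` are kept, so that `removeMax` is total. -/
def removeMax (I : OrderIdeals P) (S : Finset P) : OrderIdeals P :=
  ⟨I.1 \ {x ∈ S | x ∈ maxElems I.1}, fun x hx y hyx => by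
    obtain ⟨hxI, hxS⟩ := mem_sdiff.1 hx
    refine mem_sdiff.2 ⟨I.2 x hxI y hyx, fun hy => hxS ?_⟩
    obtain ⟨hyS, hymax⟩ := mem_filter.1 hy
    rwa [(mem_filter.1 hymax).2.eq_of_ge hxI hyx]⟩

theorem removeMax_val {I : OrderIdeals P} {S : Finset P} (hS : S ⊆ maxElems I.1) :
    (removeMax I S).1 = I.1 \ S := by
  show I.1 \ {x ∈ S | x ∈ maxElems I.1} = I.1 \ S
  rw [filter_true_of_mem fun x hx => hS hx]

theorem removeMax_singleton_val {I : OrderIdeals P} {m : P} (hm : m ∈ maxElems I.1) :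
    (removeMax I {m}).1 = I.1.erase m := by
  rw [removeMax_val (singleton_subset_iff.2 hm), sdiff_singleton_eq_erase]

theorem covRel_removeMax_singleton {I : OrderIdeals P} {m : P} (hm : m ∈ maxElems I.1) :
    CovRel (idealLE P) I (removeMax I {m}) := by
  have hval := removeMax_singleton_val hm
  have hmI := (mem_filter.1 hm).1
  refine ⟨fun x hx => ?_, fun h => ?_, fun Z hJZ hZI => ?_⟩
  · rw [hval] at hx
    exact mem_of_mem_erase hx
  · have := congrArg Subtype.val h
    rw [hval] at this
    exact notMem_erase m I.1 (by rw [this]; exact hmI)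
  · by_cases hmZ : m ∈ Z.1
    · refine Or.inr (idealLE_antisymm _ _ hZI fun x hxI => ?_)
      by_cases hxm : x = m
      · exact hxm ▸ hmZ
      · exact hJZ (hval ▸ mem_erase.2 ⟨hxm, hxI⟩)
    · refine Or.inl (idealLE_antisymm _ _ (fun x hxZ => ?_) hJZ)
      rw [hval]
      exact mem_erase.2 ⟨fun h => hmZ (h ▸ hxZ), hZI hxZ⟩

theorem exists_eq_removeMax_of_covRel {I J : OrderIdeals P} (h : CovRel (idealLE P) I J) :
    ∃ m ∈ maxElems I.1, J = removeMax I {m} := by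
  obtain ⟨hJI, hne, hbetween⟩ := h
  have hdiff : (I.1 \ J.1).Nonempty :=
    sdiff_nonempty.2 fun hIJ => hne (idealLE_antisymm _ _ hJI hIJ)
  obtain ⟨m, hm⟩ := (I.1 \ J.1).exists_maximal hdiff
  obtain ⟨hmI, hmJ⟩ := mem_sdiff.1 hm.1
  have hmax : m ∈ maxElems I.1 := mem_filter.2 ⟨hmI, hmI, fun z hzI hmz =>
    hm.2 (mem_sdiff.2 ⟨hzI, fun hzJ => hmJ (J.2 z hzJ m hmz)⟩) hmz⟩
  have hJZ : idealLE P J (removeMax I {m}) := fun x hx => by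
    rw [removeMax_singleton_val hmax]
    exact mem_erase.2 ⟨fun h => hmJ (h ▸ hx), hJI hx⟩
  have hcov := covRel_removeMax_singleton hmax
  exact ⟨m, hmax, ((hbetween _ hJZ hcov.1).resolve_right hcov.2.1).symm⟩

theorem covRel_iff {I J : OrderIdeals P} :
    CovRel (idealLE P) I J ↔ ∃ m ∈ maxElems I.1, J = removeMax I {m} :=
  ⟨exists_eq_removeMax_of_covRel, fun ⟨_, hm, hJ⟩ => hJ ▸ covRel_removeMax_singleton hm⟩

theorem covFinset_eq (I : OrderIdeals P) :
    covFinset (idealLE P) I = (maxElems I.1).image fun m => removeMax I {m} := by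
  ext J
  simp [covFinset, covRel_iff, eq_comm]

theorem injOn_removeMax_singleton (I : OrderIdeals P) :
    Set.InjOn (fun m => removeMax I {m}) (maxElems I.1 : Set P) := fun a ha b hb hab => by
  have := congrArg Subtype.val hab
  simp only [removeMax_singleton_val ha, removeMax_singleton_val hb] at this
  exact erase_injOn I.1 (mem_filter.1 ha).1 (mem_filter.1 hb).1 this

theorem meetOf_image_removeMax {I : OrderIdeals P} {S : Finset P} (hS : S ⊆ maxElems I.1) :
    meetOf (idealLE P) I (S.image fun m => removeMax I {m}) = removeMax I S := by
  refine meetOf_eq_of_isMeetOf idealLE_antisymm ⟨fun J hJ => ?_, fun Z hZ x hxZ => ?_⟩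
  · rw [idealLE, removeMax_val hS]
    rcases Set.mem_insert_iff.1 hJ with rfl | hJ
    · exact sdiff_subset
    · obtain ⟨m, hm, rfl⟩ := mem_image.1 (mem_coe.1 hJ)
      rw [removeMax_singleton_val (hS hm)]
      exact fun x hx => mem_erase.2 ⟨fun h => (mem_sdiff.1 hx).2 (h ▸ hm), (mem_sdiff.1 hx).1⟩
  · rw [removeMax_val hS]
    refine mem_sdiff.2 ⟨hZ I (Set.mem_insert _ _) hxZ, fun hxS => ?_⟩
    have := hZ _ (Set.mem_insert_of_mem _ (mem_coe.2 (mem_image_of_mem _ hxS))) hxZ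
    rw [removeMax_singleton_val (hS hxS)] at this
    exact notMem_erase x I.1 this

theorem sum_stepProb_mul (I : OrderIdeals P) (f : OrderIdeals P → ℝ≥0∞) :
    ∑ J, stepProb p (idealLE P) I J * f J =
      ∑ S ∈ (maxElems I.1).powerset, subsetWeight p (maxElems I.1) S * f (removeMax I S) := by
  have hinj := injOn_removeMax_singleton I
  simp_rw [stepProb, sum_mul, ite_mul, zero_mul]
  rw [sum_comm]
  simp_rw [sum_ite_eq, mem_univ, if_true]
  rw [covFinset_eq, powerset_image, sum_image (image_injOn_powerset_of_injOn hinj)]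
  refine sum_congr rfl fun S hS => ?_
  have hSM := mem_powerset.1 hS
  rw [meetOf_image_removeMax hSM, card_image_of_injOn (hinj.mono (coe_subset.2 hSM)),
    card_image_of_injOn hinj, subsetWeight]

theorem probIn_ne_botIdeal_eq_chainTail (hp0 : 0 < p) (hp1 : p ≤ 1) (t : ℕ) (I : OrderIdeals P) :
    probIn p (idealLE P) I t {J | J ≠ botIdeal P} = chainTail p I.1 t := by
  induction t generalizing I with
  | zero =>
    rw [probIn_zero, Set.mem_ofPred_eq, ne_botIdeal_iff]
    split_ifs with hI
    · exact (chainTail_zero hp0 hp1 hI).symm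
    · rw [not_nonempty_iff_eq_empty.1 hI, chainTail_empty]
  | succ t ih =>
    rw [probIn_succ, sum_congr rfl fun J _ => by rw [ih J], sum_stepProb_mul,
      chainTail_succ hp0 hp1]
    exact sum_congr rfl fun S hS => by rw [removeMax_val (mem_powerset.1 hS)]

end Ideals

end Ungarian

/-- Equality in distribution, as equality of tail probabilities: `∅` is absorbing, so `T > t`
exactly when the chain is not at `∅` at time `t`. -/
theorem thm7 (P : Type) [Fintype P] [PartialOrder P] (p : ℝ) (hp0 : 0 < p) (hp1 : p ≤ 1)
    (t : ℕ) :
    Ungarian.probIn p (fun A B : OrderIdeals P => A.1 ⊆ B.1) (topIdeal P) t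
        {I : OrderIdeals P | I ≠ botIdeal P} =
      ∑' g : P → ℕ,
        if t < (maxChains P).sup (fun C => ∑ x ∈ C, g x) then ∏ x : P, geomMass p (g x)
        else 0 := by
  simp only [← Ungarian.chainSup_univ]
  exact Ungarian.probIn_ne_botIdeal_eq_chainTail hp0 hp1 t (topIdeal P)
end
end

section
/- Let P be a finite poset, p ∈ (0,1], and J' an order ideal of P. Let T_{J(P)}(J') denote the number of steps for the Ungarian Markov chain with parameter p on J(P) started at J' to reach the empty ideal ∅, and let T(J(P)) denote the same quantity for the chain started at the maximum element P. Then for every t ≥ 0, P(T_{J(P)}(J') ≥ t) ≤ P(T(J(P)) ≥ t). -/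
/-!
Run the chains from all ideals at once: flip an independent `p`-coin for every element of `P`
and, from the ideal `x`, delete the maximal elements of `x` whose coin shows heads. This realizes
one step of the Ungarian chain on `J(P)`, because the elements covered by `x` are the ideals
`x \ {a}` with `a` maximal in `x` and the meet of several of them is `x` minus all those `a`.
The update preserves inclusion (a maximal element of `y` that lies in `x ⊆ y` is maximal in `x`),
so the chain is stochastically monotone; the nonempty ideals form an up-set, hence starting from
the top ideal maximizes the probability of not having reached `∅` yet.
-/

open scoped Classical ENNReal

noncomputable section

namespace Ungarian

open Finset

variable {L : Type*} [Fintype L] {p : ℝ} {le : L → L → Prop}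

def StochasticallyMonotone (p : ℝ) (le R : L → L → Prop) : Prop :=
  ∀ g : L → ℝ≥0∞, (∀ a b, R a b → g a ≤ g b) →
    ∀ x y, R x y → ∑ z, stepProb p le x z * g z ≤ ∑ z, stepProb p le y z * g z

theorem sum_walk_succ_mul (x : L) (t : ℕ) (g : L → ℝ≥0∞) :
    ∑ z, walk p le x (t + 1) z * g z =
      ∑ u, walk p le x t u * ∑ z, stepProb p le u z * g z := by
  simp only [walk, sum_mul, mul_sum, mul_assoc]
  exact sum_comm

theorem StochasticallyMonotone.sum_walk_mul_le {R : L → L → Prop}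
    (hK : StochasticallyMonotone p le R) {x y : L} (hxy : R x y) (t : ℕ) {g : L → ℝ≥0∞}
    (hg : ∀ a b, R a b → g a ≤ g b) :
    ∑ z, walk p le x t z * g z ≤ ∑ z, walk p le y t z * g z := by
  induction t generalizing g with
  | zero => simpa [walk] using hg x y hxy
  | succ t ih =>
    rw [sum_walk_succ_mul, sum_walk_succ_mul]
    exact ih (hK g hg)

theorem StochasticallyMonotone.probIn_le {R : L → L → Prop}
    (hK : StochasticallyMonotone p le R) {x y : L} (hxy : R x y) (t : ℕ) {S : Set L}
    (hS : ∀ a b, R a b → a ∈ S → b ∈ S) :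
    probIn p le x t S ≤ probIn p le y t S := by
  have hprob : ∀ x, probIn p le x t S = ∑ z, walk p le x t z * if z ∈ S then 1 else 0 := by
    intro x
    simp [probIn, sum_filter]
  rw [hprob, hprob]
  refine hK.sum_walk_mul_le hxy t fun a b hab => ?_
  by_cases ha : a ∈ S <;> simp [ha, hS a b hab]

end Ungarian

/-- `q ^ #B * r ^ (#U - #B)` is the law of the set `B` of heads among independent `q`-coins on
`U = s ∪ d`; a function of the heads in `s` only sees the coins on `s`. -/
theorem Finset.sum_powerset_union_mul_inter {α R : Type*} [DecidableEq α] [CommSemiring R]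
    {q r : R} (hqr : q + r = 1) (h : Finset α → R) (s : Finset α) {d : Finset α}
    (hsd : Disjoint s d) :
    ∑ B ∈ (s ∪ d).powerset, q ^ B.card * r ^ ((s ∪ d).card - B.card) * h (B ∩ s) =
      ∑ A ∈ s.powerset, q ^ A.card * r ^ (s.card - A.card) * h A := by
  induction d using Finset.induction_on with
  | empty =>
    refine sum_congr (by rw [union_empty]) fun B hB => ?_
    rw [inter_eq_left.2 (mem_powerset.1 hB), union_empty]
  | insert a d had ih =>
    obtain ⟨has, hsd⟩ := disjoint_insert_right.1 hsd
    have haU : a ∉ s ∪ d := by simp [has, had]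
    rw [union_insert, sum_powerset_insert haU, ← ih hsd, ← sum_add_distrib]
    refine sum_congr rfl fun B hB => ?_
    have hB : B ⊆ s ∪ d := mem_powerset.1 hB
    rw [card_insert_of_notMem haU, card_insert_of_notMem fun h => haU (hB h),
      insert_inter_of_notMem has, Nat.sub_add_comm (card_le_card hB), Nat.add_sub_add_right,
      ← one_mul (q ^ B.card * r ^ ((s ∪ d).card - B.card) * h (B ∩ s)), ← hqr]
    ring

namespace OrderIdeals

open Finset

variable {P : Type*} [Fintype P] [PartialOrder P]

abbrev Incl (P : Type*) [Fintype P] [PartialOrder P] : OrderIdeals P → OrderIdeals P → Prop :=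
  fun A B => A.1 ⊆ B.1

def maxElems (x : OrderIdeals P) : Finset P :=
  x.1.filter fun a => ∀ b ∈ x.1, a ≤ b → b = a

theorem mem_maxElems {x : OrderIdeals P} {a : P} :
    a ∈ x.maxElems ↔ a ∈ x.1 ∧ ∀ b ∈ x.1, a ≤ b → b = a :=
  mem_filter

def removeMax (x : OrderIdeals P) (B : Finset P) : OrderIdeals P :=
  ⟨x.1 \ (B ∩ x.maxElems), fun a ha b hba => by
    rw [mem_sdiff] at ha ⊢
    refine ⟨x.2 a ha.1 b hba, fun hb => ha.2 ?_⟩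
    rwa [(mem_maxElems.1 (mem_inter.1 hb).2).2 a ha.1 hba]⟩

theorem removeMax_val (x : OrderIdeals P) (B : Finset P) :
    (x.removeMax B).1 = x.1 \ (B ∩ x.maxElems) :=
  rfl

theorem removeMax_subset (x : OrderIdeals P) (B : Finset P) : (x.removeMax B).1 ⊆ x.1 :=
  sdiff_subset

theorem removeMax_mono {x y : OrderIdeals P} (hxy : x.1 ⊆ y.1) (B : Finset P) :
    (x.removeMax B).1 ⊆ (y.removeMax B).1 := by
  intro a ha
  rw [removeMax_val, mem_sdiff, mem_inter, mem_maxElems] at ha ⊢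
  exact ⟨hxy ha.1, fun ⟨haB, _, hmax⟩ =>
    ha.2 ⟨haB, ha.1, fun b hb hab => hmax b (hxy hb) hab⟩⟩

theorem removeMax_inter_maxElems (x : OrderIdeals P) (B : Finset P) :
    x.removeMax (B ∩ x.maxElems) = x.removeMax B :=
  Subtype.ext <| by rw [removeMax_val, removeMax_val, inter_assoc, inter_self]

theorem removeMax_singleton_val {x : OrderIdeals P} {a : P} (ha : a ∈ x.maxElems) :
    (x.removeMax {a}).1 = x.1.erase a := by
  rw [removeMax_val, singleton_inter_of_mem ha, sdiff_singleton_eq_erase]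

theorem removeMax_singleton_ne {x : OrderIdeals P} {a : P} (ha : a ∈ x.maxElems) :
    x.removeMax {a} ≠ x := fun h => by
  have hax : a ∈ (x.removeMax {a}).1 := by rw [h]; exact (mem_maxElems.1 ha).1
  rw [removeMax_singleton_val ha] at hax
  exact notMem_erase a x.1 hax

theorem covRel_removeMax_singleton {x : OrderIdeals P} {a : P} (ha : a ∈ x.maxElems) :
    Ungarian.CovRel (Incl P) x (x.removeMax {a}) := by
  have hval := removeMax_singleton_val ha
  refine ⟨?_, removeMax_singleton_ne ha, fun z hz hzx => ?_⟩
  · exact removeMax_subset x {a}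
  change (x.removeMax {a}).1 ⊆ z.1 at hz
  change z.1 ⊆ x.1 at hzx
  rw [hval] at hz
  by_cases haz : a ∈ z.1
  · refine Or.inr (Subtype.ext (subset_antisymm hzx fun b hb => ?_))
    by_cases hba : b = a
    · exact hba ▸ haz
    · exact hz (mem_erase.2 ⟨hba, hb⟩)
  · refine Or.inl (Subtype.ext ?_)
    rw [hval]
    refine subset_antisymm (fun b hb => mem_erase.2 ⟨?_, hzx hb⟩) hz
    rintro rfl
    exact haz hb

/-- A cover `y ⋖ x` removes a maximal element of `x \ y`, which is maximal in `x` since `y` is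
down-closed. -/
theorem exists_removeMax_singleton_of_covRel {x y : OrderIdeals P}
    (h : Ungarian.CovRel (Incl P) x y) : ∃ a ∈ x.maxElems, x.removeMax {a} = y := by
  obtain ⟨hyx, hne, hcov⟩ := h
  have hxy : ¬x.1 ⊆ y.1 := fun h => hne (Subtype.ext (subset_antisymm hyx h))
  obtain ⟨a, ha, hamax⟩ := exists_maximal (sdiff_nonempty.2 hxy)
  obtain ⟨hax, hay⟩ := mem_sdiff.1 ha
  have haM : a ∈ x.maxElems := mem_maxElems.2 ⟨hax, fun b hb hab =>
    le_antisymm (hamax (mem_sdiff.2 ⟨hb, fun hby => hay (y.2 b hby a hab)⟩) hab) hab⟩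
  have hval := removeMax_singleton_val haM
  refine ⟨a, haM, (hcov _ ?_ ?_).resolve_right (removeMax_singleton_ne haM)⟩
  · change y.1 ⊆ (x.removeMax {a}).1
    rw [hval]
    intro b hb
    refine mem_erase.2 ⟨?_, hyx hb⟩
    rintro rfl
    exact hay hb
  · exact removeMax_subset x {a}

theorem covFinset_eq_image (x : OrderIdeals P) :
    Ungarian.covFinset (Incl P) x = x.maxElems.image fun a => x.removeMax {a} := by
  ext y
  simp only [Ungarian.covFinset, mem_filter, mem_univ, true_and, mem_image]
  exact ⟨exists_removeMax_singleton_of_covRel,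
    fun ⟨a, ha, hy⟩ => hy ▸ covRel_removeMax_singleton ha⟩

theorem injOn_removeMax_singleton (x : OrderIdeals P) :
    Set.InjOn (fun a => x.removeMax {a}) x.maxElems := by
  intro a ha b hb hab
  have h := congrArg Subtype.val hab
  simp only [removeMax_singleton_val ha, removeMax_singleton_val hb] at h
  by_contra hne
  exact notMem_erase a x.1 (h ▸ mem_erase.2 ⟨hne, (mem_maxElems.1 ha).1⟩)

theorem isMeetOf_removeMax (x : OrderIdeals P) (A : Finset P) :
    Ungarian.IsMeetOf (Incl P)
      (insert x ↑(A.image fun a => x.removeMax {a})) (x.removeMax A) := by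
  simp only [Ungarian.IsMeetOf, Set.forall_mem_insert, coe_image, Set.forall_mem_image]
  refine ⟨⟨sdiff_subset, fun a haA => ?_⟩, fun z ⟨hzx, hz⟩ b hb => ?_⟩
  · exact sdiff_subset_sdiff subset_rfl
      (inter_subset_inter (singleton_subset_iff.2 haA) subset_rfl)
  refine mem_sdiff.2 ⟨hzx hb, fun hbA => ?_⟩
  obtain ⟨hbB, hbM⟩ := mem_inter.1 hbA
  exact (mem_sdiff.1 (hz hbB hb)).2 (mem_inter.2 ⟨mem_singleton_self b, hbM⟩)

theorem meetOf_image_removeMax (x : OrderIdeals P) (A : Finset P) :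
    Ungarian.meetOf (Incl P) x (A.image fun a => x.removeMax {a}) = x.removeMax A := by
  have hmeet := isMeetOf_removeMax x A
  rw [Ungarian.meetOf, dif_pos ⟨_, hmeet⟩]
  obtain ⟨h₁, h₂⟩ := (⟨_, hmeet⟩ : ∃ m, Ungarian.IsMeetOf (Incl P) _ m).choose_spec
  exact Subtype.ext (subset_antisymm (hmeet.2 _ h₁) (h₂ _ hmeet.1))

theorem stepProb_eq_sum_maxElems (p : ℝ) (x z : OrderIdeals P) :
    Ungarian.stepProb p (Incl P) x z =
      ∑ A ∈ x.maxElems.powerset, if x.removeMax A = z then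
        ENNReal.ofReal (p ^ A.card * (1 - p) ^ (x.maxElems.card - A.card)) else 0 := by
  have hinj := injOn_removeMax_singleton x
  rw [Ungarian.stepProb, covFinset_eq_image, powerset_image,
    sum_image (image_injOn_powerset_of_injOn hinj), card_image_of_injOn hinj]
  refine sum_congr rfl fun A hA => ?_
  rw [meetOf_image_removeMax, card_image_of_injOn (hinj.mono (coe_subset.2 (mem_powerset.1 hA)))]

theorem sum_stepProb_mul_eq {p : ℝ} (hp0 : 0 ≤ p) (hp1 : p ≤ 1) (x : OrderIdeals P)
    (g : OrderIdeals P → ℝ≥0∞) :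
    ∑ z, Ungarian.stepProb p (Incl P) x z * g z =
      ∑ B ∈ (univ : Finset P).powerset, ENNReal.ofReal p ^ B.card *
        ENNReal.ofReal (1 - p) ^ ((univ : Finset P).card - B.card) * g (x.removeMax B) := by
  have hweight : ∀ k m : ℕ, ENNReal.ofReal (p ^ k * (1 - p) ^ m) =
      ENNReal.ofReal p ^ k * ENNReal.ofReal (1 - p) ^ m := fun k m => by
    rw [ENNReal.ofReal_mul (pow_nonneg hp0 k), ENNReal.ofReal_pow hp0,
      ENNReal.ofReal_pow (sub_nonneg.2 hp1)]
  have hcoin : ENNReal.ofReal p + ENNReal.ofReal (1 - p) = 1 := by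
    rw [← ENNReal.ofReal_add hp0 (sub_nonneg.2 hp1), add_sub_cancel, ENNReal.ofReal_one]
  have hmarg := sum_powerset_union_mul_inter hcoin (fun A => g (x.removeMax A)) x.maxElems
    (disjoint_sdiff (t := univ))
  rw [union_sdiff_of_subset (subset_univ _)] at hmarg
  simp only [removeMax_inter_maxElems] at hmarg
  simp only [stepProb_eq_sum_maxElems, hweight, sum_mul, ite_mul, zero_mul]
  rw [sum_comm, hmarg]
  exact sum_congr rfl fun A _ => by rw [sum_ite_eq, if_pos (mem_univ _)]

theorem stochasticallyMonotone_incl {p : ℝ} (hp0 : 0 ≤ p) (hp1 : p ≤ 1) :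
    Ungarian.StochasticallyMonotone p (Incl P) (Incl P) := by
  intro g hg x y hxy
  rw [sum_stepProb_mul_eq hp0 hp1, sum_stepProb_mul_eq hp0 hp1]
  exact sum_le_sum fun B _ => mul_le_mul_right (hg _ _ (removeMax_mono hxy B)) _

theorem ne_bot_of_subset {a b : OrderIdeals P} (hab : a.1 ⊆ b.1) (ha : a ≠ botIdeal P) :
    b ≠ botIdeal P := by
  rintro rfl
  exact ha (Subtype.ext (subset_empty.1 hab))

end OrderIdeals

/-- `∅` is absorbing, so `probIn … t {I | I ≠ ∅}` is `P(T > t)`, i.e. `P(T ≥ t + 1)`. -/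
theorem thm8 (P : Type) [Fintype P] [PartialOrder P] (p : ℝ) (hp0 : 0 < p) (hp1 : p ≤ 1)
    (J' : OrderIdeals P) (t : ℕ) :
    Ungarian.probIn p (fun A B : OrderIdeals P => A.1 ⊆ B.1) J' t
        {I : OrderIdeals P | I ≠ botIdeal P} ≤
      Ungarian.probIn p (fun A B : OrderIdeals P => A.1 ⊆ B.1) (topIdeal P) t
        {I : OrderIdeals P | I ≠ botIdeal P} :=
  (OrderIdeals.stochasticallyMonotone_incl hp0.le hp1).probIn_le (Finset.subset_univ J'.1) t
    fun _ _ hab => OrderIdeals.ne_bot_of_subset hab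
end
end

section
/- Fix p ∈ (0,1], a positive integer n, and σ ∈ S_n. Let T_{S_n}(σ) be the number of steps for the Ungarian Markov chain with parameter p on S_n (right weak order) started at σ to reach the identity permutation. Then for every integer z > n²/p, P(T_{S_n}(σ) ≥ z) ≤ exp(−zp/8). -/
/-!
The potential `2 ^ inv(x)` contracts in expectation by the factor `1 - p / 2` at every step away
from the identity: with probability at least `p` the chain moves to the meet of a nonempty set
of lower covers, which has strictly fewer inversions, so the potential at least halves. Since
`inv(σ) ≤ n(n-1)/2`, Markov's inequality gives
`P(X_{z-1} ≠ 1) ≤ 2 ^ (n(n-1)/2) (1 - p/2) ^ (z-1) ≤ exp(-zp/8)` once `zp > n²`.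

The meets exist because the weak order is inclusion of inversion sets: the meet of `x` with
its lower covers `x s_i`, `i ∈ J`, is `x w₀(J)`, which reverses every run of consecutive
positions of `J`. Inclusion of inversion sets implies the order since, when `inv(u) ⊆ inv(x)`
and `u ≠ x`, any descent of `u⁻¹ x` is a descent of `x` that can be undone while staying above
`u`.
-/

open scoped Classical ENNReal

noncomputable section

/-- `τ` is covered by `σ` in the right weak order on `S_n`:
`τ = σ ∘ (i i+1)` for a descent `i` of `σ`. -/
def wCov {n : ℕ} (σ τ : Equiv.Perm (Fin n)) : Prop :=
  ∃ i : ℕ, ∃ h : i + 1 < n,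
    σ ⟨i + 1, h⟩ < σ ⟨i, Nat.lt_of_succ_lt h⟩ ∧
    τ = σ * Equiv.swap ⟨i, Nat.lt_of_succ_lt h⟩ ⟨i + 1, h⟩

/-- The right weak order on `S_n`: reflexive-transitive closure of the covering relations. -/
def weakLe {n : ℕ} (τ σ : Equiv.Perm (Fin n)) : Prop :=
  Relation.ReflTransGen (fun a b => wCov a b) σ τ


namespace Ungarian

variable {L : Type*} [Fintype L] {le : L → L → Prop} {p : ℝ}

lemma isMeetOf_meetOf {x : L} {T : Finset L} (h : ∃ m, IsMeetOf le (insert x (T : Set L)) m) :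
    IsMeetOf le (insert x (T : Set L)) (meetOf le x T) := by
  rw [meetOf, dif_pos h]
  exact h.choose_spec

lemma meetOf_empty (hrefl : ∀ a, le a a) (hanti : ∀ a b, le a b → le b a → a = b) (x : L) :
    meetOf le x ∅ = x := by
  have hx : IsMeetOf le (insert x ((∅ : Finset L) : Set L)) x :=
    ⟨by simp [hrefl], fun z hz => hz x (Set.mem_insert _ _)⟩
  have hm := isMeetOf_meetOf ⟨x, hx⟩
  exact hanti _ _ (hm.1 x (Set.mem_insert _ _)) (hm.2 x hx.1)

lemma sum_stepProb_mul_s10 (x : L) (f : L → ℝ≥0∞) :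
    ∑ y, stepProb p le x y * f y = ∑ T ∈ (covFinset le x).powerset,
      ENNReal.ofReal (p ^ T.card * (1 - p) ^ ((covFinset le x).card - T.card)) *
        f (meetOf le x T) := by
  simp only [stepProb, Finset.sum_mul, ite_mul, zero_mul]
  rw [Finset.sum_comm]
  simp

/-- With probability at most `1 - p` the chain stays put; otherwise the potential `2 ^ rk` at
least halves. -/
lemma sum_stepProb_mul_two_pow_le (hp0 : 0 ≤ p) (hp1 : p ≤ 1) (rk : L → ℕ) {x : L}
    (hx : meetOf le x ∅ = x) (hcov : (covFinset le x).Nonempty)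
    (hrk : ∀ T ⊆ covFinset le x, T.Nonempty → rk (meetOf le x T) < rk x) :
    ∑ y, stepProb p le x y * 2 ^ rk y ≤ ENNReal.ofReal (1 - p / 2) * 2 ^ rk x := by
  set S := covFinset le x
  set q : Finset L → ℝ := fun T => p ^ T.card * (1 - p) ^ (S.card - T.card) with hq
  have hq0 : ∀ T, 0 ≤ q T := fun T => by positivity
  have hterm : ∀ T, ENNReal.ofReal (q T) * 2 ^ rk (meetOf le x T) =
      ENNReal.ofReal (q T * 2 ^ rk (meetOf le x T)) := fun T => by
    rw [ENNReal.ofReal_mul (hq0 T), ENNReal.ofReal_pow zero_le_two, ENNReal.ofReal_ofNat]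
  rw [sum_stepProb_mul_s10, Finset.sum_congr rfl fun T _ => hterm T,
    ← ENNReal.ofReal_sum_of_nonneg fun T _ => by positivity, ← ENNReal.ofReal_ofNat 2,
    ← ENNReal.ofReal_pow zero_le_two, ← ENNReal.ofReal_mul (by linarith)]
  apply ENNReal.ofReal_le_ofReal
  have hempty : q ∅ ≤ 1 - p := by
    simpa [hq] using pow_le_of_le_one (by linarith) (by linarith)
      (Finset.card_pos.2 hcov).ne'
  have hhalf : ∀ T ∈ S.powerset.erase ∅,
      q T * 2 ^ rk (meetOf le x T) ≤ q T * (2 ^ rk x / 2) := by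
    intro T hT
    obtain ⟨hne, hTS⟩ := Finset.mem_erase.1 hT
    have hlt := hrk T (Finset.mem_powerset.1 hTS) (Finset.nonempty_iff_ne_empty.2 hne)
    gcongr
    rw [le_div_iff₀ two_pos, ← pow_succ]
    exact pow_le_pow_right₀ one_le_two hlt
  have htotal : ∑ T ∈ S.powerset, q T = 1 := by
    rw [Finset.sum_pow_mul_eq_add_pow, add_sub_cancel, one_pow]
  rw [← Finset.add_sum_erase _ _ (Finset.empty_mem_powerset S)] at htotal ⊢
  have hrest := Finset.sum_le_sum hhalf
  rw [← Finset.sum_mul] at hrest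
  rw [hx]
  have hpos : (0 : ℝ) < 2 ^ rk x := by positivity
  nlinarith

lemma sum_walk_mul_le {V : L → ℝ≥0∞} {r : ℝ≥0∞}
    (hV : ∀ x, ∑ y, stepProb p le x y * V y ≤ r * V x) (x : L) (t : ℕ) :
    ∑ y, walk p le x t y * V y ≤ r ^ t * V x := by
  induction t with
  | zero => simp [walk]
  | succ t ih =>
    calc ∑ y, walk p le x (t + 1) y * V y
        = ∑ z, walk p le x t z * ∑ y, stepProb p le z y * V y := by
          simp only [walk, Finset.sum_mul, Finset.mul_sum, mul_assoc]
          exact Finset.sum_comm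
      _ ≤ ∑ z, walk p le x t z * (r * V z) := by gcongr with z; exact hV z
      _ = r * ∑ z, walk p le x t z * V z := by
          rw [Finset.mul_sum]; exact Finset.sum_congr rfl fun z _ => by ring
      _ ≤ r ^ (t + 1) * V x := by rw [pow_succ', mul_assoc]; gcongr

lemma probIn_le_sum_walk_mul {V : L → ℝ≥0∞} {S : Set L} (hV : ∀ y ∈ S, 1 ≤ V y)
    (x : L) (t : ℕ) : probIn p le x t S ≤ ∑ y, walk p le x t y * V y :=
  calc probIn p le x t S ≤ ∑ y ∈ Finset.univ.filter (· ∈ S), walk p le x t y * V y :=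
        Finset.sum_le_sum fun y hy =>
          le_mul_of_one_le_right' (hV y (Finset.mem_filter.1 hy).2)
    _ ≤ ∑ y, walk p le x t y * V y := Finset.sum_le_sum_of_subset (Finset.filter_subset _ _)

end Ungarian

namespace Equiv.Perm

variable {n : ℕ}

def inversions (w : Perm (Fin n)) : Finset (Fin n × Fin n) :=
  Finset.univ.filter fun q => q.1 < q.2 ∧ w⁻¹ q.2 < w⁻¹ q.1

lemma mem_inversions {w : Perm (Fin n)} {a b : Fin n} :
    (a, b) ∈ inversions w ↔ a < b ∧ w⁻¹ b < w⁻¹ a := by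
  simp [inversions]

lemma card_inversions_le (w : Perm (Fin n)) : (inversions w).card ≤ n.choose 2 := by
  calc (inversions w).card ≤ (Finset.univ.filter fun q : Fin n × Fin n => q.1 < q.2).card :=
        Finset.card_le_card fun q hq => by
          simp only [inversions, Finset.mem_filter] at hq ⊢
          exact ⟨hq.1, hq.2.1⟩
    _ = n.choose 2 := by rw [Fintype.card_product_filter_lt, Fintype.card_fin]

lemma exists_descent_of_ne_one {x : Perm (Fin n)} (hx : x ≠ 1) :
    ∃ (i : ℕ) (h : i + 1 < n), x ⟨i + 1, h⟩ < x ⟨i, Nat.lt_of_succ_lt h⟩ := by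
  by_contra! hno
  apply hx
  obtain _ | m := n
  · exact Subsingleton.elim _ _
  have hmono : StrictMono x := Fin.strictMono_iff_lt_succ.2 fun i =>
    (hno i (by simp)).lt_of_ne (x.injective.ne (by simp [Fin.ext_iff]))
  exact Equiv.ext (congrFun hmono.eq_id)

lemma swap_lt_swap_iff {a b i j : Fin n} (hab : (b : ℕ) = a + 1)
    (h₁ : ¬(i = a ∧ j = b)) (h₂ : ¬(i = b ∧ j = a)) :
    swap a b j < swap a b i ↔ j < i := by
  simp only [swap_apply_def]
  split_ifs <;> simp_all [← Fin.val_fin_lt, Fin.ext_iff] <;> omega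

lemma inversions_mul_swap {x : Perm (Fin n)} {a b : Fin n} (hab : (b : ℕ) = a + 1)
    (hd : x b < x a) : inversions (x * swap a b) = (inversions x).erase (x b, x a) := by
  ext ⟨u, v⟩
  simp only [Finset.mem_erase, mem_inversions, mul_inv_rev, swap_inv, Perm.mul_apply, ne_eq,
    Prod.mk.injEq]
  by_cases hp : u = x b ∧ v = x a
  · obtain ⟨rfl, rfl⟩ := hp
    simp [← Fin.val_fin_lt, hab]
  by_cases hp' : u = x a ∧ v = x b
  · obtain ⟨rfl, rfl⟩ := hp'
    simp [hd.not_gt]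
  rw [swap_lt_swap_iff hab (by rintro ⟨h1, h2⟩; simp [← h1, ← h2] at hp')
    (by rintro ⟨h1, h2⟩; simp [← h1, ← h2] at hp)]
  tauto

lemma pair_mem_inversions {x : Perm (Fin n)} {a b : Fin n} (hab : a < b) (hd : x b < x a) :
    (x b, x a) ∈ inversions x := by
  simpa [mem_inversions] using ⟨hd, hab⟩

end Equiv.Perm

open Equiv Equiv.Perm

section WeakOrder

variable {n : ℕ}

lemma inversions_ssubset_of_wCov {x τ : Perm (Fin n)} (h : wCov x τ) :
    inversions τ ⊂ inversions x := by
  obtain ⟨i, hi, hd, rfl⟩ := h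
  rw [inversions_mul_swap rfl hd]
  exact Finset.erase_ssubset (pair_mem_inversions (by simp [Fin.lt_def]) hd)

lemma card_inversions_add_one_of_wCov {x τ : Perm (Fin n)} (h : wCov x τ) :
    (inversions τ).card + 1 = (inversions x).card := by
  obtain ⟨i, hi, hd, rfl⟩ := h
  rw [inversions_mul_swap rfl hd,
    Finset.card_erase_add_one (pair_mem_inversions (by simp [Fin.lt_def]) hd)]

lemma inversions_subset_of_weakLe {u x : Perm (Fin n)} (h : weakLe u x) :
    inversions u ⊆ inversions x := by
  induction h with
  | refl => exact subset_rfl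
  | tail _ hbc ih => exact (inversions_ssubset_of_wCov hbc).subset.trans ih

lemma card_inversions_lt_of_weakLe {u x : Perm (Fin n)} (h : weakLe u x) (hne : u ≠ x) :
    (inversions u).card < (inversions x).card := by
  rcases Relation.ReflTransGen.cases_head h with rfl | ⟨b, hxb, hbu⟩
  · exact absurd rfl hne
  · exact (Finset.card_le_card (inversions_subset_of_weakLe hbu)).trans_lt
      (Finset.card_lt_card (inversions_ssubset_of_wCov hxb))

lemma weakLe_antisymm {u x : Perm (Fin n)} (h₁ : weakLe u x) (h₂ : weakLe x u) : u = x := by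
  by_contra hne
  exact (card_inversions_lt_of_weakLe h₁ hne).not_gt
    (card_inversions_lt_of_weakLe h₂ (Ne.symm hne))

/-- A descent of `u⁻¹ * x` is a descent of `x` whose inversion `u` lacks. -/
lemma exists_descent_pair_notMem_inversions {u x : Perm (Fin n)}
    (hsub : inversions u ⊆ inversions x) (hne : u ≠ x) :
    ∃ (i : ℕ) (h : i + 1 < n), x ⟨i + 1, h⟩ < x ⟨i, Nat.lt_of_succ_lt h⟩ ∧
      (x ⟨i + 1, h⟩, x ⟨i, Nat.lt_of_succ_lt h⟩) ∉ inversions u := by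
  obtain ⟨i, h, hy⟩ := exists_descent_of_ne_one (x := u⁻¹ * x)
    (by rwa [ne_eq, inv_mul_eq_one])
  simp only [Perm.mul_apply] at hy
  refine ⟨i, h, lt_of_le_of_ne ?_ (x.injective.ne (by simp)), ?_⟩
  · by_contra! hlt
    have hmem := hsub (mem_inversions.2 ⟨hlt, hy⟩)
    simp only [mem_inversions, Perm.coe_inv, symm_apply_apply, Fin.mk_lt_mk] at hmem
    omega
  · rw [mem_inversions]
    exact fun h' => h'.2.asymm hy

theorem weakLe_of_inversions_subset {u x : Perm (Fin n)} (h : inversions u ⊆ inversions x) :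
    weakLe u x := by
  by_cases hne : u = x
  · exact hne ▸ Relation.ReflTransGen.refl
  obtain ⟨i, hi, hd, hnot⟩ := exists_descent_pair_notMem_inversions h hne
  have hsub :
      inversions u ⊆ inversions (x * swap ⟨i, Nat.lt_of_succ_lt hi⟩ ⟨i + 1, hi⟩) := by
    rw [inversions_mul_swap rfl hd]
    exact fun q hq => Finset.mem_erase.2 ⟨fun he => hnot (he ▸ hq), h hq⟩
  exact .head ⟨i, hi, hd, rfl⟩ (weakLe_of_inversions_subset hsub)
termination_by (inversions x).card
decreasing_by exact Finset.card_lt_card (inversions_ssubset_of_wCov ⟨i, hi, hd, rfl⟩)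

theorem weakLe_iff_inversions_subset {u x : Perm (Fin n)} :
    weakLe u x ↔ inversions u ⊆ inversions x :=
  ⟨inversions_subset_of_weakLe, weakLe_of_inversions_subset⟩

lemma mem_covFinset_weakLe {x τ : Perm (Fin n)} :
    τ ∈ Ungarian.covFinset weakLe x ↔ wCov x τ := by
  rw [Ungarian.covFinset, Finset.mem_filter]
  simp only [Finset.mem_univ, true_and, Ungarian.CovRel]
  constructor
  · rintro ⟨hle, hne, hmin⟩
    rcases Relation.ReflTransGen.cases_head hle with rfl | ⟨b, hxb, hbτ⟩
    · exact absurd rfl hne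
    · rcases hmin b hbτ (.single hxb) with rfl | rfl
      · exact hxb
      · exact absurd rfl (inversions_ssubset_of_wCov hxb).ne
  · intro hc
    have hcard := card_inversions_add_one_of_wCov hc
    refine ⟨.single hc, fun he => by simp [he] at hcard, fun w hτw hwx => ?_⟩
    by_contra! hw
    have h₁ := card_inversions_lt_of_weakLe hτw (Ne.symm hw.1)
    have h₂ := card_inversions_lt_of_weakLe hwx hw.2
    omega

lemma covFinset_weakLe_one : Ungarian.covFinset weakLe (1 : Perm (Fin n)) = ∅ :=
  Finset.eq_empty_of_forall_notMem fun τ hτ => by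
    obtain ⟨i, h, hd, -⟩ := mem_covFinset_weakLe.1 hτ
    simp [Fin.lt_def] at hd

end WeakOrder

lemma Fin.lt_of_forall_apply_succ_lt {n : ℕ} {α : Type*} [Preorder α] {f : Fin n → α}
    {a b : Fin n} (hab : a < b)
    (h : ∀ (i : ℕ) (hi : i + 1 < n), (a : ℕ) ≤ i → i < b →
      f ⟨i + 1, hi⟩ < f ⟨i, Nat.lt_of_succ_lt hi⟩) :
    f b < f a := by
  obtain ⟨b, hb⟩ := b
  change (a : ℕ) < b at hab
  induction b with
  | zero => omega
  | succ b ih =>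
    have hstep := h b hb (by omega) (by simp)
    rcases (Nat.lt_succ_iff.1 hab).eq_or_lt with heq | hlt
    · simpa [← heq] using hstep
    · exact hstep.trans (ih _ (fun i hi hai hib => h i hi hai (by simp at hib ⊢; omega)) hlt)

lemma Tuple.inv_sort_lt_inv_sort_iff {n : ℕ} {α : Type*} [LinearOrder α] {f : Fin n → α}
    (hf : Function.Injective f) {u v : Fin n} :
    (Tuple.sort f)⁻¹ u < (Tuple.sort f)⁻¹ v ↔ f u < f v := by
  have hs : StrictMono (f ∘ Tuple.sort f) :=
    (Tuple.monotone_sort f).strictMono_of_injective (hf.comp (Tuple.sort f).injective)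
  simpa using (hs.lt_iff_lt (a := (Tuple.sort f)⁻¹ u) (b := (Tuple.sort f)⁻¹ v)).symm

section Meet

variable {n : ℕ} (x : Perm (Fin n)) (T : Finset (Perm (Fin n)))

def IsSelectedDescent (i : ℕ) : Prop :=
  ∃ h : i + 1 < n, x ⟨i + 1, h⟩ < x ⟨i, Nat.lt_of_succ_lt h⟩ ∧
    x * swap ⟨i, Nat.lt_of_succ_lt h⟩ ⟨i + 1, h⟩ ∈ T

/-- Two positions lie in the same maximal run of selected descents iff they have the same
block index. -/
def blockIndex (k : ℕ) : ℕ :=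
  ((Finset.range k).filter fun i => ¬ IsSelectedDescent x T i).card

lemma blockIndex_mono : Monotone (blockIndex x T) := fun _ _ hab =>
  Finset.card_le_card (Finset.filter_subset_filter _ (Finset.range_mono hab))

lemma blockIndex_succ_of_isSelectedDescent {i : ℕ} (h : IsSelectedDescent x T i) :
    blockIndex x T (i + 1) = blockIndex x T i := by
  rw [blockIndex, Finset.range_add_one, Finset.filter_insert, if_neg (not_not.2 h)]
  rfl

lemma isSelectedDescent_of_blockIndex_eq {a b i : ℕ} (hai : a ≤ i) (hib : i < b)
    (h : blockIndex x T a = blockIndex x T b) : IsSelectedDescent x T i := by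
  by_contra hi
  have hsucc : blockIndex x T (i + 1) = blockIndex x T i + 1 := by
    rw [blockIndex, Finset.range_add_one, Finset.filter_insert, if_pos hi,
      Finset.card_insert_of_notMem (by simp)]
    rfl
  have h₁ := blockIndex_mono x T hai
  have h₂ := blockIndex_mono x T (show i + 1 ≤ b from hib)
  omega

def meetKey (v : Fin n) : ℕ ×ₗ Fin n := toLex (blockIndex x T (x⁻¹ v), v)

/-- Sorting the values by block and then by value reverses every run of selected descents
of `x`: this is `x` times the longest element of the parabolic subgroup generated by the
selected adjacent transpositions. -/
def meetPerm : Perm (Fin n) := Tuple.sort (meetKey x T)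

variable {x T}

lemma mem_inversions_meetPerm {u v : Fin n} :
    (u, v) ∈ inversions (meetPerm x T) ↔
      u < v ∧ blockIndex x T (x⁻¹ v) < blockIndex x T (x⁻¹ u) := by
  rw [mem_inversions, meetPerm,
    Tuple.inv_sort_lt_inv_sort_iff fun a b h => congrArg (fun k => (ofLex k).2) h]
  simp only [meetKey, Prod.Lex.toLex_lt_toLex]
  constructor
  · rintro ⟨huv, h | ⟨-, hvu⟩⟩
    · exact ⟨huv, h⟩
    · exact absurd hvu huv.asymm
  · rintro ⟨huv, h⟩
    exact ⟨huv, Or.inl h⟩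

lemma inversions_meetPerm_subset : inversions (meetPerm x T) ⊆ inversions x := by
  rintro ⟨u, v⟩ h
  rw [mem_inversions_meetPerm] at h
  exact mem_inversions.2 ⟨h.1, lt_of_not_ge fun hle =>
    h.2.not_ge (blockIndex_mono x T (Fin.le_iff_val_le_val.1 hle))⟩

lemma pair_notMem_inversions_meetPerm {i : ℕ} (hi : IsSelectedDescent x T i) :
    (x ⟨i + 1, hi.1⟩, x ⟨i, Nat.lt_of_succ_lt hi.1⟩) ∉ inversions (meetPerm x T) := by
  simp [mem_inversions_meetPerm, blockIndex_succ_of_isSelectedDescent x T hi]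

lemma inversions_subset_inversions_meetPerm {w : Perm (Fin n)}
    (hwx : inversions w ⊆ inversions x)
    (hw : ∀ i (hi : IsSelectedDescent x T i),
      (x ⟨i + 1, hi.1⟩, x ⟨i, Nat.lt_of_succ_lt hi.1⟩) ∉ inversions w) :
    inversions w ⊆ inversions (meetPerm x T) := by
  rintro ⟨u, v⟩ huv
  obtain ⟨hlt, hwvu⟩ := mem_inversions.1 huv
  have hxvu := (mem_inversions.1 (hwx huv)).2
  refine mem_inversions_meetPerm.2
    ⟨hlt, (blockIndex_mono x T (Fin.le_iff_val_le_val.1 hxvu.le)).lt_of_ne fun heq => ?_⟩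
  -- inside a run of selected descents, `w⁻¹ * x` is decreasing
  have hdec : (w⁻¹ * x) (x⁻¹ u) < (w⁻¹ * x) (x⁻¹ v) :=
    Fin.lt_of_forall_apply_succ_lt hxvu fun i hi hai hib => by
      have hsel := isSelectedDescent_of_blockIndex_eq x T hai hib heq
      have hnot := hw i hsel
      rw [mem_inversions, not_and, not_lt] at hnot
      exact (hnot hsel.2.1).lt_of_ne (by simp)
  have hwuv : w⁻¹ u < w⁻¹ v := by simpa using hdec
  exact hwuv.asymm hwvu

theorem isMeetOf_meetPerm (hT : T ⊆ Ungarian.covFinset weakLe x) :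
    Ungarian.IsMeetOf weakLe (insert x (T : Set (Perm (Fin n)))) (meetPerm x T) := by
  have hsel : ∀ τ ∈ T, ∃ (i : ℕ) (hi : IsSelectedDescent x T i),
      τ = x * swap ⟨i, Nat.lt_of_succ_lt hi.1⟩ ⟨i + 1, hi.1⟩ := by
    intro τ hτ
    obtain ⟨i, h, hd, rfl⟩ := mem_covFinset_weakLe.1 (hT hτ)
    exact ⟨i, ⟨h, hd, hτ⟩, rfl⟩
  simp only [Ungarian.IsMeetOf, Set.forall_mem_insert, Finset.mem_coe,
    weakLe_iff_inversions_subset]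
  refine ⟨⟨inversions_meetPerm_subset, fun τ hτ => ?_⟩, fun w ⟨hwx, hwT⟩ => ?_⟩
  · obtain ⟨i, hi, rfl⟩ := hsel τ hτ
    rw [inversions_mul_swap rfl hi.2.1]
    exact fun q hq => Finset.mem_erase.2
      ⟨fun he => pair_notMem_inversions_meetPerm hi (he ▸ hq), inversions_meetPerm_subset hq⟩
  · refine inversions_subset_inversions_meetPerm hwx fun i hi hmem => ?_
    have hsub := hwT _ hi.2.2
    rw [inversions_mul_swap rfl hi.2.1] at hsub
    exact (Finset.mem_erase.1 (hsub hmem)).1 rfl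

end Meet

section Chain

variable {n : ℕ}

lemma meetOf_weakLe_empty (x : Perm (Fin n)) : Ungarian.meetOf weakLe x ∅ = x :=
  Ungarian.meetOf_empty (fun _ => .refl) (fun _ _ => weakLe_antisymm) x

lemma card_inversions_meetOf_lt {x : Perm (Fin n)} {T : Finset (Perm (Fin n))}
    (hT : T ⊆ Ungarian.covFinset weakLe x) (hne : T.Nonempty) :
    (inversions (Ungarian.meetOf weakLe x T)).card < (inversions x).card := by
  obtain ⟨τ, hτ⟩ := hne
  have hle := (Ungarian.isMeetOf_meetOf ⟨_, isMeetOf_meetPerm hT⟩).1 τ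
    (Set.mem_insert_of_mem _ hτ)
  exact (Finset.card_le_card (inversions_subset_of_weakLe hle)).trans_lt
    (Finset.card_lt_card (inversions_ssubset_of_wCov (mem_covFinset_weakLe.1 (hT hτ))))

/-- Zero at the absorbing state, so that the drift inequality holds everywhere. -/
def inversionPotential (x : Perm (Fin n)) : ℝ≥0∞ :=
  if x = 1 then 0 else 2 ^ (inversions x).card

lemma sum_stepProb_mul_inversionPotential_le {p : ℝ} (hp0 : 0 ≤ p) (hp1 : p ≤ 1)
    (x : Perm (Fin n)) :
    ∑ y, Ungarian.stepProb p weakLe x y * inversionPotential y ≤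
      ENNReal.ofReal (1 - p / 2) * inversionPotential x := by
  by_cases hx : x = 1
  · subst hx
    rw [Ungarian.sum_stepProb_mul_s10, covFinset_weakLe_one]
    simp [meetOf_weakLe_empty, inversionPotential]
  obtain ⟨i, h, hd⟩ := exists_descent_of_ne_one hx
  calc ∑ y, Ungarian.stepProb p weakLe x y * inversionPotential y
      ≤ ∑ y, Ungarian.stepProb p weakLe x y * 2 ^ (inversions y).card := by
        gcongr with y
        unfold inversionPotential
        split_ifs <;> simp
    _ ≤ ENNReal.ofReal (1 - p / 2) * 2 ^ (inversions x).card :=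
        Ungarian.sum_stepProb_mul_two_pow_le hp0 hp1 (fun y => (inversions y).card)
          (meetOf_weakLe_empty x) ⟨_, mem_covFinset_weakLe.2 ⟨i, h, hd, rfl⟩⟩
          fun _ hT hne => card_inversions_meetOf_lt hT hne
    _ = ENNReal.ofReal (1 - p / 2) * inversionPotential x := by
        rw [inversionPotential, if_neg hx]

lemma one_le_inversionPotential {x : Perm (Fin n)} (hx : x ≠ 1) : 1 ≤ inversionPotential x := by
  rw [inversionPotential, if_neg hx]
  exact one_le_pow₀ one_le_two

lemma one_le_card_inversions {x : Perm (Fin n)} (hx : x ≠ 1) : 1 ≤ (inversions x).card := by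
  obtain ⟨i, h, hd⟩ := exists_descent_of_ne_one hx
  exact Finset.card_pos.2 ⟨_, pair_mem_inversions (by simp [Fin.lt_def]) hd⟩

end Chain

lemma two_pow_mul_one_sub_half_pow_le_exp {p : ℝ} (hp1 : p ≤ 1) {n I z : ℕ}
    (hI : 1 ≤ I) (hIn : I ≤ n.choose 2) (hz : (n : ℝ) ^ 2 < z * p) :
    (2 : ℝ) ^ I * (1 - p / 2) ^ (z - 1) ≤ Real.exp (-(z * p) / 8) := by
  have hn : (2 : ℝ) ≤ n := by
    have : 2 ≤ n := by
      by_contra! h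
      rw [Nat.choose_eq_zero_of_lt h] at hIn
      omega
    exact_mod_cast this
  have hIR : (I : ℝ) ≤ n * (n - 1) / 2 := by
    rw [← Nat.cast_choose_two]
    exact_mod_cast hIn
  have hz1 : 1 ≤ z := by
    by_contra! h
    simp [Nat.lt_one_iff.1 h] at hz
    nlinarith
  have hlog : Real.log 2 < 0.7 := Real.log_two_lt_d9.trans (by norm_num)
  have hIlog : (I : ℝ) * Real.log 2 ≤ n * (n - 1) / 2 * 0.7 :=
    mul_le_mul hIR hlog.le (Real.log_nonneg one_le_two) (by nlinarith)
  calc (2 : ℝ) ^ I * (1 - p / 2) ^ (z - 1)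
      ≤ Real.exp (I * Real.log 2) * Real.exp (-(p / 2)) ^ (z - 1) := by
        rw [Real.exp_nat_mul, Real.exp_log two_pos]
        gcongr
        · linarith
        · linarith [Real.add_one_le_exp (-(p / 2))]
    _ = Real.exp (I * Real.log 2 - ((z : ℝ) - 1) * (p / 2)) := by
        rw [← Real.exp_nat_mul, ← Real.exp_add, Nat.cast_sub hz1]
        ring_nf
    _ ≤ Real.exp (-(z * p) / 8) := by
        gcongr
        nlinarith

lemma one_sub_half_pow_mul_inversionPotential_le {p : ℝ} (hp1 : p ≤ 1) {n z : ℕ}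
    (σ : Perm (Fin n)) (hz : (n : ℝ) ^ 2 < z * p) :
    ENNReal.ofReal (1 - p / 2) ^ (z - 1) * inversionPotential σ ≤
      ENNReal.ofReal (Real.exp (-(z * p) / 8)) := by
  by_cases hσ : σ = 1
  · simp [inversionPotential, hσ]
  rw [inversionPotential, if_neg hσ, ← ENNReal.ofReal_pow (by linarith),
    ← ENNReal.ofReal_ofNat, ← ENNReal.ofReal_pow zero_le_two,
    ← ENNReal.ofReal_mul (pow_nonneg (by linarith) _), mul_comm]
  exact ENNReal.ofReal_le_ofReal <| two_pow_mul_one_sub_half_pow_le_exp hp1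
    (one_le_card_inversions hσ) (card_inversions_le σ) hz

theorem thm10_general (p : ℝ) (hp0 : 0 < p) (hp1 : p ≤ 1) (n : ℕ)
    (σ : Equiv.Perm (Fin n)) (z : ℕ) (hz : (n : ℝ) ^ 2 / p < z) :
    Ungarian.probIn p (fun a b : Equiv.Perm (Fin n) => weakLe a b) σ (z - 1)
        {τ : Equiv.Perm (Fin n) | τ ≠ 1} ≤
      ENNReal.ofReal (Real.exp (-(z * p) / 8)) :=
  calc Ungarian.probIn p weakLe σ (z - 1) {τ | τ ≠ 1}
      ≤ ∑ τ, Ungarian.walk p weakLe σ (z - 1) τ * inversionPotential τ :=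
        Ungarian.probIn_le_sum_walk_mul (fun _ => one_le_inversionPotential) σ _
    _ ≤ ENNReal.ofReal (1 - p / 2) ^ (z - 1) * inversionPotential σ :=
        Ungarian.sum_walk_mul_le (sum_stepProb_mul_inversionPotential_le hp0.le hp1) σ _
    _ ≤ ENNReal.ofReal (Real.exp (-(z * p) / 8)) :=
        one_sub_half_pow_mul_inversionPotential_le hp1 σ ((div_lt_iff₀ hp0).1 hz)

/-- Since the chain absorbs at the identity, for `z ≥ 1` the probability that the hitting
time of the identity is at least `z` equals the probability that the chain is not at the
identity after `z - 1` steps. -/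
theorem thm10 (p : ℝ) (hp0 : 0 < p) (hp1 : p ≤ 1) (n : ℕ) (hn : 1 ≤ n)
    (σ : Equiv.Perm (Fin n)) (z : ℕ) (hz : (n : ℝ) ^ 2 / p < z) :
    Ungarian.probIn p (fun a b : Equiv.Perm (Fin n) => weakLe a b) σ (z - 1)
        {τ : Equiv.Perm (Fin n) | τ ≠ 1} ≤
      ENNReal.ofReal (Real.exp (-(z * p) / 8)) :=
  thm10_general p hp0 hp1 n σ z hz
end
end

section
/- Let σ ∈ Av_n(312), let i be a descent of σ, and let j ∈ [n] be the minimal index such that σ(k) ≥ σ(i) for all k ∈ [j, i]. Let τ = σ∘(i i+1), and let τ₀ be the permutation with τ₀(j) = σ(i+1), τ₀(x) = σ(x−1) for j+1 ≤ x ≤ i+1, and τ₀(x) = σ(x) for all other x (that is, τ₀ = σ∘(i+1 i ⋯ j+1 j)). Then τ₀ is 312-avoiding, τ₀ is obtained from τ by a sequence of allowable swaps, and no allowable swap applies to τ₀; consequently π↓(τ) = τ₀, where π↓(τ) denotes the permutation obtained from τ by repeatedly applying allowable swaps until none can be performed. -/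
/-- A permutation is `312`-avoiding if no three positions realize the pattern `312`. -/
def Av312 {n : ℕ} (σ : Equiv.Perm (Fin n)) : Prop :=
  ¬ ∃ i1 i2 i3 : Fin n, i1 < i2 ∧ i2 < i3 ∧ σ i3 < σ i1 ∧ σ i2 < σ i3

/-- An allowable swap: `τ' = τ ∘ (a a+1)` where there is an index `b > a + 1` with
`τ(a+1) < τ(b) < τ(a)`. -/
def AllowSwap {n : ℕ} (τ τ' : Equiv.Perm (Fin n)) : Prop :=
  ∃ a : ℕ, ∃ h : a + 1 < n,
    (∃ b : ℕ, ∃ hb : b < n, a + 1 < b ∧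
      τ ⟨a + 1, h⟩ < τ ⟨b, hb⟩ ∧ τ ⟨b, hb⟩ < τ ⟨a, Nat.lt_of_succ_lt h⟩) ∧
    τ' = τ * Equiv.swap ⟨a, Nat.lt_of_succ_lt h⟩ ⟨a + 1, h⟩

/-- position map: `τ_k = σ ∘ posv`. -/
def posv (i k x : ℕ) : ℕ :=
  if x = k then i + 1 else if k < x ∧ x ≤ i + 1 then x - 1 else x

lemma posv_lt_n {n i k x : ℕ} (hi : i + 1 < n) (hx : x < n) : posv i k x < n := by
  unfold posv; split_ifs <;> omega

lemma posv_mono {i k x y : ℕ} (hx : x ≠ k) (hy : y ≠ k) (hxy : x < y) :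
    posv i k x < posv i k y := by
  unfold posv; split_ifs <;> omega

/-- values as naturals -/
def sval {n : ℕ} (σ : Equiv.Perm (Fin n)) (m : ℕ) : ℕ :=
  if h : m < n then (σ ⟨m, h⟩ : ℕ) else 0

lemma sval_pos {n : ℕ} (σ : Equiv.Perm (Fin n)) {m : ℕ} (h : m < n) :
    sval σ m = (σ ⟨m, h⟩ : ℕ) := dif_pos h

lemma sval_inj {n : ℕ} (σ : Equiv.Perm (Fin n)) {x y : ℕ} (hx : x < n) (hy : y < n)
    (h : sval σ x = sval σ y) : x = y := by
  rw [sval_pos σ hx, sval_pos σ hy] at h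
  have := σ.injective (Fin.ext h)
  exact congrArg Fin.val this

lemma av312_nat {n : ℕ} {σ : Equiv.Perm (Fin n)} (hσ : Av312 σ) {a b c : ℕ}
    (hab : a < b) (hbc : b < c) (hc : c < n)
    (h1 : sval σ c < sval σ a) (h2 : sval σ b < sval σ c) : False := by
  rw [sval_pos σ hc, sval_pos σ (by omega : a < n)] at h1
  rw [sval_pos σ (by omega : b < n), sval_pos σ hc] at h2
  exact hσ ⟨⟨a, by omega⟩, ⟨b, by omega⟩, ⟨c, hc⟩, Fin.mk_lt_mk.mpr hab,
    Fin.mk_lt_mk.mpr hbc, Fin.lt_def.mpr h1, Fin.lt_def.mpr h2⟩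

/-- applying the swap at `(k-1, k)` to `τ_k` gives `τ_{k-1}` -/
lemma pk_swap {n : ℕ} {σ ρ : Equiv.Perm (Fin n)} {i k : ℕ} (hi : i + 1 < n)
    (hk0 : 0 < k) (hki : k ≤ i + 1) (hkn : k < n)
    (hP : ∀ m, m < n → sval ρ m = sval σ (posv i k m)) :
    ∀ m, m < n → sval (ρ * Equiv.swap ⟨k - 1, by omega⟩ ⟨k, hkn⟩) m
      = sval σ (posv i (k - 1) m) := by
  intro m hm
  rw [sval_pos _ hm, Equiv.Perm.mul_apply]
  by_cases e1 : m = k - 1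
  · have hs : Equiv.swap (⟨k - 1, by omega⟩ : Fin n) ⟨k, hkn⟩ ⟨m, hm⟩ = ⟨k, hkn⟩ := by
      rw [show (⟨m, hm⟩ : Fin n) = ⟨k - 1, by omega⟩ from Fin.ext e1]
      exact Equiv.swap_apply_left _ _
    rw [hs, ← sval_pos ρ hkn, hP k hkn]
    congr 1
    unfold posv; split_ifs <;> omega
  · by_cases e2 : m = k
    · have hs : Equiv.swap (⟨k - 1, by omega⟩ : Fin n) ⟨k, hkn⟩ ⟨m, hm⟩ = ⟨k - 1, by omega⟩ := by
        rw [show (⟨m, hm⟩ : Fin n) = ⟨k, hkn⟩ from Fin.ext e2]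
        exact Equiv.swap_apply_right _ _
      rw [hs, ← sval_pos ρ (by omega : k - 1 < n), hP (k - 1) (by omega)]
      congr 1
      unfold posv; split_ifs <;> omega
    · have hs : Equiv.swap (⟨k - 1, by omega⟩ : Fin n) ⟨k, hkn⟩ ⟨m, hm⟩ = ⟨m, hm⟩ :=
        Equiv.swap_apply_of_ne_of_ne (fun h => e1 (congrArg Fin.val h))
          (fun h => e2 (congrArg Fin.val h))
      rw [hs, ← sval_pos ρ hm, hP m hm]
      congr 1
      unfold posv; split_ifs <;> omega

/-- for `j < k ≤ i`, the swap at `(k-1, k)` is allowable on `τ_k` -/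
lemma pk_exists {n : ℕ} {σ ρ : Equiv.Perm (Fin n)} {i j k : ℕ} (hi : i + 1 < n)
    (hjall : ∀ m, j ≤ m → m ≤ i → sval σ i ≤ sval σ m)
    (hdesc : sval σ (i + 1) < sval σ i)
    (hjk : j < k) (hki : k ≤ i)
    (hP : ∀ m, m < n → sval ρ m = sval σ (posv i k m)) :
    AllowSwap ρ (ρ * Equiv.swap ⟨k - 1, by omega⟩ ⟨k, by omega⟩) := by
  have hkn : k < n := by omega
  have hv1 : sval ρ k = sval σ (i + 1) := by
    rw [hP k hkn]; congr 1; unfold posv; split_ifs <;> omega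
  have hv2 : sval ρ (i + 1) = sval σ i := by
    rw [hP (i + 1) hi]; congr 1; unfold posv; split_ifs <;> omega
  have hv3 : sval ρ (k - 1) = sval σ (k - 1) := by
    rw [hP (k - 1) (by omega)]; congr 1; unfold posv; split_ifs <;> omega
  have hlt : sval σ i < sval σ (k - 1) := by
    have h1 := hjall (k - 1) (by omega) (by omega)
    have h2 : sval σ i ≠ sval σ (k - 1) := fun h =>
      absurd (sval_inj σ (by omega) (by omega) h) (by omega)
    omega
  refine ⟨k - 1, by omega, ⟨i + 1, hi, by omega, ?_, ?_⟩, ?_⟩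
  · rw [Fin.lt_def]
    rw [show (⟨k - 1 + 1, by omega⟩ : Fin n) = ⟨k, hkn⟩ from Fin.ext (show k - 1 + 1 = k by omega)]
    rw [← sval_pos ρ hkn, ← sval_pos ρ hi, hv1, hv2]
    exact hdesc
  · rw [Fin.lt_def, ← sval_pos ρ hi, ← sval_pos ρ (by omega : k - 1 < n), hv2, hv3]
    exact hlt
  · rw [show (⟨k - 1 + 1, by omega⟩ : Fin n) = ⟨k, by omega⟩ from Fin.ext (show k - 1 + 1 = k by omega)]

/-- any allowable swap on `τ_k` must be the one at `(k-1,k)`, and requires `j < k` -/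
lemma pk_step {n : ℕ} {σ : Equiv.Perm (Fin n)} (hσ : Av312 σ)
    {i j : ℕ} (hi : i + 1 < n) (hji : j ≤ i)
    (hjall : ∀ m, j ≤ m → m ≤ i → sval σ i ≤ sval σ m)
    (hj1 : 0 < j → sval σ (j - 1) < sval σ i)
    (hdesc : sval σ (i + 1) < sval σ i)
    {k : ℕ} (hjk : j ≤ k) (hki : k ≤ i)
    {ρ ρ' : Equiv.Perm (Fin n)}
    (hP : ∀ m, m < n → sval ρ m = sval σ (posv i k m))
    (hs : AllowSwap ρ ρ') :
    j < k ∧ ρ' = ρ * Equiv.swap ⟨k - 1, by omega⟩ ⟨k, by omega⟩ := by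
  obtain ⟨a, ha, ⟨b, hb, hab, h1, h2⟩, heq⟩ := hs
  rw [Fin.lt_def] at h1 h2
  have e1 : sval σ (posv i k (a + 1)) < sval σ (posv i k b) := by
    rw [← hP _ ha, ← hP _ hb, sval_pos ρ ha, sval_pos ρ hb]; exact h1
  have e2 : sval σ (posv i k b) < sval σ (posv i k a) := by
    rw [← hP _ hb, ← hP _ (by omega : a < n), sval_pos ρ hb,
      sval_pos ρ (by omega : a < n)]; exact h2
  by_cases hak : a = k
  · exfalso
    subst hak
    rw [show posv i a (a + 1) = a from by unfold posv; split_ifs <;> omega] at e1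
    rw [show posv i a a = i + 1 from by unfold posv; split_ifs <;> omega] at e2
    have := hjall a hjk hki
    omega
  · by_cases hak1 : a + 1 = k
    · -- the allowed case: a = k - 1; must show j < k
      have hjltk : j < k := by
        by_contra hc
        have hkj : k = j := by omega
        subst hkj
        rw [show posv i k (a + 1) = i + 1 from by unfold posv; split_ifs <;> omega] at e1
        rw [show posv i k a = a from by unfold posv; split_ifs <;> omega] at e2
        have hq := hj1 (by omega)
        rw [show k - 1 = a by omega] at hq
        by_cases hb2 : b ≤ i + 1
        · rw [show posv i k b = b - 1 from by unfold posv; split_ifs <;> omega] at e1 e2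
          have := hjall (b - 1) (by omega) (by omega)
          omega
        · rw [show posv i k b = b from by unfold posv; split_ifs <;> omega] at e1 e2
          exact av312_nat hσ (show a < i + 1 by omega) (show i + 1 < b by omega) hb e2 e1
      refine ⟨hjltk, ?_⟩
      rw [heq,
        show (⟨a, Nat.lt_of_succ_lt ha⟩ : Fin n) = ⟨k - 1, by omega⟩ from
          Fin.ext (show a = k - 1 by omega),
        show (⟨a + 1, ha⟩ : Fin n) = ⟨k, by omega⟩ from Fin.ext (show a + 1 = k by omega)]
    · -- generic case: contradiction with 312-avoidance
      exfalso
      have m1 : posv i k a < posv i k (a + 1) := posv_mono hak hak1 (by omega)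
      have m2 : posv i k (a + 1) < posv i k b := by
        by_cases hbk : b = k
        · rw [hbk, show posv i k k = i + 1 from by unfold posv; split_ifs <;> omega]
          have : posv i k (a + 1) = a + 1 := by unfold posv; split_ifs <;> omega
          omega
        · exact posv_mono hak1 hbk hab
      exact av312_nat hσ m1 m2 (posv_lt_n hi hb) e2 e1

/-- `τ_j` is 312-avoiding -/
lemma pk_av {n : ℕ} {σ τ₀ : Equiv.Perm (Fin n)} (hσ : Av312 σ)
    {i j : ℕ} (hi : i + 1 < n) (hji : j ≤ i)
    (hjall : ∀ m, j ≤ m → m ≤ i → sval σ i ≤ sval σ m)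
    (hj1 : 0 < j → sval σ (j - 1) < sval σ i)
    (hdesc : sval σ (i + 1) < sval σ i)
    (hP : ∀ m, m < n → sval τ₀ m = sval σ (posv i j m)) :
    Av312 τ₀ := by
  rintro ⟨x1, x2, x3, h12, h23, h31, h32⟩
  rw [Fin.lt_def] at h12 h23 h31 h32
  have g1 : sval σ (posv i j (x1 : ℕ)) = (τ₀ x1 : ℕ) := by
    rw [← hP _ x1.isLt, sval_pos τ₀ x1.isLt]
  have g2 : sval σ (posv i j (x2 : ℕ)) = (τ₀ x2 : ℕ) := by
    rw [← hP _ x2.isLt, sval_pos τ₀ x2.isLt]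
  have g3 : sval σ (posv i j (x3 : ℕ)) = (τ₀ x3 : ℕ) := by
    rw [← hP _ x3.isLt, sval_pos τ₀ x3.isLt]
  rw [← g3, ← g1] at h31
  rw [← g2, ← g3] at h32
  by_cases e1 : (x1 : ℕ) = j
  · rw [show posv i j (x1 : ℕ) = i + 1 from by unfold posv; split_ifs <;> omega] at h31
    by_cases hc : (x3 : ℕ) ≤ i + 1
    · rw [show posv i j (x3 : ℕ) = (x3 : ℕ) - 1 from by
        unfold posv; split_ifs <;> omega] at h31 h32
      have := hjall ((x3 : ℕ) - 1) (by omega) (by omega)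
      omega
    · rw [show posv i j (x3 : ℕ) = (x3 : ℕ) from by
        unfold posv; split_ifs <;> omega] at h31 h32
      by_cases hc2 : (x2 : ℕ) ≤ i + 1
      · rw [show posv i j (x2 : ℕ) = (x2 : ℕ) - 1 from by
          unfold posv; split_ifs <;> omega] at h32
        have := hjall ((x2 : ℕ) - 1) (by omega) (by omega)
        omega
      · rw [show posv i j (x2 : ℕ) = (x2 : ℕ) from by
          unfold posv; split_ifs <;> omega] at h32
        exact av312_nat hσ (show i + 1 < (x2 : ℕ) by omega) h23 x3.isLt h31 h32
  · by_cases e2 : (x2 : ℕ) = j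
    · have hj0 : 0 < j := by omega
      have hq := hj1 hj0
      rw [show posv i j (x1 : ℕ) = (x1 : ℕ) from by
        unfold posv; split_ifs <;> omega] at h31
      rw [show posv i j (x2 : ℕ) = i + 1 from by unfold posv; split_ifs <;> omega] at h32
      by_cases hc : (x3 : ℕ) ≤ i + 1
      · rw [show posv i j (x3 : ℕ) = (x3 : ℕ) - 1 from by
          unfold posv; split_ifs <;> omega] at h31 h32
        have hge := hjall ((x3 : ℕ) - 1) (by omega) (by omega)
        by_cases ha : (x1 : ℕ) = j - 1
        · rw [ha] at h31; omega
        · exact av312_nat hσ (show (x1 : ℕ) < j - 1 by omega)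
            (show j - 1 < (x3 : ℕ) - 1 by omega) (by omega) h31 (by omega)
      · rw [show posv i j (x3 : ℕ) = (x3 : ℕ) from by
          unfold posv; split_ifs <;> omega] at h31 h32
        exact av312_nat hσ (show (x1 : ℕ) < i + 1 by omega)
          (show i + 1 < (x3 : ℕ) by omega) x3.isLt h31 h32
    · by_cases e3 : (x3 : ℕ) = j
      · rw [show posv i j (x1 : ℕ) = (x1 : ℕ) from by
          unfold posv; split_ifs <;> omega] at h31
        rw [show posv i j (x2 : ℕ) = (x2 : ℕ) from by
          unfold posv; split_ifs <;> omega] at h32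
        rw [show posv i j (x3 : ℕ) = i + 1 from by
          unfold posv; split_ifs <;> omega] at h31 h32
        exact av312_nat hσ h12 (show (x2 : ℕ) < i + 1 by omega) hi h31 h32
      · exact av312_nat hσ (posv_mono e1 e2 h12) (posv_mono e2 e3 h23)
          (posv_lt_n hi x3.isLt) h31 h32

/-- Let `σ` be `312`-avoiding with descent `i`, let `j` be minimal with `σ(k) ≥ σ(i)` for all
`k ∈ [j, i]`, let `τ = σ ∘ (i i+1)`, and let `τ₀ = σ ∘ (i+1 i ⋯ j+1 j)` (given pointwise).
Then `τ₀` is `312`-avoiding, `τ₀` is obtained from `τ` by a sequence of allowable swaps, no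
allowable swap applies to `τ₀`, and every permutation obtained from `τ` by allowable swaps
to which no further allowable swap applies equals `τ₀`; that is, `π↓(τ) = τ₀`. -/
theorem thm12 (n : ℕ) (σ : Equiv.Perm (Fin n)) (hσ : Av312 σ)
    (i : ℕ) (hi : i + 1 < n)
    (hdesc : σ ⟨i + 1, hi⟩ < σ ⟨i, Nat.lt_of_succ_lt hi⟩)
    (j : ℕ) (hji : j ≤ i)
    (hjall : ∀ k, j ≤ k → ∀ hk : k ≤ i,
      σ ⟨i, Nat.lt_of_succ_lt hi⟩ ≤ σ ⟨k, by omega⟩)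
    (hjmin : ∀ j', (∀ k, j' ≤ k → ∀ hk : k ≤ i,
      σ ⟨i, Nat.lt_of_succ_lt hi⟩ ≤ σ ⟨k, by omega⟩) → j ≤ j')
    (τ τ₀ : Equiv.Perm (Fin n))
    (hτ : τ = σ * Equiv.swap ⟨i, Nat.lt_of_succ_lt hi⟩ ⟨i + 1, hi⟩)
    (hτ₀j : τ₀ ⟨j, by omega⟩ = σ ⟨i + 1, hi⟩)
    (hτ₀mid : ∀ x, j + 1 ≤ x → ∀ hx : x ≤ i + 1,
      τ₀ ⟨x, by omega⟩ = σ ⟨x - 1, by omega⟩)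
    (hτ₀out : ∀ x : Fin n, (x : ℕ) < j ∨ i + 1 < (x : ℕ) → τ₀ x = σ x) :
    Av312 τ₀ ∧
    Relation.ReflTransGen (fun a b => AllowSwap a b) τ τ₀ ∧
    (¬ ∃ ρ, AllowSwap τ₀ ρ) ∧
    (∀ ρ : Equiv.Perm (Fin n), Relation.ReflTransGen (fun a b => AllowSwap a b) τ ρ →
      (¬ ∃ ρ', AllowSwap ρ ρ') → ρ = τ₀) := by
    -- nat-level versions of the hypotheses
  have hdesc' : sval σ (i + 1) < sval σ i := by
    rw [sval_pos σ hi, sval_pos σ (show i < n by omega)]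
    exact Fin.lt_def.mp hdesc
  have hjall' : ∀ m, j ≤ m → m ≤ i → sval σ i ≤ sval σ m := fun m h1 h2 => by
    rw [sval_pos σ (show i < n by omega), sval_pos σ (show m < n by omega)]
    exact Fin.le_def.mp (hjall m h1 h2)
  have hj1' : 0 < j → sval σ (j - 1) < sval σ i := by
    intro hj0
    by_contra hcon
    push_neg at hcon
    have hmin : j ≤ j - 1 := by
      apply hjmin (j - 1)
      intro m hm hmi
      by_cases hm2 : j ≤ m
      · exact hjall m hm2 hmi
      · have hmj : m = j - 1 := by omega
        rw [Fin.le_def]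
        have : sval σ i ≤ sval σ m := by rw [hmj]; exact hcon
        rw [sval_pos σ (show i < n by omega), sval_pos σ (show m < n by omega)] at this
        exact this
    omega
  -- τ is τ_i
  have hPτ : ∀ m, m < n → sval τ m = sval σ (posv i i m) := by
    rw [hτ]
    exact pk_swap (k := i + 1) hi (by omega) (by omega) hi
      (fun m hm => by congr 1; unfold posv; split_ifs <;> omega)
  -- τ₀ is τ_j
  have hPτ₀ : ∀ m, m < n → sval τ₀ m = sval σ (posv i j m) := by
    intro m hm
    by_cases e1 : m = j
    · rw [sval_pos _ hm, show (⟨m, hm⟩ : Fin n) = ⟨j, by omega⟩ from Fin.ext e1, hτ₀j,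
        ← sval_pos σ hi]
      congr 1
      unfold posv; split_ifs <;> omega
    · by_cases e2 : j + 1 ≤ m ∧ m ≤ i + 1
      · rw [sval_pos _ hm, hτ₀mid m e2.1 e2.2, ← sval_pos σ (show m - 1 < n by omega)]
        congr 1
        unfold posv; split_ifs <;> omega
      · rw [sval_pos _ hm, hτ₀out ⟨m, hm⟩ (show m < j ∨ i + 1 < m by omega),
          ← sval_pos σ hm]
        congr 1
        unfold posv; split_ifs <;> omega
  -- two permutations satisfying the same profile are equal
  have huniq : ∀ (ρ1 ρ2 : Equiv.Perm (Fin n)) (k : ℕ),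
      (∀ m, m < n → sval ρ1 m = sval σ (posv i k m)) →
      (∀ m, m < n → sval ρ2 m = sval σ (posv i k m)) → ρ1 = ρ2 := by
    intro ρ1 ρ2 k hP1 hP2
    apply Equiv.ext
    intro x
    have h : sval ρ1 (x : ℕ) = sval ρ2 (x : ℕ) := by
      rw [hP1 _ x.isLt, hP2 _ x.isLt]
    rw [sval_pos _ x.isLt, sval_pos _ x.isLt] at h
    exact Fin.ext h
  -- the reachability invariant
  have hinv : ∀ ρ, Relation.ReflTransGen (fun a b => AllowSwap a b) τ ρ →
      ∃ k, j ≤ k ∧ k ≤ i ∧ ∀ m, m < n → sval ρ m = sval σ (posv i k m) := by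
    intro ρ hρ
    induction hρ with
    | refl => exact ⟨i, hji, le_refl i, hPτ⟩
    | tail hsub hstep ih =>
      obtain ⟨k, hk1, hk2, hPk⟩ := ih
      obtain ⟨hlt, heq⟩ := pk_step hσ hi hji hjall' hj1' hdesc' hk1 hk2 hPk hstep
      refine ⟨k - 1, by omega, by omega, ?_⟩
      rw [heq]
      exact pk_swap hi (by omega) (by omega) (by omega) hPk
  -- the descending chain from τ to τ₀
  have hchain : ∀ d (ρ : Equiv.Perm (Fin n)), j + d ≤ i →
      (∀ m, m < n → sval ρ m = sval σ (posv i (j + d) m)) →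
      Relation.ReflTransGen (fun a b => AllowSwap a b) ρ τ₀ := by
    intro d
    induction d with
    | zero =>
      intro ρ _ hP
      have : ρ = τ₀ := huniq ρ τ₀ j hP hPτ₀
      rw [this]
    | succ d ih =>
      intro ρ hd hP
      have hsw := pk_exists hi hjall' hdesc' (show j < j + d + 1 by omega)
        (show j + d + 1 ≤ i by omega) hP
      have hP' := pk_swap hi (show 0 < j + d + 1 by omega) (by omega) (by omega) hP
      exact Relation.ReflTransGen.head hsw (ih _ (by omega) hP')
  refine ⟨pk_av hσ hi hji hjall' hj1' hdesc' hPτ₀, ?_, ?_, ?_⟩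
  · have h := hchain (i - j) τ (by omega)
    rw [show j + (i - j) = i by omega] at h
    exact h hPτ
  · rintro ⟨ρ, hρ⟩
    obtain ⟨hlt, -⟩ := pk_step hσ hi hji hjall' hj1' hdesc' (le_refl j) hji hPτ₀ hρ
    omega
  · intro ρ hreach hno
    obtain ⟨k, hk1, hk2, hPk⟩ := hinv ρ hreach
    by_cases hjk : j < k
    · exact absurd ⟨_, pk_exists hi hjall' hdesc' hjk hk2 hPk⟩ hno
    · have : k = j := by omega
      rw [this] at hPk
      exact huniq ρ τ₀ j hPk hPτ₀
end
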